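/- arXiv:2211.01326 — 3 statements merged into one kernel-verified Lean document; each statement's English description precedes it below -/
import Mathlib

section
/- Let A and B be unital complex *-algebras with A prime and having a nontrivial projection, and α₁,...,α₆ ∈ ℂ with ∑αₖ ≠ 0. Let Φ : A → B be a bijection preserving the sum of triple products α₁ab*c + α₂acb* + α₃b*ac + α₄cab* + α₅b*ca + α₆cb*a such that Φ(1_A) is a projection. If β := α₁+α₂+α₃−α₄−α₅−α₆ ≠ 0 and Φ(β·a) = β·Φ(a) for all a ∈ A, then Φ is a *-ring isomorphism: additive, multiplicative (Φ(ab) = Φ(a)Φ(b)), and Φ(a*) = Φ(a)*. -/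
open Function

def starTripleSum {R : Type*} [NonUnitalRing R] [Module ℂ R] [StarRing R]
    (α1 α2 α3 α4 α5 α6 : ℂ) (a b c : R) : R :=
  α1 • (a * star b * c) + α2 • (a * c * star b) + α3 • (star b * a * c) +
  α4 • (c * a * star b) + α5 • (star b * c * a) + α6 • (c * star b * a)

set_option maxHeartbeats 3000000 in
private
lemma addAux {A B : Type*} [Ring A] [Algebra ℂ A] [Ring B] [Algebra ℂ B]
    (l m2 : ℂ) (hs : l + m2 ≠ 0) (hb : l - m2 ≠ 0)
    (e f : A) (hee : e*e = e) (hef : e*f = 0) (hfe : f*e = 0) (hff : f*f = f)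
    (h1ef : e + f = 1) (he0 : e ≠ 0) (hf0 : f ≠ 0)
    (hprime : ∀ x y : A, (∀ t : A, x * t * y = 0) → x = 0 ∨ y = 0)
    (Φ : A → B) (hinj : Function.Injective Φ) (hsurj : Function.Surjective Φ)
    (hΦ0 : Φ 0 = 0)
    (hP : ∀ a c : A, Φ (l•(a*c) + m2•(c*a)) = l•(Φ a * Φ c) + m2•(Φ c * Φ a)) :
    ∀ a b : A, Φ (a + b) = Φ a + Φ b := by
  -- scalar cancellation
  have szA : ∀ (c : ℂ) (x : A), c ≠ 0 → c • x = 0 → x = 0 := by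
    intro c x hc h
    rw [← inv_smul_smul₀ hc x, h, smul_zero]
  have hlm : l*l - m2*m2 ≠ 0 := by
    have : l*l - m2*m2 = (l+m2)*(l-m2) := by ring
    rw [this]; exact mul_ne_zero hs hb
  have cancel2 : ∀ X Y : A, l•X + m2•Y = 0 → l•Y + m2•X = 0 → X = 0 := by
    intro X Y h1 h2
    refine szA _ _ hlm ?_
    linear_combination (norm := module) l • h1 - m2 • h2
  -- prime helpers
  have prL : ∀ x y : A, (∀ t, x*t*y = 0) → x ≠ 0 → y = 0 := fun x y h hx =>
    (hprime x y h).resolve_left hx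
  have prR : ∀ x y : A, (∀ t, x*t*y = 0) → y ≠ 0 → x = 0 := fun x y h hy =>
    (hprime x y h).resolve_right hy
  -- transfer lemmas
  have trL : ∀ d u v : A, Φ d = Φ u + Φ v → ∀ z,
      Φ (l•(z*d) + m2•(d*z)) = Φ (l•(z*u) + m2•(u*z)) + Φ (l•(z*v) + m2•(v*z)) := by
    intro d u v hd z
    rw [hP z d, hP z u, hP z v, hd]
    simp only [mul_add, add_mul, smul_add]; abel
  have trR : ∀ d u v : A, Φ d = Φ u + Φ v → ∀ z,
      Φ (l•(d*z) + m2•(z*d)) = Φ (l•(u*z) + m2•(z*u)) + Φ (l•(v*z) + m2•(z*v)) := by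
    intro d u v hd z
    rw [hP d z, hP u z, hP v z, hd]
    simp only [mul_add, add_mul, smul_add]; abel
  have trL3 : ∀ d u v w : A, Φ d = Φ u + Φ v + Φ w → ∀ z,
      Φ (l•(z*d) + m2•(d*z)) = Φ (l•(z*u) + m2•(u*z)) + Φ (l•(z*v) + m2•(v*z)) + Φ (l•(z*w) + m2•(w*z)) := by
    intro d u v w hd z
    rw [hP z d, hP z u, hP z v, hP z w, hd]
    simp only [mul_add, add_mul, smul_add]; abel
  have trR3 : ∀ d u v w : A, Φ d = Φ u + Φ v + Φ w → ∀ z,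
      Φ (l•(d*z) + m2•(z*d)) = Φ (l•(u*z) + m2•(z*u)) + Φ (l•(v*z) + m2•(z*v)) + Φ (l•(w*z) + m2•(z*w)) := by
    intro d u v w hd z
    rw [hP d z, hP u z, hP v z, hP w z, hd]
    simp only [mul_add, add_mul, smul_add]; abel
  have trL4 : ∀ d u v w x : A, Φ d = Φ u + Φ v + Φ w + Φ x → ∀ z,
      Φ (l•(z*d) + m2•(d*z)) = Φ (l•(z*u) + m2•(u*z)) + Φ (l•(z*v) + m2•(v*z)) + Φ (l•(z*w) + m2•(w*z)) + Φ (l•(z*x) + m2•(x*z)) := by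
    intro d u v w x hd z
    rw [hP z d, hP z u, hP z v, hP z w, hP z x, hd]
    simp only [mul_add, add_mul, smul_add]; abel
  have trR4 : ∀ d u v w x : A, Φ d = Φ u + Φ v + Φ w + Φ x → ∀ z,
      Φ (l•(d*z) + m2•(z*d)) = Φ (l•(u*z) + m2•(z*u)) + Φ (l•(v*z) + m2•(z*v)) + Φ (l•(w*z) + m2•(z*w)) + Φ (l•(x*z) + m2•(z*x)) := by
    intro d u v w x hd z
    rw [hP d z, hP u z, hP v z, hP w z, hP x z, hd]
    simp only [mul_add, add_mul, smul_add]; abel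
  -- key: from both Φ-equalities conclude annihilation
  have key : ∀ d w z : A,
      Φ (l•(z*d) + m2•(d*z)) = Φ (l•(z*w) + m2•(w*z)) →
      Φ (l•(d*z) + m2•(z*d)) = Φ (l•(w*z) + m2•(z*w)) →
      z*(d-w) = 0 ∧ (d-w)*z = 0 := by
    intro d w z h1 h2
    have e1 : l•(z*(d-w)) + m2•((d-w)*z) = 0 := by
      calc l•(z*(d-w)) + m2•((d-w)*z)
          = (l•(z*d) + m2•(d*z)) - (l•(z*w) + m2•(w*z)) := by
            rw [mul_sub, sub_mul, smul_sub, smul_sub, sub_add_sub_comm]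
        _ = 0 := by rw [hinj h1, sub_self]
    have e2 : l•((d-w)*z) + m2•(z*(d-w)) = 0 := by
      calc l•((d-w)*z) + m2•(z*(d-w))
          = (l•(d*z) + m2•(z*d)) - (l•(w*z) + m2•(z*w)) := by
            rw [mul_sub, sub_mul, smul_sub, smul_sub, sub_add_sub_comm]
        _ = 0 := by rw [hinj h2, sub_self]
    exact ⟨cancel2 _ _ e1 e2, cancel2 _ _ e2 e1⟩
  -- killstep: z kills v (the second summand)
  have killstep : ∀ d u v z : A, Φ d = Φ u + Φ v → z*v = 0 → v*z = 0 →
      z*(d - (u+v)) = 0 ∧ (d - (u+v))*z = 0 := by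
    intro d u v z hd h1 h2
    apply key
    · rw [trL d u v hd z,
        show l•(z*v) + m2•(v*z) = 0 by rw [h1, h2, smul_zero, smul_zero, add_zero],
        hΦ0, add_zero]
      congr 1
      rw [mul_add, add_mul, h1, h2, add_zero, add_zero]
    · rw [trR d u v hd z,
        show l•(v*z) + m2•(z*v) = 0 by rw [h1, h2, smul_zero, smul_zero, add_zero],
        hΦ0, add_zero]
      congr 1
      rw [mul_add, add_mul, h1, h2, add_zero, add_zero]
  -- killstep': z kills u (the first summand)
  have killstep' : ∀ d u v z : A, Φ d = Φ u + Φ v → z*u = 0 → u*z = 0 →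
      z*(d - (u+v)) = 0 ∧ (d - (u+v))*z = 0 := by
    intro d u v z hd h1 h2
    apply key
    · rw [trL d u v hd z,
        show l•(z*u) + m2•(u*z) = 0 by rw [h1, h2, smul_zero, smul_zero, add_zero],
        hΦ0, zero_add]
      congr 1
      rw [mul_add, add_mul, h1, h2, zero_add, zero_add]
    · rw [trR d u v hd z,
        show l•(u*z) + m2•(z*u) = 0 by rw [h1, h2, smul_zero, smul_zero, add_zero],
        hΦ0, zero_add]
      congr 1
      rw [mul_add, add_mul, h1, h2, zero_add, zero_add]
  -- component fact packs
  have mk12 : ∀ u : A, e*u*f = u →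
      (e*u = u) ∧ (u*f = u) ∧ (f*u = 0) ∧ (u*e = 0) := by
    intro u hu
    refine ⟨?_, ?_, ?_, ?_⟩
    · conv_lhs => rw [← hu]
      rw [← mul_assoc, ← mul_assoc, hee, hu]
    · conv_lhs => rw [← hu]
      rw [mul_assoc, hff, hu]
    · conv_lhs => rw [← hu]
      rw [← mul_assoc, ← mul_assoc, hfe, zero_mul, zero_mul]
    · conv_lhs => rw [← hu]
      rw [mul_assoc, hfe, mul_zero]
  have mk21 : ∀ u : A, f*u*e = u →
      (f*u = u) ∧ (u*e = u) ∧ (e*u = 0) ∧ (u*f = 0) := by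
    intro u hu
    refine ⟨?_, ?_, ?_, ?_⟩
    · conv_lhs => rw [← hu]
      rw [← mul_assoc, ← mul_assoc, hff, hu]
    · conv_lhs => rw [← hu]
      rw [mul_assoc, hee, hu]
    · conv_lhs => rw [← hu]
      rw [← mul_assoc, ← mul_assoc, hef, zero_mul, zero_mul]
    · conv_lhs => rw [← hu]
      rw [mul_assoc, hef, mul_zero]
  have mk11 : ∀ u : A, e*u*e = u →
      (e*u = u) ∧ (u*e = u) ∧ (f*u = 0) ∧ (u*f = 0) := by
    intro u hu
    refine ⟨?_, ?_, ?_, ?_⟩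
    · conv_lhs => rw [← hu]
      rw [← mul_assoc, ← mul_assoc, hee, hu]
    · conv_lhs => rw [← hu]
      rw [mul_assoc, hee, hu]
    · conv_lhs => rw [← hu]
      rw [← mul_assoc, ← mul_assoc, hfe, zero_mul, zero_mul]
    · conv_lhs => rw [← hu]
      rw [mul_assoc, hef, mul_zero]
  have mk22 : ∀ u : A, f*u*f = u →
      (f*u = u) ∧ (u*f = u) ∧ (e*u = 0) ∧ (u*e = 0) := by
    intro u hu
    refine ⟨?_, ?_, ?_, ?_⟩
    · conv_lhs => rw [← hu]
      rw [← mul_assoc, ← mul_assoc, hff, hu]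
    · conv_lhs => rw [← hu]
      rw [mul_assoc, hff, hu]
    · conv_lhs => rw [← hu]
      rw [← mul_assoc, ← mul_assoc, hef, zero_mul, zero_mul]
    · conv_lhs => rw [← hu]
      rw [mul_assoc, hfe, mul_zero]
  -- finishing: left annihilation by e and f gives zero
  have finL : ∀ g : A, e*g = 0 → f*g = 0 → g = 0 := by
    intro g h1 h2
    calc g = 1*g := (one_mul g).symm
      _ = (e+f)*g := by rw [h1ef]
      _ = 0 := by rw [add_mul, h1, h2, add_zero]
  have finR : ∀ g : A, g*e = 0 → g*f = 0 → g = 0 := by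
    intro g h1 h2
    calc g = g*1 := (mul_one g).symm
      _ = g*(e+f) := by rw [h1ef]
      _ = 0 := by rw [mul_add, h1, h2, add_zero]
  ------------------------------------------------------------------
  -- P1 : additivity on pairs (A12, A21)
  have P1 : ∀ u v : A, e*u*f = u → f*v*e = v → Φ (u + v) = Φ u + Φ v := by
    intro u v hu hv
    obtain ⟨hu1, hu2, hu3, hu4⟩ := mk12 u hu
    obtain ⟨hv1, hv2, hv3, hv4⟩ := mk21 v hv
    obtain ⟨d, hd⟩ := hsurj (Φ u + Φ v)
    have hZ := fun t => killstep' d u v (e*t*f) hd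
      (by rw [mul_assoc, hu3, mul_zero])
      (by rw [← mul_assoc, ← mul_assoc, hu4, zero_mul, zero_mul])
    have hW := fun t => killstep d u v (f*t*e) hd
      (by rw [mul_assoc, hv3, mul_zero])
      (by rw [← mul_assoc, ← mul_assoc, hv4, zero_mul, zero_mul])
    have hfg : f*(d - (u+v)) = 0 :=
      prL e _ (fun t => by have := (hZ t).1; rwa [mul_assoc] at this) he0
    have heg : e*(d - (u+v)) = 0 :=
      prL f _ (fun t => by have := (hW t).1; rwa [mul_assoc] at this) hf0
    have : d = u + v := by
      have h0 := finL _ heg hfg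
      rwa [sub_eq_zero] at h0
    rw [← this, hd]
  -- P2a : (A11, A12)
  have P2a : ∀ u v : A, e*u*e = u → e*v*f = v → Φ (u + v) = Φ u + Φ v := by
    intro u v hu hv
    obtain ⟨hu1, hu2, hu3, hu4⟩ := mk11 u hu
    obtain ⟨hv1, hv2, hv3, hv4⟩ := mk12 v hv
    obtain ⟨d, hd⟩ := hsurj (Φ u + Φ v)
    have hZ := fun t => killstep d u v (e*t*f) hd
      (by rw [mul_assoc, hv3, mul_zero])
      (by rw [← mul_assoc, ← mul_assoc, hv4, zero_mul, zero_mul])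
    have hW2 := fun t => killstep' d u v (f*t*f) hd
      (by rw [mul_assoc, hu3, mul_zero])
      (by rw [← mul_assoc, ← mul_assoc, hu4, zero_mul, zero_mul])
    have hge : (d - (u+v))*e = 0 :=
      prR _ f (fun t => by have := (hZ t).2; rwa [← mul_assoc, ← mul_assoc] at this) hf0
    have hgf : (d - (u+v))*f = 0 :=
      prR _ f (fun t => by have := (hW2 t).2; rwa [← mul_assoc, ← mul_assoc] at this) hf0
    have : d = u + v := by
      have h0 := finR _ hge hgf
      rwa [sub_eq_zero] at h0
    rw [← this, hd]
  -- P2b : (A11, A21)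
  have P2b : ∀ u v : A, e*u*e = u → f*v*e = v → Φ (u + v) = Φ u + Φ v := by
    intro u v hu hv
    obtain ⟨hu1, hu2, hu3, hu4⟩ := mk11 u hu
    obtain ⟨hv1, hv2, hv3, hv4⟩ := mk21 v hv
    obtain ⟨d, hd⟩ := hsurj (Φ u + Φ v)
    have hW := fun t => killstep d u v (f*t*e) hd
      (by rw [mul_assoc, hv3, mul_zero])
      (by rw [← mul_assoc, ← mul_assoc, hv4, zero_mul, zero_mul])
    have hW2 := fun t => killstep' d u v (f*t*f) hd
      (by rw [mul_assoc, hu3, mul_zero])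
      (by rw [← mul_assoc, ← mul_assoc, hu4, zero_mul, zero_mul])
    have heg : e*(d - (u+v)) = 0 :=
      prL f _ (fun t => by have := (hW t).1; rwa [mul_assoc] at this) hf0
    have hfg : f*(d - (u+v)) = 0 :=
      prL f _ (fun t => by have := (hW2 t).1; rwa [mul_assoc] at this) hf0
    have : d = u + v := by
      have h0 := finL _ heg hfg
      rwa [sub_eq_zero] at h0
    rw [← this, hd]
  -- P2c : (A22, A12)
  have P2c : ∀ u v : A, f*u*f = u → e*v*f = v → Φ (u + v) = Φ u + Φ v := by
    intro u v hu hv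
    obtain ⟨hu1, hu2, hu3, hu4⟩ := mk22 u hu
    obtain ⟨hv1, hv2, hv3, hv4⟩ := mk12 v hv
    obtain ⟨d, hd⟩ := hsurj (Φ u + Φ v)
    have hZ := fun t => killstep d u v (e*t*f) hd
      (by rw [mul_assoc, hv3, mul_zero])
      (by rw [← mul_assoc, ← mul_assoc, hv4, zero_mul, zero_mul])
    have hZ11 := fun t => killstep' d u v (e*t*e) hd
      (by rw [mul_assoc, hu3, mul_zero])
      (by rw [← mul_assoc, ← mul_assoc, hu4, zero_mul, zero_mul])
    have hfg : f*(d - (u+v)) = 0 :=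
      prL e _ (fun t => by have := (hZ t).1; rwa [mul_assoc] at this) he0
    have heg : e*(d - (u+v)) = 0 :=
      prL e _ (fun t => by have := (hZ11 t).1; rwa [mul_assoc] at this) he0
    have : d = u + v := by
      have h0 := finL _ heg hfg
      rwa [sub_eq_zero] at h0
    rw [← this, hd]
  -- P2d : (A22, A21)
  have P2d : ∀ u v : A, f*u*f = u → f*v*e = v → Φ (u + v) = Φ u + Φ v := by
    intro u v hu hv
    obtain ⟨hu1, hu2, hu3, hu4⟩ := mk22 u hu
    obtain ⟨hv1, hv2, hv3, hv4⟩ := mk21 v hv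
    obtain ⟨d, hd⟩ := hsurj (Φ u + Φ v)
    have hW := fun t => killstep d u v (f*t*e) hd
      (by rw [mul_assoc, hv3, mul_zero])
      (by rw [← mul_assoc, ← mul_assoc, hv4, zero_mul, zero_mul])
    have hZ11 := fun t => killstep' d u v (e*t*e) hd
      (by rw [mul_assoc, hu3, mul_zero])
      (by rw [← mul_assoc, ← mul_assoc, hu4, zero_mul, zero_mul])
    have hgf : (d - (u+v))*f = 0 :=
      prR _ e (fun t => by have := (hW t).2; rwa [← mul_assoc, ← mul_assoc] at this) he0
    have hge : (d - (u+v))*e = 0 :=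
      prR _ e (fun t => by have := (hZ11 t).2; rwa [← mul_assoc, ← mul_assoc] at this) he0
    have : d = u + v := by
      have h0 := finR _ hge hgf
      rwa [sub_eq_zero] at h0
    rw [← this, hd]
  -- P3 : (A11, A22)
  have P3 : ∀ u v : A, e*u*e = u → f*v*f = v → Φ (u + v) = Φ u + Φ v := by
    intro u v hu hv
    obtain ⟨hu1, hu2, hu3, hu4⟩ := mk11 u hu
    obtain ⟨hv1, hv2, hv3, hv4⟩ := mk22 v hv
    obtain ⟨d, hd⟩ := hsurj (Φ u + Φ v)
    have hZ11 := fun t => killstep d u v (e*t*e) hd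
      (by rw [mul_assoc, hv3, mul_zero])
      (by rw [← mul_assoc, ← mul_assoc, hv4, zero_mul, zero_mul])
    have hW2 := fun t => killstep' d u v (f*t*f) hd
      (by rw [mul_assoc, hu3, mul_zero])
      (by rw [← mul_assoc, ← mul_assoc, hu4, zero_mul, zero_mul])
    have heg : e*(d - (u+v)) = 0 :=
      prL e _ (fun t => by have := (hZ11 t).1; rwa [mul_assoc] at this) he0
    have hfg : f*(d - (u+v)) = 0 :=
      prL f _ (fun t => by have := (hW2 t).1; rwa [mul_assoc] at this) hf0
    have : d = u + v := by
      have h0 := finL _ heg hfg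
      rwa [sub_eq_zero] at h0
    rw [← this, hd]
  -- A12 : additivity within A12
  have A12 : ∀ u v : A, e*u*f = u → e*v*f = v → Φ (u + v) = Φ u + Φ v := by
    have keyL : ∀ y b : A, e*y*f = y → e*b*f = b → Φ (l•b + l•y) = Φ (l•b) + Φ (l•y) := by
      intro y b hy hb
      obtain ⟨y1, y2, y3, y4⟩ := mk12 y hy
      obtain ⟨b1, b2, b3, b4⟩ := mk12 b hb
      have hyb : y*b = 0 := by rw [← b1, ← mul_assoc, y4, zero_mul]
      have hby : b*y = 0 := by rw [← y1, ← mul_assoc, b4, zero_mul]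
      have hey : Φ (e + y) = Φ e + Φ y := P2a e y (by rw [hee, hee]) hy
      have hfb : Φ (f + b) = Φ f + Φ b := P2c f b (by rw [hff, hff]) hb
      have main := hP (e + y) (f + b)
      rw [hey, hfb] at main
      have hA : (e+y)*(f+b) = b + y := by
        rw [add_mul, mul_add, mul_add, hef, b1, y2, hyb, zero_add, add_zero]
      have hB : (f+b)*(e+y) = 0 := by
        rw [add_mul, mul_add, mul_add, hfe, y3, b4, hby]
        simp only [add_zero]
      rw [hA, hB, smul_zero, add_zero] at main
      have hreg : l•((Φ e+Φ y)*(Φ f+Φ b)) + m2•((Φ f+Φ b)*(Φ e+Φ y)) =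
          (l•(Φ e*Φ f) + m2•(Φ f*Φ e)) + ((l•(Φ e*Φ b) + m2•(Φ b*Φ e)) +
            ((l•(Φ y*Φ f) + m2•(Φ f*Φ y)) + (l•(Φ y*Φ b) + m2•(Φ b*Φ y)))) := by
        simp only [mul_add, add_mul, smul_add]; abel
      rw [hreg, ← hP e f, ← hP e b, ← hP y f, ← hP y b,
        show l•(e*f) + m2•(f*e) = 0 by rw [hef, hfe, smul_zero, smul_zero, add_zero],
        show l•(e*b) + m2•(b*e) = l•b by rw [b1, b4, smul_zero, add_zero],
        show l•(y*f) + m2•(f*y) = l•y by rw [y2, y3, smul_zero, add_zero],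
        show l•(y*b) + m2•(b*y) = 0 by rw [hyb, hby, smul_zero, smul_zero, add_zero],
        hΦ0, zero_add, add_zero, smul_add] at main
      exact main
    have keyR : ∀ y b : A, e*y*f = y → e*b*f = b → Φ (m2•b + m2•y) = Φ (m2•b) + Φ (m2•y) := by
      intro y b hy hb
      obtain ⟨y1, y2, y3, y4⟩ := mk12 y hy
      obtain ⟨b1, b2, b3, b4⟩ := mk12 b hb
      have hyb : y*b = 0 := by rw [← b1, ← mul_assoc, y4, zero_mul]
      have hby : b*y = 0 := by rw [← y1, ← mul_assoc, b4, zero_mul]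
      have hey : Φ (e + y) = Φ e + Φ y := P2a e y (by rw [hee, hee]) hy
      have hfb : Φ (f + b) = Φ f + Φ b := P2c f b (by rw [hff, hff]) hb
      have main := hP (f + b) (e + y)
      rw [hey, hfb] at main
      have hA : (e+y)*(f+b) = b + y := by
        rw [add_mul, mul_add, mul_add, hef, b1, y2, hyb, zero_add, add_zero]
      have hB : (f+b)*(e+y) = 0 := by
        rw [add_mul, mul_add, mul_add, hfe, y3, b4, hby]
        simp only [add_zero]
      rw [hA, hB, smul_zero, zero_add] at main
      have hreg : l•((Φ f+Φ b)*(Φ e+Φ y)) + m2•((Φ e+Φ y)*(Φ f+Φ b)) =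
          (l•(Φ f*Φ e) + m2•(Φ e*Φ f)) + ((l•(Φ b*Φ e) + m2•(Φ e*Φ b)) +
            ((l•(Φ f*Φ y) + m2•(Φ y*Φ f)) + (l•(Φ b*Φ y) + m2•(Φ y*Φ b)))) := by
        simp only [mul_add, add_mul, smul_add]; abel
      rw [hreg, ← hP f e, ← hP b e, ← hP f y, ← hP b y,
        show l•(f*e) + m2•(e*f) = 0 by rw [hef, hfe, smul_zero, smul_zero, add_zero],
        show l•(b*e) + m2•(e*b) = m2•b by rw [b1, b4, smul_zero, zero_add],
        show l•(f*y) + m2•(y*f) = m2•y by rw [y2, y3, smul_zero, zero_add],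
        show l•(b*y) + m2•(y*b) = 0 by rw [hyb, hby, smul_zero, smul_zero, add_zero],
        hΦ0, zero_add, add_zero, smul_add] at main
      exact main
    intro u v hu hv
    by_cases hl : l = 0
    · have hm : m2 ≠ 0 := by intro h; exact hs (by rw [hl, h, add_zero])
      have hu' : e*(m2⁻¹•u)*f = m2⁻¹•u := by rw [mul_smul_comm, smul_mul_assoc, hu]
      have hv' : e*(m2⁻¹•v)*f = m2⁻¹•v := by rw [mul_smul_comm, smul_mul_assoc, hv]
      have h := keyR (m2⁻¹•v) (m2⁻¹•u) hv' hu'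
      simpa only [smul_inv_smul₀ hm] using h
    · have hu' : e*(l⁻¹•u)*f = l⁻¹•u := by rw [mul_smul_comm, smul_mul_assoc, hu]
      have hv' : e*(l⁻¹•v)*f = l⁻¹•v := by rw [mul_smul_comm, smul_mul_assoc, hv]
      have h := keyL (l⁻¹•v) (l⁻¹•u) hv' hu'
      simpa only [smul_inv_smul₀ hl] using h
  -- A21 : additivity within A21
  have A21 : ∀ u v : A, f*u*e = u → f*v*e = v → Φ (u + v) = Φ u + Φ v := by
    have keyL : ∀ y b : A, f*y*e = y → f*b*e = b → Φ (l•b + l•y) = Φ (l•b) + Φ (l•y) := by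
      intro y b hy hb
      obtain ⟨y1, y2, y3, y4⟩ := mk21 y hy
      obtain ⟨b1, b2, b3, b4⟩ := mk21 b hb
      have hyb : y*b = 0 := by rw [← b1, ← mul_assoc, y4, zero_mul]
      have hby : b*y = 0 := by rw [← y1, ← mul_assoc, b4, zero_mul]
      have hey : Φ (f + y) = Φ f + Φ y := P2d f y (by rw [hff, hff]) hy
      have hfb : Φ (e + b) = Φ e + Φ b := P2b e b (by rw [hee, hee]) hb
      have main := hP (f + y) (e + b)
      rw [hey, hfb] at main
      have hA : (f+y)*(e+b) = b + y := by
        rw [add_mul, mul_add, mul_add, hfe, b1, y2, hyb, zero_add, add_zero]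
      have hB : (e+b)*(f+y) = 0 := by
        rw [add_mul, mul_add, mul_add, hef, y3, b4, hby]
        simp only [add_zero]
      rw [hA, hB, smul_zero, add_zero] at main
      have hreg : l•((Φ f+Φ y)*(Φ e+Φ b)) + m2•((Φ e+Φ b)*(Φ f+Φ y)) =
          (l•(Φ f*Φ e) + m2•(Φ e*Φ f)) + ((l•(Φ f*Φ b) + m2•(Φ b*Φ f)) +
            ((l•(Φ y*Φ e) + m2•(Φ e*Φ y)) + (l•(Φ y*Φ b) + m2•(Φ b*Φ y)))) := by
        simp only [mul_add, add_mul, smul_add]; abel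
      rw [hreg, ← hP f e, ← hP f b, ← hP y e, ← hP y b,
        show l•(f*e) + m2•(e*f) = 0 by rw [hef, hfe, smul_zero, smul_zero, add_zero],
        show l•(f*b) + m2•(b*f) = l•b by rw [b1, b4, smul_zero, add_zero],
        show l•(y*e) + m2•(e*y) = l•y by rw [y2, y3, smul_zero, add_zero],
        show l•(y*b) + m2•(b*y) = 0 by rw [hyb, hby, smul_zero, smul_zero, add_zero],
        hΦ0, zero_add, add_zero, smul_add] at main
      exact main
    have keyR : ∀ y b : A, f*y*e = y → f*b*e = b → Φ (m2•b + m2•y) = Φ (m2•b) + Φ (m2•y) := by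
      intro y b hy hb
      obtain ⟨y1, y2, y3, y4⟩ := mk21 y hy
      obtain ⟨b1, b2, b3, b4⟩ := mk21 b hb
      have hyb : y*b = 0 := by rw [← b1, ← mul_assoc, y4, zero_mul]
      have hby : b*y = 0 := by rw [← y1, ← mul_assoc, b4, zero_mul]
      have hey : Φ (f + y) = Φ f + Φ y := P2d f y (by rw [hff, hff]) hy
      have hfb : Φ (e + b) = Φ e + Φ b := P2b e b (by rw [hee, hee]) hb
      have main := hP (e + b) (f + y)
      rw [hey, hfb] at main
      have hA : (f+y)*(e+b) = b + y := by
        rw [add_mul, mul_add, mul_add, hfe, b1, y2, hyb, zero_add, add_zero]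
      have hB : (e+b)*(f+y) = 0 := by
        rw [add_mul, mul_add, mul_add, hef, y3, b4, hby]
        simp only [add_zero]
      rw [hA, hB, smul_zero, zero_add] at main
      have hreg : l•((Φ e+Φ b)*(Φ f+Φ y)) + m2•((Φ f+Φ y)*(Φ e+Φ b)) =
          (l•(Φ e*Φ f) + m2•(Φ f*Φ e)) + ((l•(Φ b*Φ f) + m2•(Φ f*Φ b)) +
            ((l•(Φ e*Φ y) + m2•(Φ y*Φ e)) + (l•(Φ b*Φ y) + m2•(Φ y*Φ b)))) := by
        simp only [mul_add, add_mul, smul_add]; abel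
      rw [hreg, ← hP e f, ← hP b f, ← hP e y, ← hP b y,
        show l•(e*f) + m2•(f*e) = 0 by rw [hef, hfe, smul_zero, smul_zero, add_zero],
        show l•(b*f) + m2•(f*b) = m2•b by rw [b1, b4, smul_zero, zero_add],
        show l•(e*y) + m2•(y*e) = m2•y by rw [y2, y3, smul_zero, zero_add],
        show l•(b*y) + m2•(y*b) = 0 by rw [hyb, hby, smul_zero, smul_zero, add_zero],
        hΦ0, zero_add, add_zero, smul_add] at main
      exact main
    intro u v hu hv
    by_cases hl : l = 0
    · have hm : m2 ≠ 0 := by intro h; exact hs (by rw [hl, h, add_zero])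
      have hu' : f*(m2⁻¹•u)*e = m2⁻¹•u := by rw [mul_smul_comm, smul_mul_assoc, hu]
      have hv' : f*(m2⁻¹•v)*e = m2⁻¹•v := by rw [mul_smul_comm, smul_mul_assoc, hv]
      have h := keyR (m2⁻¹•v) (m2⁻¹•u) hv' hu'
      simpa only [smul_inv_smul₀ hm] using h
    · have hu' : f*(l⁻¹•u)*e = l⁻¹•u := by rw [mul_smul_comm, smul_mul_assoc, hu]
      have hv' : f*(l⁻¹•v)*e = l⁻¹•v := by rw [mul_smul_comm, smul_mul_assoc, hv]
      have h := keyL (l⁻¹•v) (l⁻¹•u) hv' hu'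
      simpa only [smul_inv_smul₀ hl] using h
  -- A11 : additivity within A11
  have A11 : ∀ u v : A, e*u*e = u → e*v*e = v → Φ (u + v) = Φ u + Φ v := by
    intro u v hu hv
    obtain ⟨u1, u2, u3, u4⟩ := mk11 u hu
    obtain ⟨v1, v2, v3, v4⟩ := mk11 v hv
    obtain ⟨d, hd⟩ := hsurj (Φ u + Φ v)
    have hW2 := fun t => killstep d u v (f*t*f) hd
      (by rw [mul_assoc, v3, mul_zero])
      (by rw [← mul_assoc, ← mul_assoc, v4, zero_mul, zero_mul])
    have hgf : (d - (u+v))*f = 0 :=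
      prR _ f (fun t => by have := (hW2 t).2; rwa [← mul_assoc, ← mul_assoc] at this) hf0
    have hZ : ∀ t, (e*t*f)*(d - (u+v)) = 0 ∧ (d - (u+v))*(e*t*f) = 0 := by
      intro t
      have hZu : (e*t*f)*u = 0 := by rw [mul_assoc, u3, mul_zero]
      have hZv : (e*t*f)*v = 0 := by rw [mul_assoc, v3, mul_zero]
      have hXf : (e*t*f)*f = e*t*f := by rw [mul_assoc, hff]
      have p1 : e*(u*(e*t*f))*f = u*(e*t*f) := by
        rw [show e*(u*(e*t*f)) = u*(e*t*f) from by rw [← mul_assoc, u1], mul_assoc, hXf]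
      have p2 : e*(v*(e*t*f))*f = v*(e*t*f) := by
        rw [show e*(v*(e*t*f)) = v*(e*t*f) from by rw [← mul_assoc, v1], mul_assoc, hXf]
      have q1 : e*(m2•(u*(e*t*f)))*f = m2•(u*(e*t*f)) := by
        rw [mul_smul_comm, smul_mul_assoc, p1]
      have q2 : e*(m2•(v*(e*t*f)))*f = m2•(v*(e*t*f)) := by
        rw [mul_smul_comm, smul_mul_assoc, p2]
      have q1' : e*(l•(u*(e*t*f)))*f = l•(u*(e*t*f)) := by
        rw [mul_smul_comm, smul_mul_assoc, p1]
      have q2' : e*(l•(v*(e*t*f)))*f = l•(v*(e*t*f)) := by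
        rw [mul_smul_comm, smul_mul_assoc, p2]
      apply key
      · rw [trL d u v hd (e*t*f),
          show l•((e*t*f)*u) + m2•(u*(e*t*f)) = m2•(u*(e*t*f)) by
            rw [hZu, smul_zero, zero_add],
          show l•((e*t*f)*v) + m2•(v*(e*t*f)) = m2•(v*(e*t*f)) by
            rw [hZv, smul_zero, zero_add],
          ← A12 _ _ q1 q2]
        congr 1
        rw [mul_add, add_mul, hZu, hZv, add_zero, smul_zero, zero_add, smul_add]
      · rw [trR d u v hd (e*t*f),
          show l•(u*(e*t*f)) + m2•((e*t*f)*u) = l•(u*(e*t*f)) by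
            rw [hZu, smul_zero, add_zero],
          show l•(v*(e*t*f)) + m2•((e*t*f)*v) = l•(v*(e*t*f)) by
            rw [hZv, smul_zero, add_zero],
          ← A12 _ _ q1' q2']
        congr 1
        rw [add_mul, mul_add, hZu, hZv, add_zero, smul_zero, add_zero, smul_add]
    have hge : (d - (u+v))*e = 0 :=
      prR _ f (fun t => by have := (hZ t).2; rwa [← mul_assoc, ← mul_assoc] at this) hf0
    have : d = u + v := by
      have h0 := finR _ hge hgf
      rwa [sub_eq_zero] at h0
    rw [← this, hd]
  -- A22 : additivity within A22
  have A22 : ∀ u v : A, f*u*f = u → f*v*f = v → Φ (u + v) = Φ u + Φ v := by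
    intro u v hu hv
    obtain ⟨u1, u2, u3, u4⟩ := mk22 u hu
    obtain ⟨v1, v2, v3, v4⟩ := mk22 v hv
    obtain ⟨d, hd⟩ := hsurj (Φ u + Φ v)
    have hZ11 := fun t => killstep d u v (e*t*e) hd
      (by rw [mul_assoc, v3, mul_zero])
      (by rw [← mul_assoc, ← mul_assoc, v4, zero_mul, zero_mul])
    have hge : (d - (u+v))*e = 0 :=
      prR _ e (fun t => by have := (hZ11 t).2; rwa [← mul_assoc, ← mul_assoc] at this) he0
    have hW : ∀ t, (f*t*e)*(d - (u+v)) = 0 ∧ (d - (u+v))*(f*t*e) = 0 := by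
      intro t
      have hWu : (f*t*e)*u = 0 := by rw [mul_assoc, u3, mul_zero]
      have hWv : (f*t*e)*v = 0 := by rw [mul_assoc, v3, mul_zero]
      have hXe : (f*t*e)*e = f*t*e := by rw [mul_assoc, hee]
      have p1 : f*(u*(f*t*e))*e = u*(f*t*e) := by
        rw [show f*(u*(f*t*e)) = u*(f*t*e) from by rw [← mul_assoc, u1], mul_assoc, hXe]
      have p2 : f*(v*(f*t*e))*e = v*(f*t*e) := by
        rw [show f*(v*(f*t*e)) = v*(f*t*e) from by rw [← mul_assoc, v1], mul_assoc, hXe]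
      have q1 : f*(m2•(u*(f*t*e)))*e = m2•(u*(f*t*e)) := by
        rw [mul_smul_comm, smul_mul_assoc, p1]
      have q2 : f*(m2•(v*(f*t*e)))*e = m2•(v*(f*t*e)) := by
        rw [mul_smul_comm, smul_mul_assoc, p2]
      have q1' : f*(l•(u*(f*t*e)))*e = l•(u*(f*t*e)) := by
        rw [mul_smul_comm, smul_mul_assoc, p1]
      have q2' : f*(l•(v*(f*t*e)))*e = l•(v*(f*t*e)) := by
        rw [mul_smul_comm, smul_mul_assoc, p2]
      apply key
      · rw [trL d u v hd (f*t*e),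
          show l•((f*t*e)*u) + m2•(u*(f*t*e)) = m2•(u*(f*t*e)) by
            rw [hWu, smul_zero, zero_add],
          show l•((f*t*e)*v) + m2•(v*(f*t*e)) = m2•(v*(f*t*e)) by
            rw [hWv, smul_zero, zero_add],
          ← A21 _ _ q1 q2]
        congr 1
        rw [mul_add, add_mul, hWu, hWv, add_zero, smul_zero, zero_add, smul_add]
      · rw [trR d u v hd (f*t*e),
          show l•(u*(f*t*e)) + m2•((f*t*e)*u) = l•(u*(f*t*e)) by
            rw [hWu, smul_zero, add_zero],
          show l•(v*(f*t*e)) + m2•((f*t*e)*v) = l•(v*(f*t*e)) by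
            rw [hWv, smul_zero, add_zero],
          ← A21 _ _ q1' q2']
        congr 1
        rw [add_mul, mul_add, hWu, hWv, add_zero, smul_zero, add_zero, smul_add]
    have hgf : (d - (u+v))*f = 0 :=
      prR _ e (fun t => by have := (hW t).2; rwa [← mul_assoc, ← mul_assoc] at this) he0
    have : d = u + v := by
      have h0 := finR _ hge hgf
      rwa [sub_eq_zero] at h0
    rw [← this, hd]
  -- N : triple (A12, A11, A22)
  have N : ∀ u v w : A, e*u*f = u → e*v*e = v → f*w*f = w →
      Φ (u + v + w) = Φ u + Φ v + Φ w := by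
    intro u v w hu hv hw
    obtain ⟨u1, u2, u3, u4⟩ := mk12 u hu
    obtain ⟨v1, v2, v3, v4⟩ := mk11 v hv
    obtain ⟨w1, w2, w3, w4⟩ := mk22 w hw
    obtain ⟨d, hd⟩ := hsurj (Φ u + Φ v + Φ w)
    have pv : e*(l•v + m2•v)*e = l•v + m2•v := by
      simp only [mul_add, add_mul, mul_smul_comm, smul_mul_assoc, hv]
    have pw : f*(l•w + m2•w)*f = l•w + m2•w := by
      simp only [mul_add, add_mul, mul_smul_comm, smul_mul_assoc, hw]
    have pul : e*(l•u)*f = l•u := by rw [mul_smul_comm, smul_mul_assoc, hu]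
    have pum : e*(m2•u)*f = m2•u := by rw [mul_smul_comm, smul_mul_assoc, hu]
    have hE : e*(d - (u+v+w)) = 0 ∧ (d - (u+v+w))*e = 0 := by
      apply key
      · rw [trL3 d u v w hd e,
          show l•(e*u) + m2•(u*e) = l•u by rw [u1, u4, smul_zero, add_zero],
          show l•(e*v) + m2•(v*e) = l•v + m2•v by rw [v1, v2],
          show l•(e*w) + m2•(w*e) = 0 by rw [w3, w4, smul_zero, smul_zero, add_zero],
          hΦ0, add_zero, add_comm (Φ (l•u)) (Φ (l•v + m2•v)), ← P2a _ _ pv pul]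
        congr 1
        simp only [mul_add, add_mul, u1, u4, v1, v2, w3, w4, smul_add, smul_zero,
          add_zero, zero_add]
        try abel
      · rw [trR3 d u v w hd e,
          show l•(u*e) + m2•(e*u) = m2•u by rw [u1, u4, smul_zero, zero_add],
          show l•(v*e) + m2•(e*v) = l•v + m2•v by rw [v1, v2],
          show l•(w*e) + m2•(e*w) = 0 by rw [w3, w4, smul_zero, smul_zero, add_zero],
          hΦ0, add_zero, add_comm (Φ (m2•u)) (Φ (l•v + m2•v)), ← P2a _ _ pv pum]
        congr 1
        simp only [mul_add, add_mul, u1, u4, v1, v2, w3, w4, smul_add, smul_zero,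
          add_zero, zero_add]
        try abel
    have hF : f*(d - (u+v+w)) = 0 ∧ (d - (u+v+w))*f = 0 := by
      apply key
      · rw [trL3 d u v w hd f,
          show l•(f*u) + m2•(u*f) = m2•u by rw [u2, u3, smul_zero, zero_add],
          show l•(f*v) + m2•(v*f) = 0 by rw [v3, v4, smul_zero, smul_zero, add_zero],
          show l•(f*w) + m2•(w*f) = l•w + m2•w by rw [w1, w2],
          hΦ0, add_zero, add_comm (Φ (m2•u)) (Φ (l•w + m2•w)), ← P2c _ _ pw pum]
        congr 1
        simp only [mul_add, add_mul, u2, u3, v3, v4, w1, w2, smul_add, smul_zero,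
          add_zero, zero_add]
        try abel
      · rw [trR3 d u v w hd f,
          show l•(u*f) + m2•(f*u) = l•u by rw [u2, u3, smul_zero, add_zero],
          show l•(v*f) + m2•(f*v) = 0 by rw [v3, v4, smul_zero, smul_zero, add_zero],
          show l•(w*f) + m2•(f*w) = l•w + m2•w by rw [w1, w2],
          hΦ0, add_zero, add_comm (Φ (l•u)) (Φ (l•w + m2•w)), ← P2c _ _ pw pul]
        congr 1
        simp only [mul_add, add_mul, u2, u3, v3, v4, w1, w2, smul_add, smul_zero,
          add_zero, zero_add]
        try abel
    have : d = u + v + w := by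
      have h0 := finL _ hE.1 hF.1
      rwa [sub_eq_zero] at h0
    rw [← this, hd]
  -- N' : triple (A21, A11, A22)
  have N' : ∀ u v w : A, f*u*e = u → e*v*e = v → f*w*f = w →
      Φ (u + v + w) = Φ u + Φ v + Φ w := by
    intro u v w hu hv hw
    obtain ⟨u1, u2, u3, u4⟩ := mk21 u hu
    obtain ⟨v1, v2, v3, v4⟩ := mk11 v hv
    obtain ⟨w1, w2, w3, w4⟩ := mk22 w hw
    obtain ⟨d, hd⟩ := hsurj (Φ u + Φ v + Φ w)
    have pv : e*(l•v + m2•v)*e = l•v + m2•v := by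
      simp only [mul_add, add_mul, mul_smul_comm, smul_mul_assoc, hv]
    have pw : f*(l•w + m2•w)*f = l•w + m2•w := by
      simp only [mul_add, add_mul, mul_smul_comm, smul_mul_assoc, hw]
    have pul : f*(l•u)*e = l•u := by rw [mul_smul_comm, smul_mul_assoc, hu]
    have pum : f*(m2•u)*e = m2•u := by rw [mul_smul_comm, smul_mul_assoc, hu]
    have hE : e*(d - (u+v+w)) = 0 ∧ (d - (u+v+w))*e = 0 := by
      apply key
      · rw [trL3 d u v w hd e,
          show l•(e*u) + m2•(u*e) = m2•u by rw [u2, u3, smul_zero, zero_add],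
          show l•(e*v) + m2•(v*e) = l•v + m2•v by rw [v1, v2],
          show l•(e*w) + m2•(w*e) = 0 by rw [w3, w4, smul_zero, smul_zero, add_zero],
          hΦ0, add_zero, add_comm (Φ (m2•u)) (Φ (l•v + m2•v)), ← P2b _ _ pv pum]
        congr 1
        simp only [mul_add, add_mul, u2, u3, v1, v2, w3, w4, smul_add, smul_zero,
          add_zero, zero_add]
        try abel
      · rw [trR3 d u v w hd e,
          show l•(u*e) + m2•(e*u) = l•u by rw [u2, u3, smul_zero, add_zero],
          show l•(v*e) + m2•(e*v) = l•v + m2•v by rw [v1, v2],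
          show l•(w*e) + m2•(e*w) = 0 by rw [w3, w4, smul_zero, smul_zero, add_zero],
          hΦ0, add_zero, add_comm (Φ (l•u)) (Φ (l•v + m2•v)), ← P2b _ _ pv pul]
        congr 1
        simp only [mul_add, add_mul, u2, u3, v1, v2, w3, w4, smul_add, smul_zero,
          add_zero, zero_add]
        try abel
    have hF : f*(d - (u+v+w)) = 0 ∧ (d - (u+v+w))*f = 0 := by
      apply key
      · rw [trL3 d u v w hd f,
          show l•(f*u) + m2•(u*f) = l•u by rw [u1, u4, smul_zero, add_zero],
          show l•(f*v) + m2•(v*f) = 0 by rw [v3, v4, smul_zero, smul_zero, add_zero],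
          show l•(f*w) + m2•(w*f) = l•w + m2•w by rw [w1, w2],
          hΦ0, add_zero, add_comm (Φ (l•u)) (Φ (l•w + m2•w)), ← P2d _ _ pw pul]
        congr 1
        simp only [mul_add, add_mul, u1, u4, v3, v4, w1, w2, smul_add, smul_zero,
          add_zero, zero_add]
        try abel
      · rw [trR3 d u v w hd f,
          show l•(u*f) + m2•(f*u) = m2•u by rw [u1, u4, smul_zero, zero_add],
          show l•(v*f) + m2•(f*v) = 0 by rw [v3, v4, smul_zero, smul_zero, add_zero],
          show l•(w*f) + m2•(f*w) = l•w + m2•w by rw [w1, w2],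
          hΦ0, add_zero, add_comm (Φ (m2•u)) (Φ (l•w + m2•w)), ← P2d _ _ pw pum]
        congr 1
        simp only [mul_add, add_mul, u1, u4, v3, v4, w1, w2, smul_add, smul_zero,
          add_zero, zero_add]
        try abel
    have : d = u + v + w := by
      have h0 := finL _ hE.1 hF.1
      rwa [sub_eq_zero] at h0
    rw [← this, hd]
  -- T1 : triple (A11, A12, A21)
  have T1 : ∀ u v w : A, e*u*e = u → e*v*f = v → f*w*e = w →
      Φ (u + v + w) = Φ u + Φ v + Φ w := by
    intro u v w hu hv hw
    obtain ⟨u1, u2, u3, u4⟩ := mk11 u hu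
    obtain ⟨v1, v2, v3, v4⟩ := mk12 v hv
    obtain ⟨w1, w2, w3, w4⟩ := mk21 w hw
    obtain ⟨d, hd⟩ := hsurj (Φ u + Φ v + Φ w)
    -- W2 = f*t*f family
    have hW2fam : ∀ t, (f*t*f)*(d - (u+v+w)) = 0 ∧ (d - (u+v+w))*(f*t*f) = 0 := by
      intro t
      have hzu : (f*t*f)*u = 0 := by rw [mul_assoc, u3, mul_zero]
      have huz : u*(f*t*f) = 0 := by rw [← mul_assoc, ← mul_assoc, u4, zero_mul, zero_mul]
      have hzv : (f*t*f)*v = 0 := by rw [mul_assoc, v3, mul_zero]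
      have hwz0 : w*(f*t*f) = 0 := by rw [← mul_assoc, ← mul_assoc, w4, zero_mul, zero_mul]
      have hZf : (f*t*f)*f = f*t*f := by rw [mul_assoc, hff]
      have hfZ : f*(f*t*f) = f*t*f := by rw [← mul_assoc, ← mul_assoc, hff]
      have p12 : e*(v*(f*t*f))*f = v*(f*t*f) := by
        rw [show e*(v*(f*t*f)) = v*(f*t*f) from by rw [← mul_assoc, v1], mul_assoc, hZf]
      have p21 : f*((f*t*f)*w)*e = (f*t*f)*w := by
        rw [show f*((f*t*f)*w) = (f*t*f)*w from by rw [← mul_assoc, hfZ], mul_assoc, w2]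
      have q12 : e*(m2•(v*(f*t*f)))*f = m2•(v*(f*t*f)) := by
        rw [mul_smul_comm, smul_mul_assoc, p12]
      have q12' : e*(l•(v*(f*t*f)))*f = l•(v*(f*t*f)) := by
        rw [mul_smul_comm, smul_mul_assoc, p12]
      have q21 : f*(l•((f*t*f)*w))*e = l•((f*t*f)*w) := by
        rw [mul_smul_comm, smul_mul_assoc, p21]
      have q21' : f*(m2•((f*t*f)*w))*e = m2•((f*t*f)*w) := by
        rw [mul_smul_comm, smul_mul_assoc, p21]
      apply key
      · rw [trL3 d u v w hd (f*t*f),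
          show l•((f*t*f)*u) + m2•(u*(f*t*f)) = 0 by
            rw [hzu, huz, smul_zero, smul_zero, add_zero],
          show l•((f*t*f)*v) + m2•(v*(f*t*f)) = m2•(v*(f*t*f)) by
            rw [hzv, smul_zero, zero_add],
          show l•((f*t*f)*w) + m2•(w*(f*t*f)) = l•((f*t*f)*w) by
            rw [hwz0, smul_zero, add_zero],
          hΦ0, zero_add, ← P1 _ _ q12 q21]
        congr 1
        simp only [mul_add, add_mul, hzu, huz, hzv, hwz0, smul_add, smul_zero,
          add_zero, zero_add]
        try abel
      · rw [trR3 d u v w hd (f*t*f),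
          show l•(u*(f*t*f)) + m2•((f*t*f)*u) = 0 by
            rw [hzu, huz, smul_zero, smul_zero, add_zero],
          show l•(v*(f*t*f)) + m2•((f*t*f)*v) = l•(v*(f*t*f)) by
            rw [hzv, smul_zero, add_zero],
          show l•(w*(f*t*f)) + m2•((f*t*f)*w) = m2•((f*t*f)*w) by
            rw [hwz0, smul_zero, zero_add],
          hΦ0, zero_add, ← P1 _ _ q12' q21']
        congr 1
        simp only [mul_add, add_mul, hzu, huz, hzv, hwz0, smul_add, smul_zero,
          add_zero, zero_add]
        try abel
    have hgf : (d - (u+v+w))*f = 0 :=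
      prR _ f (fun t => by have := (hW2fam t).2; rwa [← mul_assoc, ← mul_assoc] at this) hf0
    -- Z = e*t*f family
    have hZfam : ∀ t, (e*t*f)*(d - (u+v+w)) = 0 ∧ (d - (u+v+w))*(e*t*f) = 0 := by
      intro t
      have hzu : (e*t*f)*u = 0 := by rw [mul_assoc, u3, mul_zero]
      have hzv : (e*t*f)*v = 0 := by rw [mul_assoc, v3, mul_zero]
      have hvz : v*(e*t*f) = 0 := by rw [← mul_assoc, ← mul_assoc, v4, zero_mul, zero_mul]
      have hZf : (e*t*f)*f = e*t*f := by rw [mul_assoc, hff]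
      have heZ : e*(e*t*f) = e*t*f := by rw [← mul_assoc, ← mul_assoc, hee]
      have p12 : e*(u*(e*t*f))*f = u*(e*t*f) := by
        rw [show e*(u*(e*t*f)) = u*(e*t*f) from by rw [← mul_assoc, u1], mul_assoc, hZf]
      have p11 : e*((e*t*f)*w)*e = (e*t*f)*w := by
        rw [show e*((e*t*f)*w) = (e*t*f)*w from by rw [← mul_assoc, heZ], mul_assoc, w2]
      have p22 : f*(w*(e*t*f))*f = w*(e*t*f) := by
        rw [show f*(w*(e*t*f)) = w*(e*t*f) from by rw [← mul_assoc, w1], mul_assoc, hZf]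
      have q12 : e*(m2•(u*(e*t*f)))*f = m2•(u*(e*t*f)) := by
        rw [mul_smul_comm, smul_mul_assoc, p12]
      have q12' : e*(l•(u*(e*t*f)))*f = l•(u*(e*t*f)) := by
        rw [mul_smul_comm, smul_mul_assoc, p12]
      have q11 : e*(l•((e*t*f)*w))*e = l•((e*t*f)*w) := by
        rw [mul_smul_comm, smul_mul_assoc, p11]
      have q11' : e*(m2•((e*t*f)*w))*e = m2•((e*t*f)*w) := by
        rw [mul_smul_comm, smul_mul_assoc, p11]
      have q22 : f*(m2•(w*(e*t*f)))*f = m2•(w*(e*t*f)) := by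
        rw [mul_smul_comm, smul_mul_assoc, p22]
      have q22' : f*(l•(w*(e*t*f)))*f = l•(w*(e*t*f)) := by
        rw [mul_smul_comm, smul_mul_assoc, p22]
      apply key
      · rw [trL3 d u v w hd (e*t*f),
          show l•((e*t*f)*u) + m2•(u*(e*t*f)) = m2•(u*(e*t*f)) by
            rw [hzu, smul_zero, zero_add],
          show l•((e*t*f)*v) + m2•(v*(e*t*f)) = 0 by
            rw [hzv, hvz, smul_zero, smul_zero, add_zero],
          hΦ0, add_zero,
          P3 _ _ q11 q22, ← add_assoc, ← N _ _ _ q12 q11 q22]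
        congr 1
        simp only [mul_add, add_mul, hzu, hzv, hvz, smul_add, smul_zero,
          add_zero, zero_add]
        try abel
      · rw [trR3 d u v w hd (e*t*f),
          show l•(u*(e*t*f)) + m2•((e*t*f)*u) = l•(u*(e*t*f)) by
            rw [hzu, smul_zero, add_zero],
          show l•(v*(e*t*f)) + m2•((e*t*f)*v) = 0 by
            rw [hzv, hvz, smul_zero, smul_zero, add_zero],
          hΦ0, add_zero,
          show l•(w*(e*t*f)) + m2•((e*t*f)*w) = m2•((e*t*f)*w) + l•(w*(e*t*f)) from
            add_comm _ _,
          P3 _ _ q11' q22', ← add_assoc, ← N _ _ _ q12' q11' q22']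
        congr 1
        simp only [mul_add, add_mul, hzu, hzv, hvz, smul_add, smul_zero,
          add_zero, zero_add]
        try abel
    have hge : (d - (u+v+w))*e = 0 :=
      prR _ f (fun t => by have := (hZfam t).2; rwa [← mul_assoc, ← mul_assoc] at this) hf0
    have : d = u + v + w := by
      have h0 := finR _ hge hgf
      rwa [sub_eq_zero] at h0
    rw [← this, hd]
  -- T2 : triple (A12, A21, A22)
  have T2 : ∀ u v w : A, e*u*f = u → f*v*e = v → f*w*f = w →
      Φ (u + v + w) = Φ u + Φ v + Φ w := by
    intro u v w hu hv hw
    obtain ⟨u1, u2, u3, u4⟩ := mk12 u hu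
    obtain ⟨v1, v2, v3, v4⟩ := mk21 v hv
    obtain ⟨w1, w2, w3, w4⟩ := mk22 w hw
    obtain ⟨d, hd⟩ := hsurj (Φ u + Φ v + Φ w)
    -- Z11 = e*t*e family
    have hZ11fam : ∀ t, (e*t*e)*(d - (u+v+w)) = 0 ∧ (d - (u+v+w))*(e*t*e) = 0 := by
      intro t
      have hzw : (e*t*e)*w = 0 := by rw [mul_assoc, w3, mul_zero]
      have hwz : w*(e*t*e) = 0 := by rw [← mul_assoc, ← mul_assoc, w4, zero_mul, zero_mul]
      have huz : u*(e*t*e) = 0 := by rw [← mul_assoc, ← mul_assoc, u4, zero_mul, zero_mul]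
      have hzv : (e*t*e)*v = 0 := by rw [mul_assoc, v3, mul_zero]
      have hZe : (e*t*e)*e = e*t*e := by rw [mul_assoc, hee]
      have heZ : e*(e*t*e) = e*t*e := by rw [← mul_assoc, ← mul_assoc, hee]
      have p12 : e*((e*t*e)*u)*f = (e*t*e)*u := by
        rw [show e*((e*t*e)*u) = (e*t*e)*u from by rw [← mul_assoc, heZ], mul_assoc, u2]
      have p21 : f*(v*(e*t*e))*e = v*(e*t*e) := by
        rw [show f*(v*(e*t*e)) = v*(e*t*e) from by rw [← mul_assoc, v1], mul_assoc, hZe]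
      have q12 : e*(l•((e*t*e)*u))*f = l•((e*t*e)*u) := by
        rw [mul_smul_comm, smul_mul_assoc, p12]
      have q12' : e*(m2•((e*t*e)*u))*f = m2•((e*t*e)*u) := by
        rw [mul_smul_comm, smul_mul_assoc, p12]
      have q21 : f*(m2•(v*(e*t*e)))*e = m2•(v*(e*t*e)) := by
        rw [mul_smul_comm, smul_mul_assoc, p21]
      have q21' : f*(l•(v*(e*t*e)))*e = l•(v*(e*t*e)) := by
        rw [mul_smul_comm, smul_mul_assoc, p21]
      apply key
      · rw [trL3 d u v w hd (e*t*e),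
          show l•((e*t*e)*u) + m2•(u*(e*t*e)) = l•((e*t*e)*u) by
            rw [huz, smul_zero, add_zero],
          show l•((e*t*e)*v) + m2•(v*(e*t*e)) = m2•(v*(e*t*e)) by
            rw [hzv, smul_zero, zero_add],
          show l•((e*t*e)*w) + m2•(w*(e*t*e)) = 0 by
            rw [hzw, hwz, smul_zero, smul_zero, add_zero],
          hΦ0, add_zero, ← P1 _ _ q12 q21]
        congr 1
        simp only [mul_add, add_mul, hzw, hwz, huz, hzv, smul_add, smul_zero,
          add_zero, zero_add]
        try abel
      · rw [trR3 d u v w hd (e*t*e),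
          show l•(u*(e*t*e)) + m2•((e*t*e)*u) = m2•((e*t*e)*u) by
            rw [huz, smul_zero, zero_add],
          show l•(v*(e*t*e)) + m2•((e*t*e)*v) = l•(v*(e*t*e)) by
            rw [hzv, smul_zero, add_zero],
          show l•(w*(e*t*e)) + m2•((e*t*e)*w) = 0 by
            rw [hzw, hwz, smul_zero, smul_zero, add_zero],
          hΦ0, add_zero, ← P1 _ _ q12' q21']
        congr 1
        simp only [mul_add, add_mul, hzw, hwz, huz, hzv, smul_add, smul_zero,
          add_zero, zero_add]
        try abel
    have hge : (d - (u+v+w))*e = 0 :=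
      prR _ e (fun t => by have := (hZ11fam t).2; rwa [← mul_assoc, ← mul_assoc] at this) he0
    -- W = f*t*e family
    have hWfam : ∀ t, (f*t*e)*(d - (u+v+w)) = 0 ∧ (d - (u+v+w))*(f*t*e) = 0 := by
      intro t
      have hzv : (f*t*e)*v = 0 := by rw [mul_assoc, v3, mul_zero]
      have hvz : v*(f*t*e) = 0 := by rw [← mul_assoc, ← mul_assoc, v4, zero_mul, zero_mul]
      have hzw : (f*t*e)*w = 0 := by rw [mul_assoc, w3, mul_zero]
      have hWe : (f*t*e)*e = f*t*e := by rw [mul_assoc, hee]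
      have hfW : f*(f*t*e) = f*t*e := by rw [← mul_assoc, ← mul_assoc, hff]
      have p22 : f*((f*t*e)*u)*f = (f*t*e)*u := by
        rw [show f*((f*t*e)*u) = (f*t*e)*u from by rw [← mul_assoc, hfW], mul_assoc, u2]
      have p11 : e*(u*(f*t*e))*e = u*(f*t*e) := by
        rw [show e*(u*(f*t*e)) = u*(f*t*e) from by rw [← mul_assoc, u1], mul_assoc, hWe]
      have p21 : f*(w*(f*t*e))*e = w*(f*t*e) := by
        rw [show f*(w*(f*t*e)) = w*(f*t*e) from by rw [← mul_assoc, w1], mul_assoc, hWe]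
      have q22 : f*(l•((f*t*e)*u))*f = l•((f*t*e)*u) := by
        rw [mul_smul_comm, smul_mul_assoc, p22]
      have q22' : f*(m2•((f*t*e)*u))*f = m2•((f*t*e)*u) := by
        rw [mul_smul_comm, smul_mul_assoc, p22]
      have q11 : e*(m2•(u*(f*t*e)))*e = m2•(u*(f*t*e)) := by
        rw [mul_smul_comm, smul_mul_assoc, p11]
      have q11' : e*(l•(u*(f*t*e)))*e = l•(u*(f*t*e)) := by
        rw [mul_smul_comm, smul_mul_assoc, p11]
      have q21 : f*(m2•(w*(f*t*e)))*e = m2•(w*(f*t*e)) := by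
        rw [mul_smul_comm, smul_mul_assoc, p21]
      have q21' : f*(l•(w*(f*t*e)))*e = l•(w*(f*t*e)) := by
        rw [mul_smul_comm, smul_mul_assoc, p21]
      apply key
      · rw [trL3 d u v w hd (f*t*e),
          show l•((f*t*e)*v) + m2•(v*(f*t*e)) = 0 by
            rw [hzv, hvz, smul_zero, smul_zero, add_zero],
          show l•((f*t*e)*w) + m2•(w*(f*t*e)) = m2•(w*(f*t*e)) by
            rw [hzw, smul_zero, zero_add],
          hΦ0, add_zero,
          show l•((f*t*e)*u) + m2•(u*(f*t*e)) = m2•(u*(f*t*e)) + l•((f*t*e)*u) from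
            add_comm _ _,
          P3 _ _ q11 q22,
          add_comm (Φ (m2•(u*(f*t*e))) + Φ (l•((f*t*e)*u))) (Φ (m2•(w*(f*t*e)))),
          ← add_assoc, ← N' _ _ _ q21 q11 q22]
        congr 1
        simp only [mul_add, add_mul, hzv, hvz, hzw, smul_add, smul_zero,
          add_zero, zero_add]
        try abel
      · rw [trR3 d u v w hd (f*t*e),
          show l•(v*(f*t*e)) + m2•((f*t*e)*v) = 0 by
            rw [hzv, hvz, smul_zero, smul_zero, add_zero],
          show l•(w*(f*t*e)) + m2•((f*t*e)*w) = l•(w*(f*t*e)) by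
            rw [hzw, smul_zero, add_zero],
          hΦ0, add_zero,
          P3 _ _ q11' q22',
          add_comm (Φ (l•(u*(f*t*e))) + Φ (m2•((f*t*e)*u))) (Φ (l•(w*(f*t*e)))),
          ← add_assoc, ← N' _ _ _ q21' q11' q22']
        congr 1
        simp only [mul_add, add_mul, hzv, hvz, hzw, smul_add, smul_zero,
          add_zero, zero_add]
        try abel
    have hgf : (d - (u+v+w))*f = 0 :=
      prR _ e (fun t => by have := (hWfam t).2; rwa [← mul_assoc, ← mul_assoc] at this) he0
    have : d = u + v + w := by
      have h0 := finR _ hge hgf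
      rwa [sub_eq_zero] at h0
    rw [← this, hd]
  -- L4 : full Peirce quadruple
  have L4 : ∀ p q r w : A, e*p*e = p → e*q*f = q → f*r*e = r → f*w*f = w →
      Φ (p + q + r + w) = Φ p + Φ q + Φ r + Φ w := by
    intro p q r w hp hq hr hw
    obtain ⟨p1, p2, p3, p4⟩ := mk11 p hp
    obtain ⟨q1, q2, q3, q4⟩ := mk12 q hq
    obtain ⟨r1, r2, r3, r4⟩ := mk21 r hr
    obtain ⟨w1, w2, w3, w4⟩ := mk22 w hw
    obtain ⟨d, hd⟩ := hsurj (Φ p + Φ q + Φ r + Φ w)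
    have pp : e*(l•p + m2•p)*e = l•p + m2•p := by
      simp only [mul_add, add_mul, mul_smul_comm, smul_mul_assoc, hp]
    have pw : f*(l•w + m2•w)*f = l•w + m2•w := by
      simp only [mul_add, add_mul, mul_smul_comm, smul_mul_assoc, hw]
    have pql : e*(l•q)*f = l•q := by rw [mul_smul_comm, smul_mul_assoc, hq]
    have pqm : e*(m2•q)*f = m2•q := by rw [mul_smul_comm, smul_mul_assoc, hq]
    have prl : f*(l•r)*e = l•r := by rw [mul_smul_comm, smul_mul_assoc, hr]
    have prm : f*(m2•r)*e = m2•r := by rw [mul_smul_comm, smul_mul_assoc, hr]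
    have hE : e*(d - (p+q+r+w)) = 0 ∧ (d - (p+q+r+w))*e = 0 := by
      apply key
      · rw [trL4 d p q r w hd e,
          show l•(e*p) + m2•(p*e) = l•p + m2•p by rw [p1, p2],
          show l•(e*q) + m2•(q*e) = l•q by rw [q1, q4, smul_zero, add_zero],
          show l•(e*r) + m2•(r*e) = m2•r by rw [r2, r3, smul_zero, zero_add],
          show l•(e*w) + m2•(w*e) = 0 by rw [w3, w4, smul_zero, smul_zero, add_zero],
          hΦ0, add_zero, ← T1 _ _ _ pp pql prm]
        congr 1
        simp only [mul_add, add_mul, p1, p2, q1, q4, r2, r3, w3, w4, smul_add,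
          smul_zero, add_zero, zero_add]
        try abel
      · rw [trR4 d p q r w hd e,
          show l•(p*e) + m2•(e*p) = l•p + m2•p by rw [p1, p2],
          show l•(q*e) + m2•(e*q) = m2•q by rw [q1, q4, smul_zero, zero_add],
          show l•(r*e) + m2•(e*r) = l•r by rw [r2, r3, smul_zero, add_zero],
          show l•(w*e) + m2•(e*w) = 0 by rw [w3, w4, smul_zero, smul_zero, add_zero],
          hΦ0, add_zero, ← T1 _ _ _ pp pqm prl]
        congr 1
        simp only [mul_add, add_mul, p1, p2, q1, q4, r2, r3, w3, w4, smul_add,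
          smul_zero, add_zero, zero_add]
        try abel
    have hF : f*(d - (p+q+r+w)) = 0 ∧ (d - (p+q+r+w))*f = 0 := by
      apply key
      · rw [trL4 d p q r w hd f,
          show l•(f*p) + m2•(p*f) = 0 by rw [p3, p4, smul_zero, smul_zero, add_zero],
          show l•(f*q) + m2•(q*f) = m2•q by rw [q2, q3, smul_zero, zero_add],
          show l•(f*r) + m2•(r*f) = l•r by rw [r1, r4, smul_zero, add_zero],
          show l•(f*w) + m2•(w*f) = l•w + m2•w by rw [w1, w2],
          hΦ0, zero_add, ← T2 _ _ _ pqm prl pw]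
        congr 1
        simp only [mul_add, add_mul, p3, p4, q2, q3, r1, r4, w1, w2, smul_add,
          smul_zero, add_zero, zero_add]
        try abel
      · rw [trR4 d p q r w hd f,
          show l•(p*f) + m2•(f*p) = 0 by rw [p3, p4, smul_zero, smul_zero, add_zero],
          show l•(q*f) + m2•(f*q) = l•q by rw [q2, q3, smul_zero, add_zero],
          show l•(r*f) + m2•(f*r) = m2•r by rw [r1, r4, smul_zero, zero_add],
          show l•(w*f) + m2•(f*w) = l•w + m2•w by rw [w1, w2],
          hΦ0, zero_add, ← T2 _ _ _ pql prm pw]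
        congr 1
        simp only [mul_add, add_mul, p3, p4, q2, q3, r1, r4, w1, w2, smul_add,
          smul_zero, add_zero, zero_add]
        try abel
    have : d = p + q + r + w := by
      have h0 := finL _ hE.1 hF.1
      rwa [sub_eq_zero] at h0
    rw [← this, hd]
  -- final assembly
  have dec : ∀ x : A, x = e*x*e + e*x*f + f*x*e + f*x*f := by
    intro x
    calc x = (e+f)*x*(e+f) := by rw [h1ef, one_mul, mul_one]
      _ = e*x*e + e*x*f + f*x*e + f*x*f := by
          simp only [add_mul, mul_add]; abel
  have pc11 : ∀ x : A, e*(e*x*e)*e = e*x*e := by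
    intro x
    rw [← mul_assoc, ← mul_assoc, hee, mul_assoc, hee]
  have pc12 : ∀ x : A, e*(e*x*f)*f = e*x*f := by
    intro x
    rw [← mul_assoc, ← mul_assoc, hee, mul_assoc, hff]
  have pc21 : ∀ x : A, f*(f*x*e)*e = f*x*e := by
    intro x
    rw [← mul_assoc, ← mul_assoc, hff, mul_assoc, hee]
  have pc22 : ∀ x : A, f*(f*x*f)*f = f*x*f := by
    intro x
    rw [← mul_assoc, ← mul_assoc, hff, mul_assoc, hff]
  have expand : ∀ x : A, Φ x = Φ (e*x*e) + Φ (e*x*f) + Φ (f*x*e) + Φ (f*x*f) := by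
    intro x
    conv_lhs => rw [dec x]
    exact L4 _ _ _ _ (pc11 x) (pc12 x) (pc21 x) (pc22 x)
  intro a b
  have hsplit : Φ (a + b) = Φ (e*a*e + e*b*e) + Φ (e*a*f + e*b*f) +
      Φ (f*a*e + f*b*e) + Φ (f*a*f + f*b*f) := by
    conv_lhs => rw [dec (a+b)]
    rw [L4 _ _ _ _ (pc11 (a+b)) (pc12 (a+b)) (pc21 (a+b)) (pc22 (a+b)),
      show e*(a+b)*e = e*a*e + e*b*e from by rw [mul_add, add_mul],
      show e*(a+b)*f = e*a*f + e*b*f from by rw [mul_add, add_mul],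
      show f*(a+b)*e = f*a*e + f*b*e from by rw [mul_add, add_mul],
      show f*(a+b)*f = f*a*f + f*b*f from by rw [mul_add, add_mul]]
  rw [hsplit,
    A11 _ _ (pc11 a) (pc11 b), A12 _ _ (pc12 a) (pc12 b),
    A21 _ _ (pc21 a) (pc21 b), A22 _ _ (pc22 a) (pc22 b),
    expand a, expand b]
  abel

set_option maxHeartbeats 1000000 in
theorem stmt13 {A B : Type*} [Ring A] [Algebra ℂ A] [StarRing A]
    [Ring B] [Algebra ℂ B] [StarRing B]
    (α1 α2 α3 α4 α5 α6 : ℂ)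
    (hsum : α1 + α2 + α3 + α4 + α5 + α6 ≠ 0)
    (hprime : ∀ x y : A, (∀ t : A, x * t * y = 0) → x = 0 ∨ y = 0)
    (e : A) (hestar : star e = e) (heidem : e * e = e) (he0 : e ≠ 0) (he1 : e ≠ 1)
    (Φ : A → B) (hbij : Function.Bijective Φ)
    (hΦ : ∀ a b c : A, Φ (starTripleSum α1 α2 α3 α4 α5 α6 a b c) =
      starTripleSum α1 α2 α3 α4 α5 α6 (Φ a) (Φ b) (Φ c))
    (hp1 : star (Φ 1) = Φ 1) (hp2 : Φ 1 * Φ 1 = Φ 1)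
    (hbeta : α1 + α2 + α3 - α4 - α5 - α6 ≠ 0)
    (hsc : ∀ a : A, Φ ((α1 + α2 + α3 - α4 - α5 - α6) • a) =
      (α1 + α2 + α3 - α4 - α5 - α6) • Φ a) :
    (∀ a b : A, Φ (a + b) = Φ a + Φ b) ∧
    (∀ a b : A, Φ (a * b) = Φ a * Φ b) ∧
    (∀ a : A, Φ (star a) = star (Φ a)) := by
  obtain ⟨hinj, hsurj⟩ := hbij
  have szA : ∀ (c : ℂ) (x : A), c ≠ 0 → c • x = 0 → x = 0 := by
    intro c x hc h
    rw [← inv_smul_smul₀ hc x, h, smul_zero]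
  have canB : ∀ (c : ℂ) (x y : B), c ≠ 0 → c • x = c • y → x = y := by
    intro c x y hc h
    rw [← inv_smul_smul₀ hc x, h, inv_smul_smul₀ hc y]
  -- Φ 0 = 0
  have hΦ0 : Φ 0 = 0 := by
    obtain ⟨c0, hc0⟩ := hsurj 0
    have h := hΦ 0 c0 c0
    rw [hc0] at h
    simpa [starTripleSum] using h
  -- the F-identity
  have hT11 : ∀ a : A, Φ ((α1+α2+α3+α4+α5+α6) • a) =
      (α1+α2) • (Φ a * Φ 1) + (α3+α4) • (Φ 1 * (Φ a * Φ 1)) + (α5+α6) • (Φ 1 * Φ a) := by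
    intro a
    have hp2' : ∀ x : B, Φ 1 * (Φ 1 * x) = Φ 1 * x := by
      intro x; rw [← mul_assoc, hp2]
    have h := hΦ a 1 1
    rw [show starTripleSum α1 α2 α3 α4 α5 α6 a 1 1 = (α1+α2+α3+α4+α5+α6) • a from by
      simp only [starTripleSum, star_one, mul_one, one_mul]; module] at h
    rw [h]
    simp only [starTripleSum, hp1, mul_assoc, hp2, hp2']
    module
  -- Φ 1 = 1
  have hone : Φ 1 = (1:B) := by
    have hq : ∀ x : B, (1 - Φ 1) * x * (1 - Φ 1) = 0 := by
      intro x
      obtain ⟨a, ha⟩ := hsurj ((1 - Φ 1) * x * (1 - Φ 1))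
      have t1 : ((1 - Φ 1) * x * (1 - Φ 1)) * Φ 1 = 0 := by
        rw [mul_assoc, show (1 - Φ 1) * Φ 1 = 0 from by
          rw [sub_mul, one_mul, hp2, sub_self], mul_zero]
      have t2 : Φ 1 * ((1 - Φ 1) * x * (1 - Φ 1)) = 0 := by
        rw [← mul_assoc, ← mul_assoc, show Φ 1 * (1 - Φ 1) = 0 from by
          rw [mul_sub, mul_one, hp2, sub_self], zero_mul, zero_mul]
      have h0 : Φ ((α1+α2+α3+α4+α5+α6) • a) = 0 := by
        rw [hT11 a, ha, t1, t2]
        simp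
      have h2 : (α1+α2+α3+α4+α5+α6) • a = 0 := hinj (by rw [h0, hΦ0])
      rw [← ha, szA _ _ hsum h2, hΦ0]
    have h := hq 1
    rw [mul_one, show (1 - Φ 1) * (1 - Φ 1) = 1 - Φ 1 from by
      rw [mul_sub, mul_one, sub_mul, one_mul, hp2, sub_self, sub_zero]] at h
    have := sub_eq_zero.mp h
    exact this.symm
  -- Φ commutes with s-scalars
  have hS : ∀ a : A, Φ ((α1+α2+α3+α4+α5+α6) • a) = (α1+α2+α3+α4+α5+α6) • Φ a := by
    intro a
    rw [hT11 a, hone]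
    simp only [mul_one, one_mul]
    module
  -- star preservation
  have hstar : ∀ a : A, Φ (star a) = star (Φ a) := by
    intro a
    have h := hΦ 1 a 1
    rw [show starTripleSum α1 α2 α3 α4 α5 α6 1 a 1 = (α1+α2+α3+α4+α5+α6) • star a from by
      simp only [starTripleSum, one_mul, mul_one]; module,
      show starTripleSum α1 α2 α3 α4 α5 α6 (Φ 1) (Φ a) (Φ 1) =
        (α1+α2+α3+α4+α5+α6) • star (Φ a) from by
      rw [hone]; simp only [starTripleSum, one_mul, mul_one]; module,
      hS (star a)] at h
    exact canB _ _ _ hsum h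
  -- the bilinear relation
  have hP : ∀ a c : A, Φ ((α1+α2+α3)•(a*c) + (α4+α5+α6)•(c*a)) =
      (α1+α2+α3)•(Φ a * Φ c) + (α4+α5+α6)•(Φ c * Φ a) := by
    intro a c
    have h := hΦ a 1 c
    rw [show starTripleSum α1 α2 α3 α4 α5 α6 a 1 c =
        (α1+α2+α3)•(a*c) + (α4+α5+α6)•(c*a) from by
      simp only [starTripleSum, star_one, one_mul, mul_one]; module,
      show starTripleSum α1 α2 α3 α4 α5 α6 (Φ a) (Φ 1) (Φ c) =
        (α1+α2+α3)•(Φ a * Φ c) + (α4+α5+α6)•(Φ c * Φ a) from by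
      rw [hone]; simp only [starTripleSum, star_one, one_mul, mul_one]; module] at h
    exact h
  -- additivity
  have hadd : ∀ a b : A, Φ (a + b) = Φ a + Φ b :=
    addAux (α1+α2+α3) (α4+α5+α6)
      (fun h => hsum (by linear_combination h))
      (fun h => hbeta (by linear_combination h))
      e (1-e) heidem
      (by rw [mul_sub, mul_one, heidem, sub_self])
      (by rw [sub_mul, one_mul, heidem, sub_self])
      (by rw [sub_mul, one_mul, mul_sub, mul_one, heidem, sub_self, sub_zero])
      (add_sub_cancel e 1) he0 (sub_ne_zero.mpr (Ne.symm he1))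
      hprime Φ hinj hsurj hΦ0 hP
  have hsub : ∀ x y : A, Φ (x - y) = Φ x - Φ y := by
    intro x y
    have h := hadd (x - y) y
    rw [sub_add_cancel] at h
    exact eq_sub_of_add_eq h.symm
  -- multiplicativity
  have hmul : ∀ a c : A, Φ (a * c) = Φ a * Φ c := by
    intro a c
    have h1 := hP a c
    have h2 := hP c a
    have hc : Φ (a*c - c*a) = Φ a * Φ c - Φ c * Φ a := by
      refine canB _ _ _ hbeta ?_
      rw [← hsc]
      calc Φ ((α1 + α2 + α3 - α4 - α5 - α6) • (a*c - c*a))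
          = Φ (((α1+α2+α3)•(a*c) + (α4+α5+α6)•(c*a)) -
              ((α1+α2+α3)•(c*a) + (α4+α5+α6)•(a*c))) := by
            congr 1; module
        _ = Φ ((α1+α2+α3)•(a*c) + (α4+α5+α6)•(c*a)) -
              Φ ((α1+α2+α3)•(c*a) + (α4+α5+α6)•(a*c)) := hsub _ _
        _ = (α1 + α2 + α3 - α4 - α5 - α6) • (Φ a * Φ c - Φ c * Φ a) := by
            rw [h1, h2]; module
    have hanti : Φ (a*c + c*a) = Φ a * Φ c + Φ c * Φ a := by
      refine canB _ _ _ hsum ?_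
      rw [← hS]
      calc Φ ((α1+α2+α3+α4+α5+α6) • (a*c + c*a))
          = Φ (((α1+α2+α3)•(a*c) + (α4+α5+α6)•(c*a)) +
              ((α1+α2+α3)•(c*a) + (α4+α5+α6)•(a*c))) := by
            congr 1; module
        _ = Φ ((α1+α2+α3)•(a*c) + (α4+α5+α6)•(c*a)) +
              Φ ((α1+α2+α3)•(c*a) + (α4+α5+α6)•(a*c)) := hadd _ _
        _ = (α1+α2+α3+α4+α5+α6) • (Φ a * Φ c + Φ c * Φ a) := by
            rw [h1, h2]; module
    have h3 : Φ (a*c) + Φ (a*c) = Φ a * Φ c + Φ a * Φ c := by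
      calc Φ (a*c) + Φ (a*c) = Φ (a*c + a*c) := (hadd _ _).symm
        _ = Φ ((a*c + c*a) + (a*c - c*a)) := by congr 1; abel
        _ = Φ (a*c + c*a) + Φ (a*c - c*a) := hadd _ _
        _ = (Φ a * Φ c + Φ c * Φ a) + (Φ a * Φ c - Φ c * Φ a) := by rw [hanti, hc]
        _ = Φ a * Φ c + Φ a * Φ c := by abel
    refine canB (2:ℂ) _ _ two_ne_zero ?_
    rw [two_smul, two_smul]
    exact h3
  exact ⟨hadd, hmul, hstar⟩
end

section
/- Let A and B be unital complex *-algebras with A prime and having a nontrivial projection, and α₁,...,α₆ ∈ ℂ with ∑αₖ ≠ 0. Let Φ : A → B be a bijection preserving the sum of triple products α₁ab*c + α₂acb* + α₃b*ac + α₄cab* + α₅b*ca + α₆cb*a such that Φ(1_A) is a projection. If γ := α₁+α₃+α₅−α₂−α₄−α₆ ≠ 0 and Φ(γ·a) = γ·Φ(a) for all a ∈ A, then Φ(bc − cb) = Φ(b)Φ(c) − Φ(c)Φ(b) for all b, c ∈ A, and consequently Φ is a *-ring isomorphism. -/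
namespace S14

variable {R : Type*} [Ring R] [Module ℂ R]

def G (α1 α2 α3 α4 α5 α6 : ℂ) (a b c : R) : R :=
  α1 • (a*b*c) + α2 • (a*c*b) + α3 • (b*a*c) + α4 • (c*a*b) + α5 • (b*c*a) + α6 • (c*b*a)

lemma G_add3 (α1 α2 α3 α4 α5 α6 : ℂ) (a b x y : R) :
    G α1 α2 α3 α4 α5 α6 a b (x + y) = G α1 α2 α3 α4 α5 α6 a b x + G α1 α2 α3 α4 α5 α6 a b y := by
  simp only [G, mul_add, add_mul, smul_add]; abel

lemma G_sub3 (α1 α2 α3 α4 α5 α6 : ℂ) (a b x y : R) :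
    G α1 α2 α3 α4 α5 α6 a b (x - y) = G α1 α2 α3 α4 α5 α6 a b x - G α1 α2 α3 α4 α5 α6 a b y := by
  simp only [G, mul_sub, sub_mul, smul_sub]; abel

lemma G_add2 (α1 α2 α3 α4 α5 α6 : ℂ) (a c x y : R) :
    G α1 α2 α3 α4 α5 α6 a (x + y) c = G α1 α2 α3 α4 α5 α6 a x c + G α1 α2 α3 α4 α5 α6 a y c := by
  simp only [G, mul_add, add_mul, smul_add]; abel

lemma G_sub2 (α1 α2 α3 α4 α5 α6 : ℂ) (a c x y : R) :
    G α1 α2 α3 α4 α5 α6 a (x - y) c = G α1 α2 α3 α4 α5 α6 a x c - G α1 α2 α3 α4 α5 α6 a y c := by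
  simp only [G, mul_sub, sub_mul, smul_sub]; abel

lemma G_add1 (α1 α2 α3 α4 α5 α6 : ℂ) (b c x y : R) :
    G α1 α2 α3 α4 α5 α6 (x + y) b c = G α1 α2 α3 α4 α5 α6 x b c + G α1 α2 α3 α4 α5 α6 y b c := by
  simp only [G, mul_add, add_mul, smul_add]; abel

lemma G_sub1 (α1 α2 α3 α4 α5 α6 : ℂ) (b c x y : R) :
    G α1 α2 α3 α4 α5 α6 (x - y) b c = G α1 α2 α3 α4 α5 α6 x b c - G α1 α2 α3 α4 α5 α6 y b c := by
  simp only [G, mul_sub, sub_mul, smul_sub]; abel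

lemma smul_cancel {M : Type*} [AddCommGroup M] [Module ℂ M] {c : ℂ} (hc : c ≠ 0) {x : M}
    (h : c • x = 0) : x = 0 := by
  have := congrArg (fun z => c⁻¹ • z) h
  simpa [smul_smul, inv_mul_cancel₀ hc] using this

section Engine

variable {A B : Type*} [Ring A] [Module ℂ A] [Ring B] [Module ℂ B]
variable (α1 α2 α3 α4 α5 α6 : ℂ) (Φ : A → B) (Ψ : B → A)

lemma engine3 (hinj : Function.Injective Φ) (hΨ : ∀ b, Φ (Ψ b) = b) (hΦ0 : Φ 0 = 0)
    (hG : ∀ a b c : A, Φ (G α1 α2 α3 α4 α5 α6 a b c) = G α1 α2 α3 α4 α5 α6 (Φ a) (Φ b) (Φ c))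
    (x y a b : A) (hkill : G α1 α2 α3 α4 α5 α6 a b x = 0) :
    G α1 α2 α3 α4 α5 α6 a b (Ψ (Φ x + Φ y) - x - y) = 0 := by
  have h1 : Φ (G α1 α2 α3 α4 α5 α6 a b (Ψ (Φ x + Φ y))) = Φ (G α1 α2 α3 α4 α5 α6 a b y) := by
    rw [hG, hΨ, G_add3, ← hG, ← hG, hkill, hΦ0, zero_add]
  have h2 := hinj h1
  rw [G_sub3, G_sub3, h2, hkill, sub_zero, sub_self]

lemma engine2 (hinj : Function.Injective Φ) (hΨ : ∀ b, Φ (Ψ b) = b) (hΦ0 : Φ 0 = 0)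
    (hG : ∀ a b c : A, Φ (G α1 α2 α3 α4 α5 α6 a b c) = G α1 α2 α3 α4 α5 α6 (Φ a) (Φ b) (Φ c))
    (x y a c : A) (hkill : G α1 α2 α3 α4 α5 α6 a x c = 0) :
    G α1 α2 α3 α4 α5 α6 a (Ψ (Φ x + Φ y) - x - y) c = 0 := by
  have h1 : Φ (G α1 α2 α3 α4 α5 α6 a (Ψ (Φ x + Φ y)) c) = Φ (G α1 α2 α3 α4 α5 α6 a y c) := by
    rw [hG, hΨ, G_add2, ← hG, ← hG, hkill, hΦ0, zero_add]
  have h2 := hinj h1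
  rw [G_sub2, G_sub2, h2, hkill, sub_zero, sub_self]

lemma engine1 (hinj : Function.Injective Φ) (hΨ : ∀ b, Φ (Ψ b) = b) (hΦ0 : Φ 0 = 0)
    (hG : ∀ a b c : A, Φ (G α1 α2 α3 α4 α5 α6 a b c) = G α1 α2 α3 α4 α5 α6 (Φ a) (Φ b) (Φ c))
    (x y b c : A) (hkill : G α1 α2 α3 α4 α5 α6 x b c = 0) :
    G α1 α2 α3 α4 α5 α6 (Ψ (Φ x + Φ y) - x - y) b c = 0 := by
  have h1 : Φ (G α1 α2 α3 α4 α5 α6 (Ψ (Φ x + Φ y)) b c) = Φ (G α1 α2 α3 α4 α5 α6 y b c) := by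
    rw [hG, hΨ, G_add1, ← hG, ← hG, hkill, hΦ0, zero_add]
  have h2 := hinj h1
  rw [G_sub1, G_sub1, h2, hkill, sub_zero, sub_self]

end Engine


section K12

variable {A B : Type*} [Ring A] [Module ℂ A] [SMulCommClass ℂ A A] [IsScalarTower ℂ A A]
variable [Ring B] [Module ℂ B]
variable (α1 α2 α3 α4 α5 α6 : ℂ) (Φ : A → B) (Ψ : B → A)

theorem K12 (hσ : α1+α2+α3+α4+α5+α6 ≠ 0) (hγ : α1+α3+α5-α2-α4-α6 ≠ 0)
    (hprime : ∀ x y : A, (∀ t : A, x * t * y = 0) → x = 0 ∨ y = 0)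
    (f g : A) (hf : f*f = f) (hg : g*g = g) (hfg : f*g = 0) (hgf : g*f = 0)
    (hfg1 : f + g = 1) (hf0 : f ≠ 0) (hg0 : g ≠ 0)
    (hinj : Function.Injective Φ) (hΨ : ∀ b, Φ (Ψ b) = b) (hΦ0 : Φ 0 = 0)
    (hG : ∀ a b c : A, Φ (G α1 α2 α3 α4 α5 α6 a b c) = G α1 α2 α3 α4 α5 α6 (Φ a) (Φ b) (Φ c))
    (x y : A) (hx : x = f*x*g) :
    Ψ (Φ x + Φ y) - x - y = f * (Ψ (Φ x + Φ y) - x - y) * g := by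
  have hf' : ∀ x : A, f*(f*x) = f*x := fun x => by rw [← mul_assoc, hf]
  have hg' : ∀ x : A, g*(g*x) = g*x := fun x => by rw [← mul_assoc, hg]
  have hfg' : ∀ x : A, f*(g*x) = 0 := fun x => by rw [← mul_assoc, hfg, zero_mul]
  have hgf' : ∀ x : A, g*(f*x) = 0 := fun x => by rw [← mul_assoc, hgf, zero_mul]
  set d := Ψ (Φ x + Φ y) - x - y with hd
  -- the six test equations
  have e1 : ∀ t : A, G α1 α2 α3 α4 α5 α6 (f*t*g) f d = 0 := by
    intro t
    refine engine3 α1 α2 α3 α4 α5 α6 Φ Ψ hinj hΨ hΦ0 hG x y _ _ ?_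
    rw [hx]; simp [G, mul_assoc, hf, hg, hfg, hgf, hf', hg', hfg', hgf']
  have e6 : ∀ t : A, G α1 α2 α3 α4 α5 α6 (f*t*g) d f = 0 := by
    intro t
    refine engine2 α1 α2 α3 α4 α5 α6 Φ Ψ hinj hΨ hΦ0 hG x y _ _ ?_
    rw [hx]; simp [G, mul_assoc, hf, hg, hfg, hgf, hf', hg', hfg', hgf']
  have e7 : ∀ t : A, G α1 α2 α3 α4 α5 α6 f (f*t*g) d = 0 := by
    intro t
    refine engine3 α1 α2 α3 α4 α5 α6 Φ Ψ hinj hΨ hΦ0 hG x y _ _ ?_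
    rw [hx]; simp [G, mul_assoc, hf, hg, hfg, hgf, hf', hg', hfg', hgf']
  have e9 : ∀ t : A, G α1 α2 α3 α4 α5 α6 d f (f*t*g) = 0 := by
    intro t
    refine engine1 α1 α2 α3 α4 α5 α6 Φ Ψ hinj hΨ hΦ0 hG x y _ _ ?_
    rw [hx]; simp [G, mul_assoc, hf, hg, hfg, hgf, hf', hg', hfg', hgf']
  have e11 : ∀ t : A, G α1 α2 α3 α4 α5 α6 f d (f*t*g) = 0 := by
    intro t
    refine engine2 α1 α2 α3 α4 α5 α6 Φ Ψ hinj hΨ hΦ0 hG x y _ _ ?_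
    rw [hx]; simp [G, mul_assoc, hf, hg, hfg, hgf, hf', hg', hfg', hgf']
  have e12 : ∀ t : A, G α1 α2 α3 α4 α5 α6 d (f*t*g) f = 0 := by
    intro t
    refine engine1 α1 α2 α3 α4 α5 α6 Φ Ψ hinj hΨ hΦ0 hG x y _ _ ?_
    rw [hx]; simp [G, mul_assoc, hf, hg, hfg, hgf, hf', hg', hfg', hgf']
  -- A22 extractions : coefficients of Z t := g*(d*(f*(t*g)))
  have z1 : ∀ t : A, α6 • (g*(d*(f*(t*g)))) = 0 := by
    intro t
    calc α6 • (g*(d*(f*(t*g))))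
        = g * (G α1 α2 α3 α4 α5 α6 (f*t*g) f d) * g := by
          simp [G, mul_assoc, hf, hg, hfg, hgf, hf', hg', hfg', hgf', mul_add, add_mul,
            mul_smul_comm, smul_mul_assoc, add_smul]
      _ = 0 := by rw [e1 t, mul_zero, zero_mul]
  have z6 : ∀ t : A, α5 • (g*(d*(f*(t*g)))) = 0 := by
    intro t
    calc α5 • (g*(d*(f*(t*g))))
        = g * (G α1 α2 α3 α4 α5 α6 (f*t*g) d f) * g := by
          simp [G, mul_assoc, hf, hg, hfg, hgf, hf', hg', hfg', hgf', mul_add, add_mul,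
            mul_smul_comm, smul_mul_assoc, add_smul]
      _ = 0 := by rw [e6 t, mul_zero, zero_mul]
  have z7 : ∀ t : A, α4 • (g*(d*(f*(t*g)))) = 0 := by
    intro t
    calc α4 • (g*(d*(f*(t*g))))
        = g * (G α1 α2 α3 α4 α5 α6 f (f*t*g) d) * g := by
          simp [G, mul_assoc, hf, hg, hfg, hgf, hf', hg', hfg', hgf', mul_add, add_mul,
            mul_smul_comm, smul_mul_assoc, add_smul]
      _ = 0 := by rw [e7 t, mul_zero, zero_mul]
  have z9 : ∀ t : A, α1 • (g*(d*(f*(t*g)))) = 0 := by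
    intro t
    calc α1 • (g*(d*(f*(t*g))))
        = g * (G α1 α2 α3 α4 α5 α6 d f (f*t*g)) * g := by
          simp [G, mul_assoc, hf, hg, hfg, hgf, hf', hg', hfg', hgf', mul_add, add_mul,
            mul_smul_comm, smul_mul_assoc, add_smul]
      _ = 0 := by rw [e9 t, mul_zero, zero_mul]
  have z11 : ∀ t : A, α3 • (g*(d*(f*(t*g)))) = 0 := by
    intro t
    calc α3 • (g*(d*(f*(t*g))))
        = g * (G α1 α2 α3 α4 α5 α6 f d (f*t*g)) * g := by
          simp [G, mul_assoc, hf, hg, hfg, hgf, hf', hg', hfg', hgf', mul_add, add_mul,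
            mul_smul_comm, smul_mul_assoc, add_smul]
      _ = 0 := by rw [e11 t, mul_zero, zero_mul]
  have z12 : ∀ t : A, α2 • (g*(d*(f*(t*g)))) = 0 := by
    intro t
    calc α2 • (g*(d*(f*(t*g))))
        = g * (G α1 α2 α3 α4 α5 α6 d (f*t*g) f) * g := by
          simp [G, mul_assoc, hf, hg, hfg, hgf, hf', hg', hfg', hgf', mul_add, add_mul,
            mul_smul_comm, smul_mul_assoc, add_smul]
      _ = 0 := by rw [e12 t, mul_zero, zero_mul]
  have hZ : ∀ t : A, g*(d*(f*(t*g))) = 0 := by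
    intro t
    refine smul_cancel hσ ?_
    calc (α1+α2+α3+α4+α5+α6) • (g*(d*(f*(t*g))))
        = α1 • (g*(d*(f*(t*g)))) + α2 • (g*(d*(f*(t*g)))) + α3 • (g*(d*(f*(t*g))))
          + α4 • (g*(d*(f*(t*g)))) + α5 • (g*(d*(f*(t*g)))) + α6 • (g*(d*(f*(t*g)))) := by
          module
      _ = 0 := by rw [z9 t, z12 t, z11 t, z7 t, z6 t, z1 t]; simp
  have hD21 : g*d*f = 0 := by
    rcases hprime (g*d*f) g (fun t => by simpa [mul_assoc] using hZ t) with h | h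
    · exact h
    · exact absurd h hg0
  -- A12 extractions, X t := f*(d*(f*(t*g))), Y t := f*(t*(g*(d*g)))
  have c1 : ∀ t : A, α3 • (f*(t*(g*(d*g)))) + (α5+α6) • (f*(d*(f*(t*g)))) = 0 := by
    intro t
    calc α3 • (f*(t*(g*(d*g)))) + (α5+α6) • (f*(d*(f*(t*g))))
        = f * (G α1 α2 α3 α4 α5 α6 (f*t*g) f d) * g := by
          simp [G, mul_assoc, hf, hg, hfg, hgf, hf', hg', hfg', hgf', mul_add, add_mul,
            mul_smul_comm, smul_mul_assoc, add_smul]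
          module
      _ = 0 := by rw [e1 t, mul_zero, zero_mul]
  have c6 : ∀ t : A, α4 • (f*(t*(g*(d*g)))) + (α5+α6) • (f*(d*(f*(t*g)))) = 0 := by
    intro t
    calc α4 • (f*(t*(g*(d*g)))) + (α5+α6) • (f*(d*(f*(t*g))))
        = f * (G α1 α2 α3 α4 α5 α6 (f*t*g) d f) * g := by
          simp [G, mul_assoc, hf, hg, hfg, hgf, hf', hg', hfg', hgf', mul_add, add_mul,
            mul_smul_comm, smul_mul_assoc, add_smul]
          module
      _ = 0 := by rw [e6 t, mul_zero, zero_mul]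
  have c7 : ∀ t : A, α1 • (f*(t*(g*(d*g)))) + (α2+α4) • (f*(d*(f*(t*g)))) = 0 := by
    intro t
    calc α1 • (f*(t*(g*(d*g)))) + (α2+α4) • (f*(d*(f*(t*g))))
        = f * (G α1 α2 α3 α4 α5 α6 f (f*t*g) d) * g := by
          simp [G, mul_assoc, hf, hg, hfg, hgf, hf', hg', hfg', hgf', mul_add, add_mul,
            mul_smul_comm, smul_mul_assoc, add_smul]
          module
      _ = 0 := by rw [e7 t, mul_zero, zero_mul]
  have c9 : ∀ t : A, α5 • (f*(t*(g*(d*g)))) + (α1+α3) • (f*(d*(f*(t*g)))) = 0 := by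
    intro t
    calc α5 • (f*(t*(g*(d*g)))) + (α1+α3) • (f*(d*(f*(t*g))))
        = f * (G α1 α2 α3 α4 α5 α6 d f (f*t*g)) * g := by
          simp [G, mul_assoc, hf, hg, hfg, hgf, hf', hg', hfg', hgf', mul_add, add_mul,
            mul_smul_comm, smul_mul_assoc, add_smul]
          module
      _ = 0 := by rw [e9 t, mul_zero, zero_mul]
  have c11 : ∀ t : A, α2 • (f*(t*(g*(d*g)))) + (α1+α3) • (f*(d*(f*(t*g)))) = 0 := by
    intro t
    calc α2 • (f*(t*(g*(d*g)))) + (α1+α3) • (f*(d*(f*(t*g))))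
        = f * (G α1 α2 α3 α4 α5 α6 f d (f*t*g)) * g := by
          simp [G, mul_assoc, hf, hg, hfg, hgf, hf', hg', hfg', hgf', mul_add, add_mul,
            mul_smul_comm, smul_mul_assoc, add_smul]
          module
      _ = 0 := by rw [e11 t, mul_zero, zero_mul]
  have c12 : ∀ t : A, α6 • (f*(t*(g*(d*g)))) + (α2+α4) • (f*(d*(f*(t*g)))) = 0 := by
    intro t
    calc α6 • (f*(t*(g*(d*g)))) + (α2+α4) • (f*(d*(f*(t*g))))
        = f * (G α1 α2 α3 α4 α5 α6 d (f*t*g) f) * g := by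
          simp [G, mul_assoc, hf, hg, hfg, hgf, hf', hg', hfg', hgf', mul_add, add_mul,
            mul_smul_comm, smul_mul_assoc, add_smul]
          module
      _ = 0 := by rw [e12 t, mul_zero, zero_mul]
  have hY : ∀ t : A, f*(t*(g*(d*g))) = 0 := by
    intro t
    refine smul_cancel hγ ?_
    calc (α1+α3+α5-α2-α4-α6) • (f*(t*(g*(d*g))))
        = ((α1 • (f*(t*(g*(d*g)))) + (α2+α4) • (f*(d*(f*(t*g)))))
            - (α6 • (f*(t*(g*(d*g)))) + (α2+α4) • (f*(d*(f*(t*g))))))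
          + ((α3 • (f*(t*(g*(d*g)))) + (α5+α6) • (f*(d*(f*(t*g)))))
            - (α4 • (f*(t*(g*(d*g)))) + (α5+α6) • (f*(d*(f*(t*g))))))
          + ((α5 • (f*(t*(g*(d*g)))) + (α1+α3) • (f*(d*(f*(t*g)))))
            - (α2 • (f*(t*(g*(d*g)))) + (α1+α3) • (f*(d*(f*(t*g)))))) := by module
      _ = 0 := by rw [c7 t, c12 t, c1 t, c6 t, c9 t, c11 t]; simp
  have hD22 : g*d*g = 0 := by
    have key : ∀ t : A, f * t * (g*d*g) = 0 := by
      intro t; have := hY t; simpa [mul_assoc] using this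
    rcases hprime f (g*d*g) key with h | h
    · exact absurd h hf0
    · exact h
  have hX : ∀ t : A, f*(d*(f*(t*g))) = 0 := by
    intro t
    refine smul_cancel hσ ?_
    have y0 : f*(t*(g*(d*g))) = 0 := hY t
    have c9' : (α1+α3) • (f*(d*(f*(t*g)))) = 0 := by
      have := c9 t; rw [y0] at this; simpa using this
    have c12' : (α2+α4) • (f*(d*(f*(t*g)))) = 0 := by
      have := c12 t; rw [y0] at this; simpa using this
    have c1' : (α5+α6) • (f*(d*(f*(t*g)))) = 0 := by
      have := c1 t; rw [y0] at this; simpa using this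
    calc (α1+α2+α3+α4+α5+α6) • (f*(d*(f*(t*g))))
        = (α1+α3) • (f*(d*(f*(t*g)))) + (α2+α4) • (f*(d*(f*(t*g))))
          + (α5+α6) • (f*(d*(f*(t*g)))) := by module
      _ = 0 := by rw [c9', c12', c1']; simp
  have hD11 : f*d*f = 0 := by
    rcases hprime (f*d*f) g (fun t => by simpa [mul_assoc] using hX t) with h | h
    · exact h
    · exact absurd h hg0
  calc d = (f+g)*d*(f+g) := by rw [hfg1, one_mul, mul_one]
    _ = f*d*f + g*d*f + (f*d*g + g*d*g) := by simp [mul_add, add_mul]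
    _ = f*d*g := by rw [hD11, hD21, hD22]; simp

end K12

section K11

variable {A B : Type*} [Ring A] [Module ℂ A] [SMulCommClass ℂ A A] [IsScalarTower ℂ A A]
variable [Ring B] [Module ℂ B]
variable (α1 α2 α3 α4 α5 α6 : ℂ) (Φ : A → B) (Ψ : B → A)

theorem K11 (hσ : α1+α2+α3+α4+α5+α6 ≠ 0) (hγ : α1+α3+α5-α2-α4-α6 ≠ 0)
    (hprime : ∀ x y : A, (∀ t : A, x * t * y = 0) → x = 0 ∨ y = 0)
    (f g : A) (hf : f*f = f) (hg : g*g = g) (hfg : f*g = 0) (hgf : g*f = 0)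
    (hfg1 : f + g = 1) (hf0 : f ≠ 0) (hg0 : g ≠ 0)
    (hinj : Function.Injective Φ) (hΨ : ∀ b, Φ (Ψ b) = b) (hΦ0 : Φ 0 = 0)
    (hG : ∀ a b c : A, Φ (G α1 α2 α3 α4 α5 α6 a b c) = G α1 α2 α3 α4 α5 α6 (Φ a) (Φ b) (Φ c))
    (x y : A) (hx : x = f*x*f) :
    Ψ (Φ x + Φ y) - x - y = f * (Ψ (Φ x + Φ y) - x - y) * f := by
  have hf' : ∀ x : A, f*(f*x) = f*x := fun x => by rw [← mul_assoc, hf]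
  have hg' : ∀ x : A, g*(g*x) = g*x := fun x => by rw [← mul_assoc, hg]
  have hfg' : ∀ x : A, f*(g*x) = 0 := fun x => by rw [← mul_assoc, hfg, zero_mul]
  have hgf' : ∀ x : A, g*(f*x) = 0 := fun x => by rw [← mul_assoc, hgf, zero_mul]
  set d := Ψ (Φ x + Φ y) - x - y with hd
  have E1 : ∀ t : A, G α1 α2 α3 α4 α5 α6 (g*t*g) g d = 0 := by
    intro t
    refine engine3 α1 α2 α3 α4 α5 α6 Φ Ψ hinj hΨ hΦ0 hG x y _ _ ?_
    rw [hx]; simp [G, mul_assoc, hf, hg, hfg, hgf, hf', hg', hfg', hgf']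
  have E2 : ∀ t : A, G α1 α2 α3 α4 α5 α6 g (g*t*g) d = 0 := by
    intro t
    refine engine3 α1 α2 α3 α4 α5 α6 Φ Ψ hinj hΨ hΦ0 hG x y _ _ ?_
    rw [hx]; simp [G, mul_assoc, hf, hg, hfg, hgf, hf', hg', hfg', hgf']
  have E3 : ∀ t : A, G α1 α2 α3 α4 α5 α6 g d (g*t*g) = 0 := by
    intro t
    refine engine2 α1 α2 α3 α4 α5 α6 Φ Ψ hinj hΨ hΦ0 hG x y _ _ ?_
    rw [hx]; simp [G, mul_assoc, hf, hg, hfg, hgf, hf', hg', hfg', hgf']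
  have E5 : ∀ t : A, G α1 α2 α3 α4 α5 α6 d g (g*t*g) = 0 := by
    intro t
    refine engine1 α1 α2 α3 α4 α5 α6 Φ Ψ hinj hΨ hΦ0 hG x y _ _ ?_
    rw [hx]; simp [G, mul_assoc, hf, hg, hfg, hgf, hf', hg', hfg', hgf']
  -- A21 parts : W t := g*(t*(g*(d*f)))
  have w1 : ∀ t : A, (α1+α3) • (g*(t*(g*(d*f)))) = 0 := by
    intro t
    calc (α1+α3) • (g*(t*(g*(d*f))))
        = g * (G α1 α2 α3 α4 α5 α6 (g*t*g) g d) * f := by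
          simp [G, mul_assoc, hf, hg, hfg, hgf, hf', hg', hfg', hgf', mul_add, add_mul,
            mul_smul_comm, smul_mul_assoc, add_smul]
          try module
      _ = 0 := by rw [E1 t, mul_zero, zero_mul]
  have w3 : ∀ t : A, (α2+α4) • (g*(t*(g*(d*f)))) = 0 := by
    intro t
    calc (α2+α4) • (g*(t*(g*(d*f))))
        = g * (G α1 α2 α3 α4 α5 α6 g d (g*t*g)) * f := by
          simp [G, mul_assoc, hf, hg, hfg, hgf, hf', hg', hfg', hgf', mul_add, add_mul,
            mul_smul_comm, smul_mul_assoc, add_smul]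
          try module
      _ = 0 := by rw [E3 t, mul_zero, zero_mul]
  have w5 : ∀ t : A, (α5+α6) • (g*(t*(g*(d*f)))) = 0 := by
    intro t
    calc (α5+α6) • (g*(t*(g*(d*f))))
        = g * (G α1 α2 α3 α4 α5 α6 d g (g*t*g)) * f := by
          simp [G, mul_assoc, hf, hg, hfg, hgf, hf', hg', hfg', hgf', mul_add, add_mul,
            mul_smul_comm, smul_mul_assoc, add_smul]
          try module
      _ = 0 := by rw [E5 t, mul_zero, zero_mul]
  have hW : ∀ t : A, g*(t*(g*(d*f))) = 0 := by
    intro t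
    refine smul_cancel hσ ?_
    calc (α1+α2+α3+α4+α5+α6) • (g*(t*(g*(d*f))))
        = (α1+α3) • (g*(t*(g*(d*f)))) + (α2+α4) • (g*(t*(g*(d*f))))
          + (α5+α6) • (g*(t*(g*(d*f)))) := by module
      _ = 0 := by rw [w1 t, w3 t, w5 t]; simp
  have hD21 : g*d*f = 0 := by
    have key : ∀ t : A, g * t * (g*d*f) = 0 := by
      intro t; have := hW t; simpa [mul_assoc] using this
    rcases hprime g (g*d*f) key with h | h
    · exact absurd h hg0
    · exact h
  -- A12 parts : V t := f*(d*(g*(t*g)))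
  have v1 : ∀ t : A, (α4+α6) • (f*(d*(g*(t*g)))) = 0 := by
    intro t
    calc (α4+α6) • (f*(d*(g*(t*g))))
        = f * (G α1 α2 α3 α4 α5 α6 (g*t*g) g d) * g := by
          simp [G, mul_assoc, hf, hg, hfg, hgf, hf', hg', hfg', hgf', mul_add, add_mul,
            mul_smul_comm, smul_mul_assoc, add_smul]
          try module
      _ = 0 := by rw [E1 t, mul_zero, zero_mul]
  have v3 : ∀ t : A, (α3+α5) • (f*(d*(g*(t*g)))) = 0 := by
    intro t
    calc (α3+α5) • (f*(d*(g*(t*g))))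
        = f * (G α1 α2 α3 α4 α5 α6 g d (g*t*g)) * g := by
          simp [G, mul_assoc, hf, hg, hfg, hgf, hf', hg', hfg', hgf', mul_add, add_mul,
            mul_smul_comm, smul_mul_assoc, add_smul]
          try module
      _ = 0 := by rw [E3 t, mul_zero, zero_mul]
  have v5 : ∀ t : A, (α1+α2) • (f*(d*(g*(t*g)))) = 0 := by
    intro t
    calc (α1+α2) • (f*(d*(g*(t*g))))
        = f * (G α1 α2 α3 α4 α5 α6 d g (g*t*g)) * g := by
          simp [G, mul_assoc, hf, hg, hfg, hgf, hf', hg', hfg', hgf', mul_add, add_mul,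
            mul_smul_comm, smul_mul_assoc, add_smul]
          try module
      _ = 0 := by rw [E5 t, mul_zero, zero_mul]
  have hV : ∀ t : A, f*(d*(g*(t*g))) = 0 := by
    intro t
    refine smul_cancel hσ ?_
    calc (α1+α2+α3+α4+α5+α6) • (f*(d*(g*(t*g))))
        = (α1+α2) • (f*(d*(g*(t*g)))) + (α3+α5) • (f*(d*(g*(t*g))))
          + (α4+α6) • (f*(d*(g*(t*g)))) := by module
      _ = 0 := by rw [v5 t, v3 t, v1 t]; simp
  have hD12 : f*d*g = 0 := by
    rcases hprime (f*d*g) g (fun t => by simpa [mul_assoc] using hV t) with h | h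
    · exact h
    · exact absurd h hg0
  -- A22 parts : P t := g*(t*(g*(d*g))), Q t := g*(d*(g*(t*g)))
  have p2 : ∀ t : A, (α1+α3+α5) • (g*(t*(g*(d*g)))) + (α2+α4+α6) • (g*(d*(g*(t*g)))) = 0 := by
    intro t
    calc (α1+α3+α5) • (g*(t*(g*(d*g)))) + (α2+α4+α6) • (g*(d*(g*(t*g))))
        = g * (G α1 α2 α3 α4 α5 α6 g (g*t*g) d) * g := by
          simp [G, mul_assoc, hf, hg, hfg, hgf, hf', hg', hfg', hgf', mul_add, add_mul,
            mul_smul_comm, smul_mul_assoc, add_smul]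
          try module
      _ = 0 := by rw [E2 t, mul_zero, zero_mul]
  have p3 : ∀ t : A, (α2+α4+α6) • (g*(t*(g*(d*g)))) + (α1+α3+α5) • (g*(d*(g*(t*g)))) = 0 := by
    intro t
    calc (α2+α4+α6) • (g*(t*(g*(d*g)))) + (α1+α3+α5) • (g*(d*(g*(t*g))))
        = g * (G α1 α2 α3 α4 α5 α6 g d (g*t*g)) * g := by
          simp [G, mul_assoc, hf, hg, hfg, hgf, hf', hg', hfg', hgf', mul_add, add_mul,
            mul_smul_comm, smul_mul_assoc, add_smul]
          try module
      _ = 0 := by rw [E3 t, mul_zero, zero_mul]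
  have hP : ∀ t : A, g*(t*(g*(d*g))) = 0 := by
    intro t
    have hsum0 : (α1+α2+α3+α4+α5+α6) • (g*(t*(g*(d*g))) + g*(d*(g*(t*g)))) = 0 := by
      calc (α1+α2+α3+α4+α5+α6) • (g*(t*(g*(d*g))) + g*(d*(g*(t*g))))
          = ((α1+α3+α5) • (g*(t*(g*(d*g)))) + (α2+α4+α6) • (g*(d*(g*(t*g)))))
            + ((α2+α4+α6) • (g*(t*(g*(d*g)))) + (α1+α3+α5) • (g*(d*(g*(t*g))))) := by module
        _ = 0 := by rw [p2 t, p3 t]; simp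
    have hdiff0 : (α1+α3+α5-α2-α4-α6) • (g*(t*(g*(d*g))) - g*(d*(g*(t*g)))) = 0 := by
      calc (α1+α3+α5-α2-α4-α6) • (g*(t*(g*(d*g))) - g*(d*(g*(t*g))))
          = ((α1+α3+α5) • (g*(t*(g*(d*g)))) + (α2+α4+α6) • (g*(d*(g*(t*g)))))
            - ((α2+α4+α6) • (g*(t*(g*(d*g)))) + (α1+α3+α5) • (g*(d*(g*(t*g))))) := by module
        _ = 0 := by rw [p2 t, p3 t]; simp
    have h1 := smul_cancel hσ hsum0
    have h2 := smul_cancel hγ hdiff0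
    have : (2:ℂ) • (g*(t*(g*(d*g)))) = 0 := by
      calc (2:ℂ) • (g*(t*(g*(d*g))))
          = (g*(t*(g*(d*g))) + g*(d*(g*(t*g)))) + (g*(t*(g*(d*g))) - g*(d*(g*(t*g)))) := by
            module
        _ = 0 := by rw [h1, h2]; simp
    exact smul_cancel two_ne_zero this
  have hD22 : g*d*g = 0 := by
    have key : ∀ t : A, g * t * (g*d*g) = 0 := by
      intro t; have := hP t; simpa [mul_assoc] using this
    rcases hprime g (g*d*g) key with h | h
    · exact absurd h hg0
    · exact h
  calc d = (f+g)*d*(f+g) := by rw [hfg1, one_mul, mul_one]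
    _ = f*d*f + g*d*f + (f*d*g + g*d*g) := by simp [mul_add, add_mul]
    _ = f*d*f := by rw [hD12, hD21, hD22]; simp

end K11

lemma cornersub {A : Type*} [Ring A] {d p q r s : A} (h1 : d = p*d*q) (h2 : d = r*d*s)
    (h : s*q = 0) : d = 0 := by
  calc d = p*d*q := h1
    _ = p*(r*d*s)*q := by rw [← h2]
    _ = 0 := by simp [mul_assoc, h]

lemma cornersub' {A : Type*} [Ring A] {d p q r s : A} (h1 : d = p*d*q) (h2 : d = r*d*s)
    (h : p*r = 0) : d = 0 := by
  calc d = p*d*q := h1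
    _ = p*(r*d*s)*q := by rw [← h2]
    _ = 0 := by simp [← mul_assoc, h]

section Boot

variable {A B : Type*} [Ring A] [Module ℂ A] [Ring B] [Module ℂ B]
variable (α1 α2 α3 α4 α5 α6 : ℂ) (Φ : A → B) (Ψ : B → A)

lemma engine3boot (hinj : Function.Injective Φ) (hΨ : ∀ b, Φ (Ψ b) = b)
    (hG : ∀ a b c : A, Φ (G α1 α2 α3 α4 α5 α6 a b c) = G α1 α2 α3 α4 α5 α6 (Φ a) (Φ b) (Φ c))
    (x y a b : A)
    (hboot : Φ (G α1 α2 α3 α4 α5 α6 a b x + G α1 α2 α3 α4 α5 α6 a b y)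
      = Φ (G α1 α2 α3 α4 α5 α6 a b x) + Φ (G α1 α2 α3 α4 α5 α6 a b y)) :
    G α1 α2 α3 α4 α5 α6 a b (Ψ (Φ x + Φ y) - x - y) = 0 := by
  have h1 : Φ (G α1 α2 α3 α4 α5 α6 a b (Ψ (Φ x + Φ y))) = Φ (G α1 α2 α3 α4 α5 α6 a b (x + y)) := by
    rw [hG, hΨ, G_add3, ← hG, ← hG, ← hboot, ← G_add3]
  have h2 := hinj h1
  rw [G_sub3, G_sub3, h2, G_add3]; abel

lemma engine2boot (hinj : Function.Injective Φ) (hΨ : ∀ b, Φ (Ψ b) = b)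
    (hG : ∀ a b c : A, Φ (G α1 α2 α3 α4 α5 α6 a b c) = G α1 α2 α3 α4 α5 α6 (Φ a) (Φ b) (Φ c))
    (x y a c : A)
    (hboot : Φ (G α1 α2 α3 α4 α5 α6 a x c + G α1 α2 α3 α4 α5 α6 a y c)
      = Φ (G α1 α2 α3 α4 α5 α6 a x c) + Φ (G α1 α2 α3 α4 α5 α6 a y c)) :
    G α1 α2 α3 α4 α5 α6 a (Ψ (Φ x + Φ y) - x - y) c = 0 := by
  have h1 : Φ (G α1 α2 α3 α4 α5 α6 a (Ψ (Φ x + Φ y)) c) = Φ (G α1 α2 α3 α4 α5 α6 a (x + y) c) := by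
    rw [hG, hΨ, G_add2, ← hG, ← hG, ← hboot, ← G_add2]
  have h2 := hinj h1
  rw [G_sub2, G_sub2, h2, G_add2]; abel

lemma engine1boot (hinj : Function.Injective Φ) (hΨ : ∀ b, Φ (Ψ b) = b)
    (hG : ∀ a b c : A, Φ (G α1 α2 α3 α4 α5 α6 a b c) = G α1 α2 α3 α4 α5 α6 (Φ a) (Φ b) (Φ c))
    (x y b c : A)
    (hboot : Φ (G α1 α2 α3 α4 α5 α6 x b c + G α1 α2 α3 α4 α5 α6 y b c)
      = Φ (G α1 α2 α3 α4 α5 α6 x b c) + Φ (G α1 α2 α3 α4 α5 α6 y b c)) :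
    G α1 α2 α3 α4 α5 α6 (Ψ (Φ x + Φ y) - x - y) b c = 0 := by
  have h1 : Φ (G α1 α2 α3 α4 α5 α6 (Ψ (Φ x + Φ y)) b c) = Φ (G α1 α2 α3 α4 α5 α6 (x + y) b c) := by
    rw [hG, hΨ, G_add1, ← hG, ← hG, ← hboot, ← G_add1]
  have h2 := hinj h1
  rw [G_sub1, G_sub1, h2, G_add1]; abel

end Boot

section W12

variable {A B : Type*} [Ring A] [Module ℂ A] [SMulCommClass ℂ A A] [IsScalarTower ℂ A A]
variable [Ring B] [Module ℂ B] [SMulCommClass ℂ B B] [IsScalarTower ℂ B B]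

theorem W12core (μ ν : ℂ) (hμ : μ ≠ 0) (Φ : A → B) (f g : A)
    (hf : f*f = f) (hg : g*g = g) (hfg : f*g = 0) (hgf : g*f = 0)
    (hΦ0 : Φ 0 = 0)
    (hJ : ∀ u v : A, Φ (μ•(u*v) + ν•(v*u)) = μ•(Φ u*Φ v) + ν•(Φ v*Φ u))
    (hcross1 : ∀ y, y = f*y*g → Φ (f + y) = Φ f + Φ y)
    (hcross2 : ∀ x, x = f*x*g → Φ (g + x) = Φ g + Φ x) :
    ∀ x y : A, x = f*x*g → y = f*y*g → Φ (x + y) = Φ x + Φ y := by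
  have hf' : ∀ x : A, f*(f*x) = f*x := fun x => by rw [← mul_assoc, hf]
  have hg' : ∀ x : A, g*(g*x) = g*x := fun x => by rw [← mul_assoc, hg]
  have hfg' : ∀ x : A, f*(g*x) = 0 := fun x => by rw [← mul_assoc, hfg, zero_mul]
  have hgf' : ∀ x : A, g*(f*x) = 0 := fun x => by rw [← mul_assoc, hgf, zero_mul]
  have key : ∀ x y : A, x = f*x*g → y = f*y*g → Φ (μ•(x+y)) = Φ (μ•x) + Φ (μ•y) := by
    intro x y hx hy
    have huv : (f + y) * (g + x) = x + y := by
      rw [hx, hy]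
      simp [mul_add, add_mul, mul_assoc, hf, hg, hfg, hgf, hf', hg', hfg', hgf']
      abel
    have hvu : (g + x) * (f + y) = 0 := by
      rw [hx, hy]
      simp [mul_add, add_mul, mul_assoc, hf, hg, hfg, hgf, hf', hg', hfg', hgf']
    have hfv : f * (g + x) = x := by
      rw [hx]; simp [mul_add, mul_assoc, hf, hfg, hf', hfg']
    have hvf : (g + x) * f = 0 := by
      rw [hx]; simp [add_mul, mul_assoc, hgf, hgf']
    have hug : (f + y) * g = y := by
      rw [hy]; simp [add_mul, mul_assoc, hfg, hg, hg']
    have hgu : g * (f + y) = 0 := by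
      rw [hy]; simp [mul_add, mul_assoc, hgf, hgf']
    have hyx : y * x = 0 := by
      rw [hx, hy]; simp [mul_assoc, hgf', hgf]
    have hxy : x * y = 0 := by
      rw [hx, hy]; simp [mul_assoc, hgf', hgf]
    have h1 : Φ (μ•(x+y)) = μ•(Φ (f+y) * Φ (g+x)) + ν•(Φ (g+x) * Φ (f+y)) := by
      have h := hJ (f+y) (g+x); rw [huv, hvu] at h; simpa using h
    have h2 : Φ (μ•x) = μ•(Φ f * Φ (g+x)) + ν•(Φ (g+x) * Φ f) := by
      have h := hJ f (g+x); rw [hfv, hvf] at h; simpa using h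
    have h3 : Φ (μ•y) = μ•(Φ (f+y) * Φ g) + ν•(Φ g * Φ (f+y)) := by
      have h := hJ (f+y) g; rw [hug, hgu] at h; simpa using h
    have h4 : μ•(Φ f * Φ g) + ν•(Φ g * Φ f) = 0 := by
      have h := hJ f g; rw [hfg, hgf] at h; simpa [hΦ0] using h.symm
    have h5 : μ•(Φ y * Φ x) + ν•(Φ x * Φ y) = 0 := by
      have h := hJ y x; rw [hyx, hxy] at h; simpa [hΦ0] using h.symm
    rw [h1, h2, h3, hcross1 y hy, hcross2 x hx]
    calc μ•((Φ f + Φ y) * (Φ g + Φ x)) + ν•((Φ g + Φ x) * (Φ f + Φ y))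
        = (μ•(Φ f * (Φ g + Φ x)) + ν•((Φ g + Φ x) * Φ f))
          + (μ•((Φ f + Φ y) * Φ g) + ν•(Φ g * (Φ f + Φ y)))
          + ((μ•(Φ y * Φ x) + ν•(Φ x * Φ y)) - (μ•(Φ f * Φ g) + ν•(Φ g * Φ f))) := by
            simp only [mul_add, add_mul, smul_add]; abel
      _ = (μ•(Φ f * (Φ g + Φ x)) + ν•((Φ g + Φ x) * Φ f))
          + (μ•((Φ f + Φ y) * Φ g) + ν•(Φ g * (Φ f + Φ y))) := by rw [h4, h5]; abel
  intro x y hx hy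
  have hx' : μ⁻¹•x = f*(μ⁻¹•x)*g := by rw [mul_smul_comm, smul_mul_assoc, ← hx]
  have hy' : μ⁻¹•y = f*(μ⁻¹•y)*g := by rw [mul_smul_comm, smul_mul_assoc, ← hy]
  have hxx : μ•(μ⁻¹•x) = x := by rw [smul_smul, mul_inv_cancel₀ hμ, one_smul]
  have hyy : μ•(μ⁻¹•y) = y := by rw [smul_smul, mul_inv_cancel₀ hμ, one_smul]
  have h := key (μ⁻¹•x) (μ⁻¹•y) hx' hy'
  rw [smul_add, hxx, hyy] at h
  exact h

end W12

section W11

variable {A B : Type*} [Ring A] [Module ℂ A] [SMulCommClass ℂ A A] [IsScalarTower ℂ A A]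
variable [Ring B] [Module ℂ B]
variable (α1 α2 α3 α4 α5 α6 : ℂ) (Φ : A → B) (Ψ : B → A)

theorem W11core (hσ : α1+α2+α3+α4+α5+α6 ≠ 0)
    (hprime : ∀ x y : A, (∀ t : A, x * t * y = 0) → x = 0 ∨ y = 0)
    (f g : A) (hf : f*f = f) (hg : g*g = g) (hfg : f*g = 0) (hgf : g*f = 0)
    (hg0 : g ≠ 0)
    (hinj : Function.Injective Φ) (hΨ : ∀ b, Φ (Ψ b) = b)
    (hG : ∀ a b c : A, Φ (G α1 α2 α3 α4 α5 α6 a b c) = G α1 α2 α3 α4 α5 α6 (Φ a) (Φ b) (Φ c))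
    (hKff : ∀ x y : A, x = f*x*f →
      Ψ (Φ x + Φ y) - x - y = f * (Ψ (Φ x + Φ y) - x - y) * f)
    (hW12 : ∀ u v : A, u = f*u*g → v = f*v*g → Φ (u + v) = Φ u + Φ v) :
    ∀ x y : A, x = f*x*f → y = f*y*f → Φ (x + y) = Φ x + Φ y := by
  have hf' : ∀ x : A, f*(f*x) = f*x := fun x => by rw [← mul_assoc, hf]
  have hg' : ∀ x : A, g*(g*x) = g*x := fun x => by rw [← mul_assoc, hg]
  have hfg' : ∀ x : A, f*(g*x) = 0 := fun x => by rw [← mul_assoc, hfg, zero_mul]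
  have hgf' : ∀ x : A, g*(f*x) = 0 := fun x => by rw [← mul_assoc, hgf, zero_mul]
  intro x y hx hy
  set d := Ψ (Φ x + Φ y) - x - y with hd
  have hdff : d = f*d*f := hKff x y hx
  -- corner membership of test outputs
  have m4 : ∀ z : A, z = f*z*f → ∀ t : A,
      G α1 α2 α3 α4 α5 α6 z (f*t*g) g = f*(G α1 α2 α3 α4 α5 α6 z (f*t*g) g)*g := by
    intro z hz t; rw [hz]
    simp [G, mul_assoc, hf, hg, hfg, hgf, hf', hg', hfg', hgf', mul_add, add_mul,
      mul_smul_comm, smul_mul_assoc]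
  have m10 : ∀ z : A, z = f*z*f → ∀ t : A,
      G α1 α2 α3 α4 α5 α6 (f*t*g) z g = f*(G α1 α2 α3 α4 α5 α6 (f*t*g) z g)*g := by
    intro z hz t; rw [hz]
    simp [G, mul_assoc, hf, hg, hfg, hgf, hf', hg', hfg', hgf', mul_add, add_mul,
      mul_smul_comm, smul_mul_assoc]
  have m5 : ∀ z : A, z = f*z*f → ∀ t : A,
      G α1 α2 α3 α4 α5 α6 g z (f*t*g) = f*(G α1 α2 α3 α4 α5 α6 g z (f*t*g))*g := by
    intro z hz t; rw [hz]
    simp [G, mul_assoc, hf, hg, hfg, hgf, hf', hg', hfg', hgf', mul_add, add_mul,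
      mul_smul_comm, smul_mul_assoc]
  have m2 : ∀ z : A, z = f*z*f → ∀ t : A,
      G α1 α2 α3 α4 α5 α6 g (f*t*g) z = f*(G α1 α2 α3 α4 α5 α6 g (f*t*g) z)*g := by
    intro z hz t; rw [hz]
    simp [G, mul_assoc, hf, hg, hfg, hgf, hf', hg', hfg', hgf', mul_add, add_mul,
      mul_smul_comm, smul_mul_assoc]
  have m7 : ∀ z : A, z = f*z*f → ∀ t : A,
      G α1 α2 α3 α4 α5 α6 f (f*t*g) z = f*(G α1 α2 α3 α4 α5 α6 f (f*t*g) z)*g := by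
    intro z hz t; rw [hz]
    simp [G, mul_assoc, hf, hg, hfg, hgf, hf', hg', hfg', hgf', mul_add, add_mul,
      mul_smul_comm, smul_mul_assoc]
  -- the five boot test equations
  have e4 : ∀ t : A, G α1 α2 α3 α4 α5 α6 d (f*t*g) g = 0 := by
    intro t
    exact engine1boot α1 α2 α3 α4 α5 α6 Φ Ψ hinj hΨ hG x y _ _
      (hW12 _ _ (m4 x hx t) (m4 y hy t))
  have e10 : ∀ t : A, G α1 α2 α3 α4 α5 α6 (f*t*g) d g = 0 := by
    intro t
    exact engine2boot α1 α2 α3 α4 α5 α6 Φ Ψ hinj hΨ hG x y _ _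
      (hW12 _ _ (m10 x hx t) (m10 y hy t))
  have e5 : ∀ t : A, G α1 α2 α3 α4 α5 α6 g d (f*t*g) = 0 := by
    intro t
    exact engine2boot α1 α2 α3 α4 α5 α6 Φ Ψ hinj hΨ hG x y _ _
      (hW12 _ _ (m5 x hx t) (m5 y hy t))
  have e2 : ∀ t : A, G α1 α2 α3 α4 α5 α6 g (f*t*g) d = 0 := by
    intro t
    exact engine3boot α1 α2 α3 α4 α5 α6 Φ Ψ hinj hΨ hG x y _ _
      (hW12 _ _ (m2 x hx t) (m2 y hy t))
  have e7 : ∀ t : A, G α1 α2 α3 α4 α5 α6 f (f*t*g) d = 0 := by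
    intro t
    exact engine3boot α1 α2 α3 α4 α5 α6 Φ Ψ hinj hΨ hG x y _ _
      (hW12 _ _ (m7 x hx t) (m7 y hy t))
  -- extractions
  have x4 : ∀ t : A, α1 • (f*(d*(f*(t*g)))) = 0 := by
    intro t
    calc α1 • (f*(d*(f*(t*g))))
        = G α1 α2 α3 α4 α5 α6 d (f*t*g) g := by
          rw [hdff]
          simp [G, mul_assoc, hf, hg, hfg, hgf, hf', hg', hfg', hgf', mul_add, add_mul,
            mul_smul_comm, smul_mul_assoc]
      _ = 0 := e4 t
  have x10 : ∀ t : A, α3 • (f*(d*(f*(t*g)))) = 0 := by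
    intro t
    calc α3 • (f*(d*(f*(t*g))))
        = G α1 α2 α3 α4 α5 α6 (f*t*g) d g := by
          rw [hdff]
          simp [G, mul_assoc, hf, hg, hfg, hgf, hf', hg', hfg', hgf', mul_add, add_mul,
            mul_smul_comm, smul_mul_assoc]
      _ = 0 := e10 t
  have x5 : ∀ t : A, α5 • (f*(d*(f*(t*g)))) = 0 := by
    intro t
    calc α5 • (f*(d*(f*(t*g))))
        = G α1 α2 α3 α4 α5 α6 g d (f*t*g) := by
          rw [hdff]
          simp [G, mul_assoc, hf, hg, hfg, hgf, hf', hg', hfg', hgf', mul_add, add_mul,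
            mul_smul_comm, smul_mul_assoc]
      _ = 0 := e5 t
  have x2 : ∀ t : A, α6 • (f*(d*(f*(t*g)))) = 0 := by
    intro t
    calc α6 • (f*(d*(f*(t*g))))
        = G α1 α2 α3 α4 α5 α6 g (f*t*g) d := by
          rw [hdff]
          simp [G, mul_assoc, hf, hg, hfg, hgf, hf', hg', hfg', hgf', mul_add, add_mul,
            mul_smul_comm, smul_mul_assoc]
      _ = 0 := e2 t
  have x7 : ∀ t : A, (α2+α4) • (f*(d*(f*(t*g)))) = 0 := by
    intro t
    calc (α2+α4) • (f*(d*(f*(t*g))))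
        = G α1 α2 α3 α4 α5 α6 f (f*t*g) d := by
          rw [hdff]
          simp [G, mul_assoc, hf, hg, hfg, hgf, hf', hg', hfg', hgf', mul_add, add_mul,
            mul_smul_comm, smul_mul_assoc, add_smul]
          try module
      _ = 0 := e7 t
  have hX : ∀ t : A, f*(d*(f*(t*g))) = 0 := by
    intro t
    refine smul_cancel hσ ?_
    calc (α1+α2+α3+α4+α5+α6) • (f*(d*(f*(t*g))))
        = α1 • (f*(d*(f*(t*g)))) + (α2+α4) • (f*(d*(f*(t*g))))
          + α3 • (f*(d*(f*(t*g)))) + α5 • (f*(d*(f*(t*g)))) + α6 • (f*(d*(f*(t*g)))) := by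
          module
      _ = 0 := by rw [x4 t, x7 t, x10 t, x5 t, x2 t]; simp
  have hdf : f*d*f = 0 := by
    rcases hprime (f*d*f) g (fun t => by simpa [mul_assoc] using hX t) with h | h
    · exact h
    · exact absurd h hg0
  have hd0 : d = 0 := by rw [hdff, hdf]
  have hs : Ψ (Φ x + Φ y) = x + y := by
    have := hd0; rw [hd] at this
    rwa [sub_sub, sub_eq_zero] at this
  calc Φ (x + y) = Φ (Ψ (Φ x + Φ y)) := by rw [hs]
    _ = Φ x + Φ y := hΨ _

end W11

lemma G_eq_star {R : Type*} [Ring R] [Module ℂ R] [StarRing R] (α1 α2 α3 α4 α5 α6 : ℂ)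
    (a b c : R) :
    G α1 α2 α3 α4 α5 α6 a b c = starTripleSum α1 α2 α3 α4 α5 α6 a (star b) c := by
  simp [G, starTripleSum, star_star]

end S14

open S14 in
theorem stmt14 {A B : Type*} [Ring A] [Algebra ℂ A] [StarRing A]
    [Ring B] [Algebra ℂ B] [StarRing B]
    (α1 α2 α3 α4 α5 α6 : ℂ)
    (hsum : α1 + α2 + α3 + α4 + α5 + α6 ≠ 0)
    (hprime : ∀ x y : A, (∀ t : A, x * t * y = 0) → x = 0 ∨ y = 0)
    (e : A) (hestar : star e = e) (heidem : e * e = e) (he0 : e ≠ 0) (he1 : e ≠ 1)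
    (Φ : A → B) (hbij : Function.Bijective Φ)
    (hΦ : ∀ a b c : A, Φ (starTripleSum α1 α2 α3 α4 α5 α6 a b c) =
      starTripleSum α1 α2 α3 α4 α5 α6 (Φ a) (Φ b) (Φ c))
    (hp1 : star (Φ 1) = Φ 1) (hp2 : Φ 1 * Φ 1 = Φ 1)
    (hgamma : α1 + α3 + α5 - α2 - α4 - α6 ≠ 0)
    (hsc : ∀ a : A, Φ ((α1 + α3 + α5 - α2 - α4 - α6) • a) =
      (α1 + α3 + α5 - α2 - α4 - α6) • Φ a) :
    (∀ b c : A, Φ (b * c - c * b) = Φ b * Φ c - Φ c * Φ b) ∧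
    (∀ a b : A, Φ (a + b) = Φ a + Φ b) ∧
    (∀ a b : A, Φ (a * b) = Φ a * Φ b) ∧
    (∀ a : A, Φ (star a) = star (Φ a)) := by
  obtain ⟨hinj, hsurj⟩ := hbij
  set Ψ : B → A := Function.surjInv hsurj with hΨdef
  have hΨ : ∀ b : B, Φ (Ψ b) = b := fun b => Function.surjInv_eq hsurj b
  -- idempotent facts
  have hgg : (1-e)*(1-e) = (1-e) := by rw [mul_sub, mul_one, sub_mul, one_mul, heidem]; abel
  have hfg : e*(1-e) = 0 := by rw [mul_sub, mul_one, heidem, sub_self]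
  have hgf : (1-e)*e = 0 := by rw [sub_mul, one_mul, heidem, sub_self]
  have hfg1 : e + (1-e) = 1 := by abel
  have hgf1 : (1-e) + e = 1 := by abel
  have hg0 : (1-e) ≠ 0 := fun h => he1 (sub_eq_zero.mp h).symm
  have hf' : ∀ x : A, e*(e*x) = e*x := fun x => by rw [← mul_assoc, heidem]
  have hg' : ∀ x : A, (1-e)*((1-e)*x) = (1-e)*x := fun x => by rw [← mul_assoc, hgg]
  have hfg' : ∀ x : A, e*((1-e)*x) = 0 := fun x => by rw [← mul_assoc, hfg, zero_mul]
  have hgf' : ∀ x : A, (1-e)*(e*x) = 0 := fun x => by rw [← mul_assoc, hgf, zero_mul]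
  -- Φ 0 = 0
  have hΦ0 : Φ 0 = 0 := by
    have h := hΦ 0 (Ψ 0) 0
    have hz : Φ (Ψ 0) = 0 := hΨ 0
    simpa [starTripleSum, hz] using h
  -- Φ 1 = 1
  have hone : Φ 1 = 1 := by
    have hu : Φ (Ψ 1) = 1 := hΨ 1
    have h1 := hΦ 1 (Ψ 1) 1
    have h2 := hΦ 1 1 1
    have ea : starTripleSum α1 α2 α3 α4 α5 α6 (1:A) (Ψ 1) 1
        = (α1+α2+α3+α4+α5+α6) • star (Ψ 1) := by
      simp [starTripleSum]; try module
    have eb : starTripleSum α1 α2 α3 α4 α5 α6 (Φ 1) (Φ (Ψ 1)) (Φ 1)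
        = (α1+α2+α3+α4+α5+α6) • (Φ 1) := by
      rw [hu]; simp [starTripleSum, hp2]; try module
    have ec : starTripleSum α1 α2 α3 α4 α5 α6 (1:A) 1 1
        = (α1+α2+α3+α4+α5+α6) • (1:A) := by
      simp [starTripleSum]; try module
    have ed : starTripleSum α1 α2 α3 α4 α5 α6 (Φ 1) (Φ 1) (Φ 1)
        = (α1+α2+α3+α4+α5+α6) • (Φ 1) := by
      simp [starTripleSum, hp1, hp2]; try module
    rw [ea, eb] at h1
    rw [ec, ed] at h2
    have h6 := hinj (h1.trans h2.symm)
    have h7 : star (Ψ 1) = (1:A) := by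
      have h8 : (α1+α2+α3+α4+α5+α6) • (star (Ψ 1) - 1) = 0 := by
        rw [smul_sub, h6, sub_self]
      have h9 := smul_cancel hsum h8
      rwa [sub_eq_zero] at h9
    have hΨ1 : Ψ (1:B) = 1 := by rw [← star_star (Ψ 1), h7, star_one]
    rw [← hΨ1]; exact hu
  -- σ-homogeneity
  have hσhom : ∀ x : A, Φ ((α1+α2+α3+α4+α5+α6) • x) = (α1+α2+α3+α4+α5+α6) • Φ x := by
    intro x
    have h := hΦ x 1 1
    have ea : starTripleSum α1 α2 α3 α4 α5 α6 x 1 1 = (α1+α2+α3+α4+α5+α6) • x := by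
      simp [starTripleSum]; try module
    have eb : starTripleSum α1 α2 α3 α4 α5 α6 (Φ x) (Φ 1) (Φ 1)
        = (α1+α2+α3+α4+α5+α6) • Φ x := by
      rw [hone]; simp [starTripleSum]; try module
    rw [ea, eb] at h
    exact h
  -- star preservation
  have hstar : ∀ a : A, Φ (star a) = star (Φ a) := by
    intro a
    have h := hΦ 1 a 1
    have ea : starTripleSum α1 α2 α3 α4 α5 α6 (1:A) a 1 = (α1+α2+α3+α4+α5+α6) • star a := by
      simp [starTripleSum]; try module
    have eb : starTripleSum α1 α2 α3 α4 α5 α6 (Φ 1) (Φ a) (Φ 1)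
        = (α1+α2+α3+α4+α5+α6) • star (Φ a) := by
      rw [hone]; simp [starTripleSum]; try module
    rw [ea, eb, hσhom] at h
    have h8 : (α1+α2+α3+α4+α5+α6) • (Φ (star a) - star (Φ a)) = 0 := by
      rw [smul_sub, h, sub_self]
    have h9 := smul_cancel hsum h8
    rwa [sub_eq_zero] at h9
  -- G preservation
  have hG : ∀ a b c : A, Φ (G α1 α2 α3 α4 α5 α6 a b c)
      = G α1 α2 α3 α4 α5 α6 (Φ a) (Φ b) (Φ c) := by
    intro a b c
    calc Φ (G α1 α2 α3 α4 α5 α6 a b c)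
        = Φ (starTripleSum α1 α2 α3 α4 α5 α6 a (star b) c) := by rw [G_eq_star]
      _ = starTripleSum α1 α2 α3 α4 α5 α6 (Φ a) (Φ (star b)) (Φ c) := hΦ a (star b) c
      _ = starTripleSum α1 α2 α3 α4 α5 α6 (Φ a) (star (Φ b)) (Φ c) := by rw [hstar]
      _ = G α1 α2 α3 α4 α5 α6 (Φ a) (Φ b) (Φ c) := (G_eq_star α1 α2 α3 α4 α5 α6 _ _ _).symm
  -- the (μ,ν) Jordan-type identity
  have hJ : ∀ u v : A, Φ ((α1+α3+α5)•(u*v) + (α2+α4+α6)•(v*u))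
      = (α1+α3+α5)•(Φ u * Φ v) + (α2+α4+α6)•(Φ v * Φ u) := by
    intro u v
    have h := hG 1 u v
    have ea : G α1 α2 α3 α4 α5 α6 (1:A) u v = (α1+α3+α5)•(u*v) + (α2+α4+α6)•(v*u) := by
      simp [G]; try module
    have eb : G α1 α2 α3 α4 α5 α6 (1:B) (Φ u) (Φ v)
        = (α1+α3+α5)•(Φ u * Φ v) + (α2+α4+α6)•(Φ v * Φ u) := by
      simp [G]; try module
    rw [ea, hone, eb] at h
    exact h
  -- K-lemma instantiations
  have Kfg : ∀ x y : A, x = e*x*(1-e) →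
      Ψ (Φ x + Φ y) - x - y = e * (Ψ (Φ x + Φ y) - x - y) * (1-e) :=
    fun x y hx => K12 α1 α2 α3 α4 α5 α6 Φ Ψ hsum hgamma hprime e (1-e) heidem hgg hfg hgf
      hfg1 he0 hg0 hinj hΨ hΦ0 hG x y hx
  have Kgf : ∀ x y : A, x = (1-e)*x*e →
      Ψ (Φ x + Φ y) - x - y = (1-e) * (Ψ (Φ x + Φ y) - x - y) * e :=
    fun x y hx => K12 α1 α2 α3 α4 α5 α6 Φ Ψ hsum hgamma hprime (1-e) e hgg heidem hgf hfg
      hgf1 hg0 he0 hinj hΨ hΦ0 hG x y hx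
  have Kff : ∀ x y : A, x = e*x*e →
      Ψ (Φ x + Φ y) - x - y = e * (Ψ (Φ x + Φ y) - x - y) * e :=
    fun x y hx => K11 α1 α2 α3 α4 α5 α6 Φ Ψ hsum hgamma hprime e (1-e) heidem hgg hfg hgf
      hfg1 he0 hg0 hinj hΨ hΦ0 hG x y hx
  have Kgg : ∀ x y : A, x = (1-e)*x*(1-e) →
      Ψ (Φ x + Φ y) - x - y = (1-e) * (Ψ (Φ x + Φ y) - x - y) * (1-e) :=
    fun x y hx => K11 α1 α2 α3 α4 α5 α6 Φ Ψ hsum hgamma hprime (1-e) e hgg heidem hgf hfg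
      hgf1 hg0 he0 hinj hΨ hΦ0 hG x y hx
  -- pair helpers
  have dEq : ∀ x y : A, Ψ (Φ y + Φ x) - y - x = Ψ (Φ x + Φ y) - x - y := by
    intro x y; rw [add_comm (Φ y) (Φ x)]; abel
  have pairAdd : ∀ x y : A, Ψ (Φ x + Φ y) - x - y = 0 → Φ (x + y) = Φ x + Φ y := by
    intro x y h
    have hs : Ψ (Φ x + Φ y) = x + y := by rwa [sub_sub, sub_eq_zero] at h
    rw [← hs]; exact hΨ _
  have pairOfK : ∀ (x y p q r s : A),
      (Ψ (Φ x + Φ y) - x - y = p * (Ψ (Φ x + Φ y) - x - y) * q) →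
      (Ψ (Φ y + Φ x) - y - x = r * (Ψ (Φ y + Φ x) - y - x) * s) →
      (s * q = 0 ∨ p * r = 0) → Φ (x + y) = Φ x + Φ y := by
    intro x y p q r s h1 h2 hor
    rw [dEq x y] at h2
    refine pairAdd x y ?_
    rcases hor with h | h
    · exact cornersub h1 h2 h
    · exact cornersub' h1 h2 h
  -- corner memberships
  have meme : e = e*e*e := by rw [heidem, heidem]
  have memg : (1-e) = (1-e)*(1-e)*(1-e) := by rw [hgg, hgg]
  have memFF : ∀ z : A, e*z*e = e*(e*z*e)*e := fun z => by
    simp [mul_assoc, hf', heidem]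
  have memFG : ∀ z : A, e*z*(1-e) = e*(e*z*(1-e))*(1-e) := fun z => by
    simp [mul_assoc, hf', hg', hgg]
  have memGF : ∀ z : A, (1-e)*z*e = (1-e)*((1-e)*z*e)*e := fun z => by
    simp [mul_assoc, hg', hf', heidem]
  have memGG : ∀ z : A, (1-e)*z*(1-e) = (1-e)*((1-e)*z*(1-e))*(1-e) := fun z => by
    simp [mul_assoc, hg', hgg]
  -- cross-corner additivity
  have addFF_FG : ∀ x y : A, x = e*x*e → y = e*y*(1-e) → Φ (x + y) = Φ x + Φ y := by
    intro x y hx hy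
    exact pairOfK x y e e e (1-e) (Kff x y hx) (Kfg y x hy) (Or.inl hgf)
  have addGG_FG : ∀ x y : A, x = (1-e)*x*(1-e) → y = e*y*(1-e) → Φ (x + y) = Φ x + Φ y := by
    intro x y hx hy
    exact pairOfK x y (1-e) (1-e) e (1-e) (Kgg x y hx) (Kfg y x hy) (Or.inr hgf)
  have addGG_GF : ∀ x y : A, x = (1-e)*x*(1-e) → y = (1-e)*y*e → Φ (x + y) = Φ x + Φ y := by
    intro x y hx hy
    exact pairOfK x y (1-e) (1-e) (1-e) e (Kgg x y hx) (Kgf y x hy) (Or.inl hfg)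
  have addFF_GF : ∀ x y : A, x = e*x*e → y = (1-e)*y*e → Φ (x + y) = Φ x + Φ y := by
    intro x y hx hy
    exact pairOfK x y e e (1-e) e (Kff x y hx) (Kgf y x hy) (Or.inr hfg)
  have addGF_GG : ∀ x y : A, x = (1-e)*x*e → y = (1-e)*y*(1-e) → Φ (x + y) = Φ x + Φ y := by
    intro x y hx hy
    exact pairOfK x y (1-e) e (1-e) (1-e) (Kgf x y hx) (Kgg y x hy) (Or.inl hgf)
  have addFF_GG : ∀ x y : A, x = e*x*e → y = (1-e)*y*(1-e) → Φ (x + y) = Φ x + Φ y := by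
    intro x y hx hy
    exact pairOfK x y e e (1-e) (1-e) (Kff x y hx) (Kgg y x hy) (Or.inl hgf)
  have addFG_GG : ∀ x y : A, x = e*x*(1-e) → y = (1-e)*y*(1-e) → Φ (x + y) = Φ x + Φ y := by
    intro x y hx hy
    exact pairOfK x y e (1-e) (1-e) (1-e) (Kfg x y hx) (Kgg y x hy) (Or.inr hfg)
  -- within-corner additivity, off-diagonal
  have hW12add : ∀ u v : A, u = e*u*(1-e) → v = e*v*(1-e) → Φ (u + v) = Φ u + Φ v := by
    have hcross1 : ∀ y : A, y = e*y*(1-e) → Φ (e + y) = Φ e + Φ y := by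
      intro y hy; exact addFF_FG e y meme hy
    have hcross2 : ∀ x : A, x = e*x*(1-e) → Φ ((1-e) + x) = Φ (1-e) + Φ x := by
      intro x hx; exact addGG_FG (1-e) x memg hx
    by_cases hμ : (α1+α3+α5) = 0
    · have hν : (α2+α4+α6) ≠ 0 := by
        intro h; apply hsum
        have : α1+α2+α3+α4+α5+α6 = (α1+α3+α5) + (α2+α4+α6) := by ring
        rw [this, hμ, h, add_zero]
      refine W12core (α2+α4+α6) (α1+α3+α5) hν Φ e (1-e) heidem hgg hfg hgf hΦ0 ?_
        hcross1 hcross2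
      intro u v
      have h := hJ v u
      have h1 : (α1+α3+α5)•(v*u) + (α2+α4+α6)•(u*v)
          = (α2+α4+α6)•(u*v) + (α1+α3+α5)•(v*u) := by abel
      have h2 : (α1+α3+α5)•(Φ v * Φ u) + (α2+α4+α6)•(Φ u * Φ v)
          = (α2+α4+α6)•(Φ u * Φ v) + (α1+α3+α5)•(Φ v * Φ u) := by abel
      rw [h1, h2] at h
      exact h
    · exact W12core (α1+α3+α5) (α2+α4+α6) hμ Φ e (1-e) heidem hgg hfg hgf hΦ0 hJ
        hcross1 hcross2
  have hW21add : ∀ u v : A, u = (1-e)*u*e → v = (1-e)*v*e → Φ (u + v) = Φ u + Φ v := by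
    have hcross1 : ∀ y : A, y = (1-e)*y*e → Φ ((1-e) + y) = Φ (1-e) + Φ y := by
      intro y hy; exact addGG_GF (1-e) y memg hy
    have hcross2 : ∀ x : A, x = (1-e)*x*e → Φ (e + x) = Φ e + Φ x := by
      intro x hx; exact addFF_GF e x meme hx
    by_cases hμ : (α1+α3+α5) = 0
    · have hν : (α2+α4+α6) ≠ 0 := by
        intro h; apply hsum
        have : α1+α2+α3+α4+α5+α6 = (α1+α3+α5) + (α2+α4+α6) := by ring
        rw [this, hμ, h, add_zero]
      refine W12core (α2+α4+α6) (α1+α3+α5) hν Φ (1-e) e hgg heidem hgf hfg hΦ0 ?_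
        hcross1 hcross2
      intro u v
      have h := hJ v u
      have h1 : (α1+α3+α5)•(v*u) + (α2+α4+α6)•(u*v)
          = (α2+α4+α6)•(u*v) + (α1+α3+α5)•(v*u) := by abel
      have h2 : (α1+α3+α5)•(Φ v * Φ u) + (α2+α4+α6)•(Φ u * Φ v)
          = (α2+α4+α6)•(Φ u * Φ v) + (α1+α3+α5)•(Φ v * Φ u) := by abel
      rw [h1, h2] at h
      exact h
    · exact W12core (α1+α3+α5) (α2+α4+α6) hμ Φ (1-e) e hgg heidem hgf hfg hΦ0 hJ
        hcross1 hcross2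
  -- within-corner additivity, diagonal
  have hW11add : ∀ x y : A, x = e*x*e → y = e*y*e → Φ (x + y) = Φ x + Φ y :=
    W11core α1 α2 α3 α4 α5 α6 Φ Ψ hsum hprime e (1-e) heidem hgg hfg hgf hg0 hinj hΨ hG
      Kff hW12add
  have hW22add : ∀ x y : A, x = (1-e)*x*(1-e) → y = (1-e)*y*(1-e) → Φ (x + y) = Φ x + Φ y :=
    W11core α1 α2 α3 α4 α5 α6 Φ Ψ hsum hprime (1-e) e hgg heidem hgf hfg he0 hinj hΨ hG
      Kgg hW21add
  -- triple and quadruple sums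
  have Q3a : ∀ p r s : A, p = e*p*e → r = (1-e)*r*e → s = (1-e)*s*(1-e) →
      Φ (p + (r + s)) = Φ p + (Φ r + Φ s) := by
    intro p r s hp hr hs
    have hrs := addGF_GG r s hr hs
    have hps := addFF_GG p s hp hs
    have hB := Kff p (r+s) hp
    have hA := Kgf r (p+s) hr
    have hargs : Φ r + Φ (p + s) = Φ p + Φ (r + s) := by rw [hrs, hps]; abel
    have hdd : Ψ (Φ r + Φ (p+s)) - r - (p+s) = Ψ (Φ p + Φ (r+s)) - p - (r+s) := by
      rw [hargs]; abel
    rw [hdd] at hA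
    have h0 := cornersub' hB hA hfg
    exact (pairAdd p (r+s) h0).trans (by rw [hrs])
  have Q3b : ∀ p q s : A, p = e*p*e → q = e*q*(1-e) → s = (1-e)*s*(1-e) →
      Φ (p + (q + s)) = Φ p + (Φ q + Φ s) := by
    intro p q s hp hq hs
    have hqs := addFG_GG q s hq hs
    have hps := addFF_GG p s hp hs
    have hB := Kff p (q+s) hp
    have hA := Kfg q (p+s) hq
    have hargs : Φ q + Φ (p + s) = Φ p + Φ (q + s) := by rw [hqs, hps]; abel
    have hdd : Ψ (Φ q + Φ (p+s)) - q - (p+s) = Ψ (Φ p + Φ (q+s)) - p - (q+s) := by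
      rw [hargs]; abel
    rw [hdd] at hA
    have h0 := cornersub hB hA hgf
    exact (pairAdd p (q+s) h0).trans (by rw [hqs])
  have Q4 : ∀ p q r s : A, p = e*p*e → q = e*q*(1-e) → r = (1-e)*r*e →
      s = (1-e)*s*(1-e) → Φ (q + (p + (r + s))) = Φ q + (Φ p + (Φ r + Φ s)) := by
    intro p q r s hp hq hr hs
    have hA := Kfg q (p + (r+s)) hq
    have hB := Kgf r (p + (q+s)) hr
    have hargs : Φ r + Φ (p + (q+s)) = Φ q + Φ (p + (r+s)) := by
      rw [Q3b p q s hp hq hs, Q3a p r s hp hr hs]; abel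
    have hdd : Ψ (Φ r + Φ (p+(q+s))) - r - (p+(q+s))
        = Ψ (Φ q + Φ (p+(r+s))) - q - (p+(r+s)) := by
      rw [hargs]; abel
    rw [hdd] at hB
    have h0 := cornersub hA hB hfg
    exact (pairAdd q (p+(r+s)) h0).trans (by rw [Q3a p r s hp hr hs])
  have hsum4 : ∀ z : A, Φ z
      = Φ (e*z*(1-e)) + (Φ (e*z*e) + (Φ ((1-e)*z*e) + Φ ((1-e)*z*(1-e)))) := by
    intro z
    have hdz : z = e*z*(1-e) + (e*z*e + ((1-e)*z*e + (1-e)*z*(1-e))) := by noncomm_ring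
    calc Φ z = Φ (e*z*(1-e) + (e*z*e + ((1-e)*z*e + (1-e)*z*(1-e)))) := by rw [← hdz]
      _ = _ := Q4 (e*z*e) (e*z*(1-e)) ((1-e)*z*e) ((1-e)*z*(1-e))
            (memFF z) (memFG z) (memGF z) (memGG z)
  -- full additivity
  have hadd : ∀ x y : A, Φ (x + y) = Φ x + Φ y := by
    intro x y
    have s11 : Φ (e*(x+y)*e) = Φ (e*x*e) + Φ (e*y*e) := by
      rw [show e*(x+y)*e = e*x*e + e*y*e from by noncomm_ring]
      exact hW11add _ _ (memFF x) (memFF y)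
    have s12 : Φ (e*(x+y)*(1-e)) = Φ (e*x*(1-e)) + Φ (e*y*(1-e)) := by
      rw [show e*(x+y)*(1-e) = e*x*(1-e) + e*y*(1-e) from by noncomm_ring]
      exact hW12add _ _ (memFG x) (memFG y)
    have s21 : Φ ((1-e)*(x+y)*e) = Φ ((1-e)*x*e) + Φ ((1-e)*y*e) := by
      rw [show (1-e)*(x+y)*e = (1-e)*x*e + (1-e)*y*e from by noncomm_ring]
      exact hW21add _ _ (memGF x) (memGF y)
    have s22 : Φ ((1-e)*(x+y)*(1-e)) = Φ ((1-e)*x*(1-e)) + Φ ((1-e)*y*(1-e)) := by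
      rw [show (1-e)*(x+y)*(1-e) = (1-e)*x*(1-e) + (1-e)*y*(1-e) from by noncomm_ring]
      exact hW22add _ _ (memGG x) (memGG y)
    rw [hsum4 (x+y), hsum4 x, hsum4 y, s11, s12, s21, s22]
    abel
  -- subtraction
  have hsub : ∀ x y : A, Φ (x - y) = Φ x - Φ y := by
    intro x y
    have h := hadd (x - y) y
    rw [show x - y + y = x from by abel] at h
    exact eq_sub_of_add_eq h.symm
  -- commutator
  have hcommAll : ∀ b c : A, Φ (b * c - c * b) = Φ b * Φ c - Φ c * Φ b := by
    intro b c
    have h1 := hJ b c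
    have h2 := hJ c b
    have key : ((α1+α3+α5)•(b*c) + (α2+α4+α6)•(c*b))
        - ((α1+α3+α5)•(c*b) + (α2+α4+α6)•(b*c))
        = (α1 + α3 + α5 - α2 - α4 - α6) • (b*c - c*b) := by module
    have h3 : Φ ((α1 + α3 + α5 - α2 - α4 - α6) • (b*c - c*b))
        = (α1 + α3 + α5 - α2 - α4 - α6) • (Φ b * Φ c - Φ c * Φ b) := by
      rw [← key, hsub, h1, h2]; module
    rw [hsc] at h3
    have h4 : (α1 + α3 + α5 - α2 - α4 - α6) • (Φ (b*c - c*b) - (Φ b * Φ c - Φ c * Φ b))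
        = 0 := by rw [smul_sub, h3, sub_self]
    have h5 := smul_cancel hgamma h4
    rwa [sub_eq_zero] at h5
  -- multiplicativity
  have hmulAll : ∀ a b : A, Φ (a * b) = Φ a * Φ b := by
    intro a b
    have hanti : Φ (a*b + b*a) = Φ a * Φ b + Φ b * Φ a := by
      have h1 := hJ a b
      have h2 := hJ b a
      have h := hadd ((α1+α3+α5)•(a*b) + (α2+α4+α6)•(b*a))
        ((α1+α3+α5)•(b*a) + (α2+α4+α6)•(a*b))
      rw [h1, h2] at h
      rw [show ((α1+α3+α5)•(a*b) + (α2+α4+α6)•(b*a))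
          + ((α1+α3+α5)•(b*a) + (α2+α4+α6)•(a*b))
          = (α1+α2+α3+α4+α5+α6) • (a*b + b*a) from by module] at h
      rw [hσhom] at h
      have h' : (α1+α2+α3+α4+α5+α6) • Φ (a*b+b*a)
          = (α1+α2+α3+α4+α5+α6) • (Φ a * Φ b + Φ b * Φ a) := by rw [h]; module
      have h4 : (α1+α2+α3+α4+α5+α6) • (Φ (a*b+b*a) - (Φ a * Φ b + Φ b * Φ a)) = 0 := by
        rw [smul_sub, h', sub_self]
      have h5 := smul_cancel hsum h4
      rwa [sub_eq_zero] at h5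
    have h := hadd (a*b + b*a) (a*b - b*a)
    rw [hanti, hcommAll a b] at h
    rw [show (a*b + b*a) + (a*b - b*a) = a*b + a*b from by abel, hadd (a*b) (a*b)] at h
    have h2 : (2:ℂ) • Φ (a*b) = (2:ℂ) • (Φ a * Φ b) := by
      rw [two_smul, two_smul, h]; abel
    have h4 : (2:ℂ) • (Φ (a*b) - Φ a * Φ b) = 0 := by rw [smul_sub, h2, sub_self]
    have h5 := smul_cancel two_ne_zero h4
    rwa [sub_eq_zero] at h5
  exact ⟨hcommAll, hadd, hmulAll, hstar⟩
end

section
/- Let A and B be unital complex *-algebras with A prime and having a nontrivial projection, and let η, ν be nonzero complex numbers with conj(η) ≠ −1 and ν ≠ −1. Then every bijective map Φ : A → B satisfying Φ((a*b + η ba*)*c + ν c(a*b + η ba*)*) = (Φ(a)*Φ(b) + η Φ(b)Φ(a)*)*Φ(c) + ν Φ(c)(Φ(a)*Φ(b) + η Φ(b)Φ(a)*)* for all a, b, c ∈ A is additive. -/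
set_option linter.unusedSectionVars false

section Generic

variable {R : Type*} [Ring R] [Algebra ℂ R] [StarRing R]

/-- star of the image of a complex scalar; a central element. -/
noncomputable def cst (c : ℂ) : R := star (algebraMap ℂ R c)

lemma cst_comm (c : ℂ) (x : R) : cst c * x = x * cst c := by
  have h1 : (cst c : R) * x = star (star x * algebraMap ℂ R c) := by
    rw [star_mul, star_star]; rfl
  have h2 : x * (cst c : R) = star (algebraMap ℂ R c * star x) := by
    rw [star_mul, star_star]; rfl
  rw [h1, h2, Algebra.commutes]

lemma cst_comm' (c : ℂ) (x y : R) : x * (cst c * y) = cst c * (x * y) := by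
  rw [← mul_assoc, ← cst_comm, mul_assoc]

lemma cst_mul (c d : ℂ) : (cst c : R) * cst d = cst (d * c) := by
  unfold cst; rw [← star_mul, ← map_mul]

lemma cst_one : (cst 1 : R) = 1 := by simp [cst]

lemma cst_add (c d : ℂ) : (cst (c + d) : R) = cst c + cst d := by
  unfold cst; rw [map_add, star_add]

lemma cst_cancel {c : ℂ} (hc : c ≠ 0) {x : R} (h : cst c * x = 0) : x = 0 := by
  have h2 : star x * algebraMap ℂ R c = 0 := by
    have := congrArg star h
    rwa [star_mul, star_zero, cst, star_star] at this
  have h3 : c • star x = 0 := by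
    rw [Algebra.smul_def, Algebra.commutes]; exact h2
  have h4 : star x = 0 := by
    have := congrArg (fun z => c⁻¹ • z) h3
    simpa [smul_smul, inv_mul_cancel₀ hc] using this
  have := congrArg star h4
  rwa [star_star, star_zero] at this

lemma smul_cancel {c : ℂ} (hc : c ≠ 0) {x : R} (h : c • x = 0) : x = 0 := by
  have := congrArg (fun z => c⁻¹ • z) h
  simpa [smul_smul, inv_mul_cancel₀ hc] using this

noncomputable def Sgen (η : ℂ) (a b : R) : R := star (star a * b + η • (b * star a))

noncomputable def Tgen (η ν : ℂ) (a b c : R) : R :=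
  Sgen η a b * c + ν • (c * Sgen η a b)

lemma Sgen_eval (η : ℂ) (a b : R) :
    Sgen η a b = star b * a + cst η * (a * star b) := by
  unfold Sgen
  rw [star_add, star_mul, star_star, Algebra.smul_def, star_mul, star_mul, star_star,
    cst_comm, cst]

lemma Sgen_add1 (η : ℂ) (a a' b : R) :
    Sgen η (a + a') b = Sgen η a b + Sgen η a' b := by
  simp only [Sgen_eval, star_add, mul_add, add_mul]
  abel

lemma Sgen_sub1 (η : ℂ) (a a' b : R) :
    Sgen η (a - a') b = Sgen η a b - Sgen η a' b := by
  simp only [Sgen_eval, star_sub, mul_sub, sub_mul]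
  abel

lemma Tgen_add3 (η ν : ℂ) (a b c c' : R) :
    Tgen η ν a b (c + c') = Tgen η ν a b c + Tgen η ν a b c' := by
  simp only [Tgen, mul_add, add_mul, smul_add]
  abel

lemma Tgen_add1 (η ν : ℂ) (a a' b c : R) :
    Tgen η ν (a + a') b c = Tgen η ν a b c + Tgen η ν a' b c := by
  simp only [Tgen, Sgen_add1, mul_add, add_mul, smul_add]
  abel

lemma Tgen_diff3 (η ν : ℂ) {a b t s : R}
    (h : Tgen η ν a b t = Tgen η ν a b s) : Tgen η ν a b (t - s) = 0 := by
  have : Tgen η ν a b (t - s) = Tgen η ν a b t - Tgen η ν a b s := by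
    simp only [Tgen, mul_sub, sub_mul, smul_sub]; abel
  rw [this, h, sub_self]

lemma Tgen_diff1 (η ν : ℂ) {a b t s : R}
    (h : Tgen η ν t a b = Tgen η ν s a b) : Tgen η ν (t - s) a b = 0 := by
  have : Tgen η ν (t - s) a b = Tgen η ν t a b - Tgen η ν s a b := by
    simp only [Tgen, Sgen_sub1, mul_sub, sub_mul, smul_sub]; abel
  rw [this, h, sub_self]

/-- master expansion of `Tgen` when the middle entry is a self-adjoint element. -/
lemma Tgen_proj (η ν : ℂ) (u v x : R) (hv : star v = v) :
    Tgen η ν u v x =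
      v * (u * x) + cst η * (u * (v * x)) + ν • (x * (v * u))
        + ν • (cst η * (x * (u * v))) := by
  unfold Tgen
  rw [Sgen_eval, hv]
  simp only [add_mul, mul_add, smul_add, mul_assoc, cst_comm']
  abel

end Generic
section Context

structure Pj {A : Type*} [Ring A] [StarRing A] (f g : A) : Prop where
  sum1 : f + g = 1
  ff : f * f = f
  gg : g * g = g
  fg : f * g = 0
  gf : g * f = 0
  f0 : f ≠ 0
  g0 : g ≠ 0
  sf : star f = f
  sg : star g = g

namespace Pj

variable {A : Type*} [Ring A] [StarRing A] {f g : A}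

lemma symm (P : Pj f g) : Pj g f :=
  ⟨by rw [add_comm]; exact P.sum1, P.gg, P.ff, P.gf, P.fg, P.g0, P.f0, P.sg, P.sf⟩

lemma l_ff (P : Pj f g) : ∀ x : A, f * (f * x) = f * x := fun x => by rw [← mul_assoc, P.ff]
lemma l_gg (P : Pj f g) : ∀ x : A, g * (g * x) = g * x := fun x => by rw [← mul_assoc, P.gg]
lemma l_fg (P : Pj f g) : ∀ x : A, f * (g * x) = 0 := fun x => by rw [← mul_assoc, P.fg, zero_mul]
lemma l_gf (P : Pj f g) : ∀ x : A, g * (f * x) = 0 := fun x => by rw [← mul_assoc, P.gf, zero_mul]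

end Pj

structure Ctx (A B : Type*) [Ring A] [Algebra ℂ A] [StarRing A]
    [Ring B] [Algebra ℂ B] [StarRing B] where
  Φ : A → B
  η : ℂ
  ν : ℂ
  prime : ∀ x y : A, (∀ t : A, x * t * y = 0) → x = 0 ∨ y = 0
  inj : Function.Injective Φ
  surj : Function.Surjective Φ
  hη0 : η ≠ 0
  hν0 : ν ≠ 0
  hη1 : (1:ℂ) + η ≠ 0
  hν1 : (1:ℂ) + ν ≠ 0
  heq : ∀ a b c : A, Φ (Tgen η ν a b c) = Tgen η ν (Φ a) (Φ b) (Φ c)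

namespace Ctx

variable {A B : Type*} [Ring A] [Algebra ℂ A] [StarRing A]
    [Ring B] [Algebra ℂ B] [StarRing B]

lemma phi_zero (C : Ctx A B)  : C.Φ 0 = 0 := by
  obtain ⟨z, hz⟩ := C.surj 0
  have h := C.heq 0 0 z
  have h1 : Tgen C.η C.ν (0:A) 0 z = 0 := by
    simp [Tgen, Sgen]
  have h2 : Tgen C.η C.ν (C.Φ 0) (C.Φ 0) (C.Φ z) = 0 := by
    rw [hz]; simp [Tgen]
  rw [h1, h2] at h
  exact h

lemma nusmul (C : Ctx A B)  {x : A} (h : C.ν • x = 0) : x = 0 := smul_cancel C.hν0 h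

lemma nu1smul (C : Ctx A B)  {x : A} (h : x + C.ν • x = 0) : x = 0 := by
  apply smul_cancel C.hν1
  rw [add_smul, one_smul]; exact h

lemma pcancel (C : Ctx A B)  {x : A} (h : (1 + cst C.η) * x = 0) : x = 0 := by
  apply cst_cancel C.hη1
  rwa [cst_add, cst_one]

lemma pfactor (C : Ctx A B)  {X Y : A}
    (h : X + cst C.η * X + C.ν • Y + C.ν • (cst C.η * Y) = 0) :
    X + C.ν • Y = 0 := by
  apply C.pcancel
  have e : (1 + cst C.η) * (X + C.ν • Y)
      = X + cst C.η * X + C.ν • Y + C.ν • (cst C.η * Y) := by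
    simp only [add_mul, one_mul, mul_add, mul_smul_comm, smul_add]
    abel
  exact e.trans h

lemma primeL (C : Ctx A B) {f y : A} (hf : f ≠ 0) (H : ∀ s, f * (s * y) = 0) : y = 0 :=
  (C.prime f y (fun t => by rw [mul_assoc]; exact H t)).resolve_left hf

lemma primeR (C : Ctx A B) {f x : A} (hf : f ≠ 0) (H : ∀ s, x * (s * f) = 0) : x = 0 :=
  (C.prime x f (fun t => by rw [mul_assoc]; exact H t)).resolve_right hf

lemma slot3 (C : Ctx A B) {t a b u v : A} (ht : C.Φ t = C.Φ a + C.Φ b)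
    (hadd : C.Φ (Tgen C.η C.ν u v a + Tgen C.η C.ν u v b)
      = C.Φ (Tgen C.η C.ν u v a) + C.Φ (Tgen C.η C.ν u v b)) :
    Tgen C.η C.ν u v (t - (a + b)) = 0 := by
  apply Tgen_diff3
  apply C.inj
  calc C.Φ (Tgen C.η C.ν u v t)
      = Tgen C.η C.ν (C.Φ u) (C.Φ v) (C.Φ t) := C.heq u v t
    _ = Tgen C.η C.ν (C.Φ u) (C.Φ v) (C.Φ a + C.Φ b) := by rw [ht]
    _ = Tgen C.η C.ν (C.Φ u) (C.Φ v) (C.Φ a)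
        + Tgen C.η C.ν (C.Φ u) (C.Φ v) (C.Φ b) := Tgen_add3 _ _ _ _ _ _
    _ = C.Φ (Tgen C.η C.ν u v a) + C.Φ (Tgen C.η C.ν u v b) := by
        rw [C.heq u v a, C.heq u v b]
    _ = C.Φ (Tgen C.η C.ν u v a + Tgen C.η C.ν u v b) := hadd.symm
    _ = C.Φ (Tgen C.η C.ν u v (a + b)) := by rw [Tgen_add3]

lemma slot3₃ (C : Ctx A B)  {t a b c u v : A} (ht : C.Φ t = C.Φ a + C.Φ b + C.Φ c)
    (hadd : C.Φ (Tgen C.η C.ν u v a + Tgen C.η C.ν u v b + Tgen C.η C.ν u v c)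
      = C.Φ (Tgen C.η C.ν u v a) + C.Φ (Tgen C.η C.ν u v b) + C.Φ (Tgen C.η C.ν u v c)) :
    Tgen C.η C.ν u v (t - (a + b + c)) = 0 := by
  apply Tgen_diff3
  apply C.inj
  calc C.Φ (Tgen C.η C.ν u v t)
      = Tgen C.η C.ν (C.Φ u) (C.Φ v) (C.Φ t) := C.heq u v t
    _ = Tgen C.η C.ν (C.Φ u) (C.Φ v) (C.Φ a + C.Φ b + C.Φ c) := by rw [ht]
    _ = Tgen C.η C.ν (C.Φ u) (C.Φ v) (C.Φ a)
        + Tgen C.η C.ν (C.Φ u) (C.Φ v) (C.Φ b)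
        + Tgen C.η C.ν (C.Φ u) (C.Φ v) (C.Φ c) := by
          rw [Tgen_add3, Tgen_add3]
    _ = C.Φ (Tgen C.η C.ν u v a) + C.Φ (Tgen C.η C.ν u v b) + C.Φ (Tgen C.η C.ν u v c) := by
        rw [C.heq u v a, C.heq u v b, C.heq u v c]
    _ = C.Φ (Tgen C.η C.ν u v a + Tgen C.η C.ν u v b + Tgen C.η C.ν u v c) := hadd.symm
    _ = C.Φ (Tgen C.η C.ν u v (a + b + c)) := by rw [Tgen_add3, Tgen_add3]

lemma slot3₄ (C : Ctx A B)  {t a b c e u v : A} (ht : C.Φ t = C.Φ a + C.Φ b + C.Φ c + C.Φ e)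
    (hadd : C.Φ (Tgen C.η C.ν u v a + Tgen C.η C.ν u v b + Tgen C.η C.ν u v c
        + Tgen C.η C.ν u v e)
      = C.Φ (Tgen C.η C.ν u v a) + C.Φ (Tgen C.η C.ν u v b) + C.Φ (Tgen C.η C.ν u v c)
        + C.Φ (Tgen C.η C.ν u v e)) :
    Tgen C.η C.ν u v (t - (a + b + c + e)) = 0 := by
  apply Tgen_diff3
  apply C.inj
  calc C.Φ (Tgen C.η C.ν u v t)
      = Tgen C.η C.ν (C.Φ u) (C.Φ v) (C.Φ t) := C.heq u v t
    _ = Tgen C.η C.ν (C.Φ u) (C.Φ v) (C.Φ a + C.Φ b + C.Φ c + C.Φ e) := by rw [ht]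
    _ = Tgen C.η C.ν (C.Φ u) (C.Φ v) (C.Φ a)
        + Tgen C.η C.ν (C.Φ u) (C.Φ v) (C.Φ b)
        + Tgen C.η C.ν (C.Φ u) (C.Φ v) (C.Φ c)
        + Tgen C.η C.ν (C.Φ u) (C.Φ v) (C.Φ e) := by
          rw [Tgen_add3, Tgen_add3, Tgen_add3]
    _ = C.Φ (Tgen C.η C.ν u v a) + C.Φ (Tgen C.η C.ν u v b) + C.Φ (Tgen C.η C.ν u v c)
        + C.Φ (Tgen C.η C.ν u v e) := by
        rw [C.heq u v a, C.heq u v b, C.heq u v c, C.heq u v e]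
    _ = C.Φ (Tgen C.η C.ν u v a + Tgen C.η C.ν u v b + Tgen C.η C.ν u v c
        + Tgen C.η C.ν u v e) := hadd.symm
    _ = C.Φ (Tgen C.η C.ν u v (a + b + c + e)) := by rw [Tgen_add3, Tgen_add3, Tgen_add3]

lemma slot1 (C : Ctx A B) {t a b v c : A} (ht : C.Φ t = C.Φ a + C.Φ b)
    (hadd : C.Φ (Tgen C.η C.ν a v c + Tgen C.η C.ν b v c)
      = C.Φ (Tgen C.η C.ν a v c) + C.Φ (Tgen C.η C.ν b v c)) :
    Tgen C.η C.ν (t - (a + b)) v c = 0 := by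
  apply Tgen_diff1
  apply C.inj
  calc C.Φ (Tgen C.η C.ν t v c)
      = Tgen C.η C.ν (C.Φ t) (C.Φ v) (C.Φ c) := C.heq t v c
    _ = Tgen C.η C.ν (C.Φ a + C.Φ b) (C.Φ v) (C.Φ c) := by rw [ht]
    _ = Tgen C.η C.ν (C.Φ a) (C.Φ v) (C.Φ c)
        + Tgen C.η C.ν (C.Φ b) (C.Φ v) (C.Φ c) := Tgen_add1 _ _ _ _ _ _
    _ = C.Φ (Tgen C.η C.ν a v c) + C.Φ (Tgen C.η C.ν b v c) := by
        rw [C.heq a v c, C.heq b v c]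
    _ = C.Φ (Tgen C.η C.ν a v c + Tgen C.η C.ν b v c) := hadd.symm
    _ = C.Φ (Tgen C.η C.ν (a + b) v c) := by rw [Tgen_add1]

end Ctx

end Context
section Families

namespace Ctx

variable {A B : Type*} [Ring A] [Algebra ℂ A] [StarRing A]
    [Ring B] [Algebra ℂ B] [StarRing B]

lemma fam_diag_core (C : Ctx A B) {f g : A} (P : Pj f g) {d : A}
    (H : ∀ s, Tgen C.η C.ν (f * s * f) f d = 0) :
    ∀ s, f * (s * (f * d)) + C.ν • (d * (f * (s * f))) = 0 := by
  intro s
  have h := H s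
  rw [Tgen_proj _ _ _ _ _ P.sf] at h
  simp only [mul_assoc, P.l_ff, P.ff] at h
  exact C.pfactor h

lemma fam_diag (C : Ctx A B) {f g : A} (P : Pj f g) {d : A}
    (H : ∀ s, Tgen C.η C.ν (f * s * f) f d = 0) :
    f * (d * f) = 0 ∧ f * (d * g) = 0 ∧ g * (d * f) = 0 := by
  have G := C.fam_diag_core P H
  refine ⟨?_, ?_, ?_⟩
  · have h1 := G 1
    simp only [one_mul, P.l_ff, P.ff] at h1
    have h2 := congrArg (fun z => f * (z * f)) h1
    simp only [mul_add, add_mul, mul_smul_comm, smul_mul_assoc, mul_assoc,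
      P.l_ff, P.ff, zero_mul, mul_zero] at h2
    exact C.nu1smul h2
  · apply C.primeL P.f0
    intro s
    have h2 := congrArg (fun z => z * g) (G s)
    simp only [add_mul, smul_mul_assoc, mul_assoc, P.ff, P.fg, P.l_fg,
      mul_zero, smul_zero, add_zero, zero_mul] at h2
    exact h2
  · apply C.primeR P.f0
    intro s
    have h2 := congrArg (fun z => g * z) (G s)
    simp only [mul_add, mul_smul_comm, mul_assoc, P.l_gf, P.ff,
      zero_mul, mul_zero, zero_add] at h2
    have h3 := C.nusmul h2
    calc g * (d * f) * (s * f) = g * (d * (f * (s * f))) := by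
          simp only [mul_assoc]
      _ = 0 := h3

lemma fam_offd_core (C : Ctx A B) {f g : A} (P : Pj f g) {d : A}
    (H : ∀ s, Tgen C.η C.ν (f * s * g) f d = 0) :
    ∀ s, f * (s * (g * d)) + C.ν • (d * (f * (s * g))) = 0 := by
  intro s
  have h := H s
  rw [Tgen_proj _ _ _ _ _ P.sf] at h
  simp only [mul_assoc, P.l_ff, P.l_gf, P.gf, P.ff, mul_zero, zero_mul,
    smul_zero, add_zero] at h
  exact h

lemma fam_offd_a (C : Ctx A B) {f g : A} (P : Pj f g) {d : A}
    (H : ∀ s, Tgen C.η C.ν (f * s * g) f d = 0) :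
    g * (d * f) = 0 := by
  have G := C.fam_offd_core P H
  apply C.primeL P.f0
  intro s
  have h2 := congrArg (fun z => z * f) (G s)
  simp only [add_mul, smul_mul_assoc, mul_assoc, P.gf, P.l_gf,
    mul_zero, smul_zero, add_zero, zero_mul] at h2
  exact h2

lemma fam_offd_b (C : Ctx A B) {f g : A} (P : Pj f g) {d : A}
    (H : ∀ s, Tgen C.η C.ν (f * s * g) f d = 0)
    (hgg : g * (d * g) = 0) :
    d * f = 0 := by
  have G := C.fam_offd_core P H
  apply C.primeR P.g0
  intro s
  have h2 := congrArg (fun z => z * g) (G s)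
  simp only [add_mul, smul_mul_assoc, mul_assoc, P.gg, hgg,
    mul_zero, smul_zero, add_zero, zero_mul, zero_add] at h2
  have h3 := C.nusmul h2
  calc d * f * (s * g) = d * (f * (s * g)) := by simp only [mul_assoc]
    _ = 0 := h3

lemma fam_offd_c (C : Ctx A B) {f g : A} (P : Pj f g) {d : A}
    (H : ∀ s, Tgen C.η C.ν (f * s * g) f d = 0)
    (hff : f * (d * f) = 0) :
    g * (d * g) = 0 := by
  have G := C.fam_offd_core P H
  have hff' : ∀ x : A, f * (d * (f * x)) = 0 := by
    intro x
    calc f * (d * (f * x)) = f * (d * f) * x := by simp only [mul_assoc]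
      _ = 0 := by rw [hff, zero_mul]
  apply C.primeL P.f0
  intro s
  have h2 := congrArg (fun z => f * (z * g)) (G s)
  simp only [mul_add, add_mul, mul_smul_comm, smul_mul_assoc, mul_assoc,
    P.l_ff, P.gg, hff', mul_zero, smul_zero, add_zero, zero_mul] at h2
  exact h2

lemma d_decomp {A' : Type*} [Ring A'] {f g : A'} (hsum : f + g = 1) {d : A'}
    (h11 : f * (d * f) = 0) (h12 : f * (d * g) = 0)
    (h21 : g * (d * f) = 0) (h22 : g * (d * g) = 0) : d = 0 := by
  have hd : d = f * (d * f) + f * (d * g) + (g * (d * f) + g * (d * g)) := by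
    calc d = (f + g) * (d * (f + g)) := by rw [hsum, one_mul, mul_one]
      _ = _ := by simp only [mul_add, add_mul]; abel
  rw [hd, h11, h12, h21, h22]
  simp

end Ctx

end Families
section MainLemmas

lemma lift0 {R : Type*} [Ring R] {x y : R} (h : x * y = 0) :
    ∀ z, x * (y * z) = 0 := fun z => by rw [← mul_assoc, h, zero_mul]

namespace Ctx

variable {A B : Type*} [Ring A] [Algebra ℂ A] [StarRing A]
    [Ring B] [Algebra ℂ B] [StarRing B]

lemma etacancel (C : Ctx A B) {x : A} (h : cst C.η * x = 0) : x = 0 :=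
  cst_cancel C.hη0 h

lemma pfactor0 (C : Ctx A B) {X : A} (h : X + cst C.η * X = 0) : X = 0 := by
  apply C.pcancel
  rw [add_mul, one_mul]
  exact h

/-- additivity on pairs (ff-corner, fg-corner) -/
lemma LA (C : Ctx A B) {f g : A} (P : Pj f g) {a b : A}
    (ha1 : f * a = a) (ha2 : a * f = a) (hb1 : f * b = b) (hb2 : b * g = b) :
    C.Φ (a + b) = C.Φ a + C.Φ b := by
  obtain ⟨t, ht⟩ := C.surj (C.Φ a + C.Φ b)
  have hag : a * g = 0 := by rw [← ha2, mul_assoc, P.fg, mul_zero]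
  have hga : g * a = 0 := by rw [← ha1, ← mul_assoc, P.gf, zero_mul]
  have hbf : b * f = 0 := by rw [← hb2, mul_assoc, P.gf, mul_zero]
  have hgb : g * b = 0 := by rw [← hb1, ← mul_assoc, P.gf, zero_mul]
  have Hag := lift0 hag
  have Hbf := lift0 hbf
  have rel1 : ∀ s, Tgen C.η C.ν (g * s * g) g (t - (a + b)) = 0 := by
    intro s
    apply C.slot3 ht
    have hz : Tgen C.η C.ν (g * s * g) g a = 0 := by
      rw [Tgen_proj _ _ _ _ _ P.sg]
      simp only [mul_assoc, P.l_gg, P.gg, hga, Hag, mul_zero, zero_mul,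
        smul_zero, add_zero, zero_add]
    rw [hz, zero_add, C.phi_zero, zero_add]
  obtain ⟨h22, h21, h12⟩ := C.fam_diag P.symm rel1
  have rel2 : ∀ s, Tgen C.η C.ν (f * s * g) f (t - (a + b)) = 0 := by
    intro s
    apply C.slot3 ht
    have hz : Tgen C.η C.ν (f * s * g) f b = 0 := by
      rw [Tgen_proj _ _ _ _ _ P.sf]
      simp only [mul_assoc, P.l_ff, hb1, hgb, Hbf, P.gf, mul_zero, zero_mul,
        smul_zero, add_zero, zero_add]
    rw [hz, add_zero, C.phi_zero, add_zero]
  have hdf : (t - (a + b)) * f = 0 := C.fam_offd_b P rel2 h22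
  have h11 : f * ((t - (a + b)) * f) = 0 := by rw [hdf, mul_zero]
  have h21' : g * ((t - (a + b)) * f) = 0 := by rw [hdf, mul_zero]
  have key : t - (a + b) = 0 := d_decomp P.sum1 h11 h12 h21' h22
  rw [← sub_eq_zero.mp key, ht]

/-- additivity on pairs (ff-corner, gf-corner) -/
lemma LB (C : Ctx A B) {f g : A} (P : Pj f g) {a b : A}
    (ha1 : f * a = a) (ha2 : a * f = a) (hb1 : g * b = b) (hb2 : b * f = b) :
    C.Φ (a + b) = C.Φ a + C.Φ b := by
  obtain ⟨t, ht⟩ := C.surj (C.Φ a + C.Φ b)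
  have hag : a * g = 0 := by rw [← ha2, mul_assoc, P.fg, mul_zero]
  have hga : g * a = 0 := by rw [← ha1, ← mul_assoc, P.gf, zero_mul]
  have hbg : b * g = 0 := by rw [← hb2, mul_assoc, P.fg, mul_zero]
  have hfb : f * b = 0 := by rw [← hb1, ← mul_assoc, P.fg, zero_mul]
  have Hag := lift0 hag
  have Hbg := lift0 hbg
  have rel1 : ∀ s, Tgen C.η C.ν (g * s * g) g (t - (a + b)) = 0 := by
    intro s
    apply C.slot3 ht
    have hz : Tgen C.η C.ν (g * s * g) g a = 0 := by
      rw [Tgen_proj _ _ _ _ _ P.sg]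
      simp only [mul_assoc, P.l_gg, P.gg, hga, Hag, mul_zero, zero_mul,
        smul_zero, add_zero, zero_add]
    rw [hz, zero_add, C.phi_zero, zero_add]
  obtain ⟨h22, h21, h12⟩ := C.fam_diag P.symm rel1
  have rel2 : ∀ s, Tgen C.η C.ν (g * s * f) g (t - (a + b)) = 0 := by
    intro s
    apply C.slot3 ht
    have hz : Tgen C.η C.ν (g * s * f) g b = 0 := by
      rw [Tgen_proj _ _ _ _ _ P.sg]
      simp only [mul_assoc, P.l_gg, hb1, hfb, Hbg, P.fg, mul_zero, zero_mul,
        smul_zero, add_zero, zero_add]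
    rw [hz, add_zero, C.phi_zero, add_zero]
  have h11 : f * ((t - (a + b)) * f) = 0 := C.fam_offd_c P.symm rel2 h22
  have key : t - (a + b) = 0 := d_decomp P.sum1 h11 h12 h21 h22
  rw [← sub_eq_zero.mp key, ht]

/-- extraction for slot-1 relations with (v,c) = (f, f*s*g) -/
lemma fam_slot1 (C : Ctx A B) {f g : A} (P : Pj f g) {d : A}
    (H : ∀ s, Tgen C.η C.ν d f (f * s * g) = 0) :
    f * (d * f) = 0 ∧ g * (d * f) = 0 := by
  constructor
  · have h1 : ∀ s : A, f * (d * (f * (s * g))) = 0 := by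
      intro s
      have h2 := congrArg (fun z => f * (z * g)) (H s)
      rw [Tgen_proj _ _ _ _ _ P.sf] at h2
      simp only [mul_add, add_mul, mul_smul_comm, smul_mul_assoc, mul_assoc,
        cst_comm', P.l_ff, P.l_gf, P.l_gg, P.gg, P.fg, P.gf, P.ff, lift0 P.fg,
        mul_zero, zero_mul, smul_zero, add_zero, zero_add] at h2
      exact C.pfactor0 h2
    apply C.primeR P.g0
    intro s
    calc f * (d * f) * (s * g) = f * (d * (f * (s * g))) := by
          simp only [mul_assoc]
      _ = 0 := h1 s
  · have h1 : ∀ s : A, g * (d * (f * (s * g))) = 0 := by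
      intro s
      have h2 := congrArg (fun z => g * (z * g)) (H s)
      rw [Tgen_proj _ _ _ _ _ P.sf] at h2
      simp only [mul_add, add_mul, mul_smul_comm, smul_mul_assoc, mul_assoc,
        cst_comm', P.l_ff, P.l_gf, P.l_gg, P.gg, P.fg, P.gf, P.ff, lift0 P.fg,
        mul_zero, zero_mul, smul_zero, add_zero, zero_add] at h2
      exact C.etacancel h2
    apply C.primeR P.g0
    intro s
    calc g * (d * f) * (s * g) = g * (d * (f * (s * g))) := by
          simp only [mul_assoc]
      _ = 0 := h1 s

/-- additivity on pairs (fg-corner, gf-corner) -/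
lemma L3 (C : Ctx A B) {f g : A} (P : Pj f g) {a b : A}
    (ha1 : f * a = a) (ha2 : a * g = a) (hb1 : g * b = b) (hb2 : b * f = b) :
    C.Φ (a + b) = C.Φ a + C.Φ b := by
  obtain ⟨t, ht⟩ := C.surj (C.Φ a + C.Φ b)
  have haf : a * f = 0 := by rw [← ha2, mul_assoc, P.gf, mul_zero]
  have hga : g * a = 0 := by rw [← ha1, ← mul_assoc, P.gf, zero_mul]
  have hbg : b * g = 0 := by rw [← hb2, mul_assoc, P.fg, mul_zero]
  have hfb : f * b = 0 := by rw [← hb1, ← mul_assoc, P.fg, zero_mul]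
  have Haf := lift0 haf
  have Hbg := lift0 hbg
  have rel1 : ∀ s, Tgen C.η C.ν (t - (a + b)) f (f * s * g) = 0 := by
    intro s
    apply C.slot1 ht
    have hz : Tgen C.η C.ν a f (f * s * g) = 0 := by
      rw [Tgen_proj _ _ _ _ _ P.sf]
      simp only [mul_assoc, P.l_ff, ha1, haf, Haf, hga, lift0 hga,
        mul_zero, zero_mul, smul_zero, add_zero, zero_add]
    rw [hz, zero_add, C.phi_zero, zero_add]
  have rel2 : ∀ s, Tgen C.η C.ν (t - (a + b)) g (g * s * f) = 0 := by
    intro s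
    apply C.slot1 ht
    have hz : Tgen C.η C.ν b g (g * s * f) = 0 := by
      rw [Tgen_proj _ _ _ _ _ P.sg]
      simp only [mul_assoc, P.l_gg, hb1, hbg, Hbg, hfb, lift0 hfb,
        mul_zero, zero_mul, smul_zero, add_zero, zero_add]
    rw [hz, add_zero, C.phi_zero, add_zero]
  obtain ⟨h11, h21⟩ := C.fam_slot1 P rel1
  obtain ⟨h22, h12⟩ := C.fam_slot1 P.symm rel2
  have key : t - (a + b) = 0 := d_decomp P.sum1 h11 h12 h21 h22
  rw [← sub_eq_zero.mp key, ht]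

end Ctx

end MainLemmas
section MoreLemmas

namespace Ctx

variable {A B : Type*} [Ring A] [Algebra ℂ A] [StarRing A]
    [Ring B] [Algebra ℂ B] [StarRing B]

/-- additivity within the fg-corner -/
lemma L12 (C : Ctx A B) {f g : A} (P : Pj f g) {x y : A}
    (hx1 : f * x = x) (hx2 : x * g = x) (hy1 : f * y = y) (hy2 : y * g = y) :
    C.Φ (x + y) = C.Φ x + C.Φ y := by
  -- rescale x
  set x' : A := cst ((1 + C.η)⁻¹) * x with hx'def
  have hx'1 : f * x' = x' := by rw [hx'def, cst_comm', hx1]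
  have hx'2 : x' * g = x' := by rw [hx'def, mul_assoc, hx2]
  have hx'x : x' + cst C.η * x' = x := by
    calc x' + cst C.η * x' = (1 + cst C.η) * x' := by rw [add_mul, one_mul]
      _ = cst (1 + C.η) * x' := by rw [cst_add, cst_one]
      _ = (cst (1 + C.η) * cst ((1 + C.η)⁻¹)) * x := by rw [hx'def, mul_assoc]
      _ = cst ((1 + C.η)⁻¹ * (1 + C.η)) * x := by rw [cst_mul]
      _ = x := by rw [inv_mul_cancel₀ C.hη1, cst_one, one_mul]
  -- derived annihilations
  have hx'f : x' * f = 0 := by rw [← hx'2, mul_assoc, P.gf, mul_zero]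
  have hgx' : g * x' = 0 := by rw [← hx'1, ← mul_assoc, P.gf, zero_mul]
  have hyf : y * f = 0 := by rw [← hy2, mul_assoc, P.gf, mul_zero]
  have hgy : g * y = 0 := by rw [← hy1, ← mul_assoc, P.gf, zero_mul]
  have hyx' : y * x' = 0 := by rw [← hx'1, ← mul_assoc, hyf, zero_mul]
  have hx'y : x' * y = 0 := by rw [← hy1, ← mul_assoc, hx'f, zero_mul]
  -- the key identity
  have hid : Tgen C.η C.ν (f + y) f (x' + g) = x' + cst C.η * x' + y := by
    rw [Tgen_proj _ _ _ _ _ P.sf]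
    simp only [mul_add, add_mul, mul_assoc, P.l_ff, P.l_fg, P.l_gf, P.l_gg,
      P.ff, P.fg, P.gf, P.gg, hx'1, hx'2, hx'f, hgx', hy1, hy2, hyf, hgy,
      hyx', hx'y, lift0 hyf, lift0 hx'f, lift0 hgx', lift0 hgy,
      mul_zero, zero_mul, smul_zero, add_zero, zero_add]
    abel
  have e1 := C.heq (f + y) f (x' + g)
  rw [hid] at e1
  have eA : C.Φ (f + y) = C.Φ f + C.Φ y := C.LA P P.ff P.ff hy1 hy2
  have eB : C.Φ (x' + g) = C.Φ x' + C.Φ g := by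
    rw [add_comm x' g, C.LB P.symm P.gg P.gg hx'1 hx'2, add_comm]
  rw [eA, eB, Tgen_add1, Tgen_add3, Tgen_add3] at e1
  have c1 : Tgen C.η C.ν (C.Φ f) (C.Φ f) (C.Φ x') = C.Φ x := by
    rw [← C.heq]
    congr 1
    rw [Tgen_proj _ _ _ _ _ P.sf, ← hx'x]
    simp only [mul_assoc, P.l_ff, P.ff, hx'1, hx'f, lift0 hx'f,
      mul_zero, zero_mul, smul_zero, add_zero, zero_add]
  have c2 : Tgen C.η C.ν (C.Φ f) (C.Φ f) (C.Φ g) = 0 := by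
    rw [← C.heq, show Tgen C.η C.ν f f g = 0 from ?_, C.phi_zero]
    rw [Tgen_proj _ _ _ _ _ P.sf]
    simp only [mul_assoc, P.l_ff, P.l_fg, P.ff, P.fg, P.gf,
      mul_zero, zero_mul, smul_zero, add_zero, zero_add]
  have c3 : Tgen C.η C.ν (C.Φ y) (C.Φ f) (C.Φ x') = 0 := by
    rw [← C.heq, show Tgen C.η C.ν y f x' = 0 from ?_, C.phi_zero]
    rw [Tgen_proj _ _ _ _ _ P.sf]
    simp only [mul_assoc, hyx', hx'f, hx'y, lift0 hyf, lift0 hx'f, hy1,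
      lift0 hyx', lift0 hx'y, mul_zero, zero_mul, smul_zero, add_zero, zero_add]
  have c4 : Tgen C.η C.ν (C.Φ y) (C.Φ f) (C.Φ g) = C.Φ y := by
    rw [← C.heq]
    congr 1
    rw [Tgen_proj _ _ _ _ _ P.sf]
    simp only [mul_assoc, P.l_fg, P.fg, P.gf, hy2, hgy, hyf, lift0 hyf,
      lift0 hgy, hy1, mul_zero, zero_mul, smul_zero, add_zero, zero_add]
  rw [c1, c2, c3, c4, add_zero, zero_add, hx'x] at e1
  exact e1

/-- `mem11` elements give zero against the (g·g, g) family -/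
lemma Tzero1 (C : Ctx A B) {f g : A} (P : Pj f g) {a : A}
    (ha1 : f * a = a) (ha2 : a * f = a) (s : A) :
    Tgen C.η C.ν (g * s * g) g a = 0 := by
  have hag : a * g = 0 := by rw [← ha2, mul_assoc, P.fg, mul_zero]
  have hga : g * a = 0 := by rw [← ha1, ← mul_assoc, P.gf, zero_mul]
  rw [Tgen_proj _ _ _ _ _ P.sg]
  simp only [mul_assoc, P.l_gg, P.gg, hga, lift0 hag, mul_zero, zero_mul,
    smul_zero, add_zero, zero_add]

/-- additivity within the ff-corner -/
lemma L11 (C : Ctx A B) {f g : A} (P : Pj f g) {x y : A}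
    (hx1 : f * x = x) (hx2 : x * f = x) (hy1 : f * y = y) (hy2 : y * f = y) :
    C.Φ (x + y) = C.Φ x + C.Φ y := by
  obtain ⟨t, ht⟩ := C.surj (C.Φ x + C.Φ y)
  have rel1 : ∀ s, Tgen C.η C.ν (g * s * g) g (t - (x + y)) = 0 := by
    intro s
    apply C.slot3 ht
    rw [C.Tzero1 P hx1 hx2 s, C.Tzero1 P hy1 hy2 s, add_zero, C.phi_zero, add_zero]
  obtain ⟨h22, h21, h12⟩ := C.fam_diag P.symm rel1
  -- second family, using L12 additivity
  have hTval : ∀ z : A, f * z = z → ∀ s,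
      Tgen C.η C.ν (f * s * g) f z = C.ν • (z * (f * (s * g))) := by
    intro z hz1 s
    have hgz : g * z = 0 := by rw [← hz1, ← mul_assoc, P.gf, zero_mul]
    rw [Tgen_proj _ _ _ _ _ P.sf]
    simp only [mul_assoc, P.l_ff, hz1, hgz, lift0 P.gf, P.gf,
      mul_zero, zero_mul, smul_zero, add_zero, zero_add]
  have rel2 : ∀ s, Tgen C.η C.ν (f * s * g) f (t - (x + y)) = 0 := by
    intro s
    apply C.slot3 ht
    rw [hTval x hx1 s, hTval y hy1 s]
    have m1 : f * (C.ν • (x * (f * (s * g)))) = C.ν • (x * (f * (s * g))) := by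
      rw [mul_smul_comm, ← mul_assoc, hx1]
    have m2 : (C.ν • (x * (f * (s * g)))) * g = C.ν • (x * (f * (s * g))) := by
      rw [smul_mul_assoc, mul_assoc, mul_assoc, mul_assoc, P.gg]
    have m3 : f * (C.ν • (y * (f * (s * g)))) = C.ν • (y * (f * (s * g))) := by
      rw [mul_smul_comm, ← mul_assoc, hy1]
    have m4 : (C.ν • (y * (f * (s * g)))) * g = C.ν • (y * (f * (s * g))) := by
      rw [smul_mul_assoc, mul_assoc, mul_assoc, mul_assoc, P.gg]
    exact C.L12 P m1 m2 m3 m4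
  have hdf : (t - (x + y)) * f = 0 := C.fam_offd_b P rel2 h22
  have h11 : f * ((t - (x + y)) * f) = 0 := by rw [hdf, mul_zero]
  have h21' : g * ((t - (x + y)) * f) = 0 := by rw [hdf, mul_zero]
  have key : t - (x + y) = 0 := d_decomp P.sum1 h11 h12 h21' h22
  rw [← sub_eq_zero.mp key, ht]

/-- additivity on pairs (ff-corner, gg-corner) -/
lemma L1122 (C : Ctx A B) {f g : A} (P : Pj f g) {a b : A}
    (ha1 : f * a = a) (ha2 : a * f = a) (hb1 : g * b = b) (hb2 : b * g = b) :
    C.Φ (a + b) = C.Φ a + C.Φ b := by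
  obtain ⟨t, ht⟩ := C.surj (C.Φ a + C.Φ b)
  have hfb : f * b = 0 := by rw [← hb1, ← mul_assoc, P.fg, zero_mul]
  have hbf : b * f = 0 := by rw [← hb2, mul_assoc, P.gf, mul_zero]
  have rel1 : ∀ s, Tgen C.η C.ν (f * s * f) f (t - (a + b)) = 0 := by
    intro s
    apply C.slot3 ht
    have hz : Tgen C.η C.ν (f * s * f) f b = 0 := by
      rw [Tgen_proj _ _ _ _ _ P.sf]
      simp only [mul_assoc, P.l_ff, P.ff, hfb, lift0 hbf, mul_zero, zero_mul,
        smul_zero, add_zero, zero_add]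
    rw [hz, add_zero, C.phi_zero, add_zero]
  obtain ⟨h11, h12, h21⟩ := C.fam_diag P rel1
  have rel2 : ∀ s, Tgen C.η C.ν (g * s * g) g (t - (a + b)) = 0 := by
    intro s
    apply C.slot3 ht
    rw [C.Tzero1 P ha1 ha2 s, zero_add, C.phi_zero, zero_add]
  obtain ⟨h22, -, -⟩ := C.fam_diag P.symm rel2
  have key : t - (a + b) = 0 := d_decomp P.sum1 h11 h12 h21 h22
  rw [← sub_eq_zero.mp key, ht]

end Ctx

end MoreLemmas
section BigLemmas

lemma liftE {R : Type*} [Ring R] {x y w : R} (h : x * y = w) :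
    ∀ z, x * (y * z) = w * z := fun z => by rw [← mul_assoc, h]

namespace Ctx

variable {A B : Type*} [Ring A] [Algebra ℂ A] [StarRing A]
    [Ring B] [Algebra ℂ B] [StarRing B]

/-- value of the (f·f, f) family on a `mem11` element -/
lemma Tval_ff11 (C : Ctx A B) {f g : A} (P : Pj f g) {x : A}
    (hx1 : f * x = x) (s : A) :
    Tgen C.η C.ν (f * s * f) f x
      = f * (s * x) + cst C.η * (f * (s * x)) + C.ν • (x * (f * (s * f)))
        + C.ν • (cst C.η * (x * (f * (s * f)))) := by
  rw [Tgen_proj _ _ _ _ _ P.sf]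
  simp only [mul_assoc, P.l_ff, P.ff, hx1]

/-- value of the (f·f, f) family on a `mem12` element -/
lemma Tval_ff12 (C : Ctx A B) {f g : A} (P : Pj f g) {y : A}
    (hy1 : f * y = y) (hyf : y * f = 0) (s : A) :
    Tgen C.η C.ν (f * s * f) f y
      = f * (s * y) + cst C.η * (f * (s * y)) := by
  rw [Tgen_proj _ _ _ _ _ P.sf]
  simp only [mul_assoc, P.l_ff, P.ff, hy1, lift0 hyf, mul_zero, smul_zero,
    add_zero]

/-- value of the (f·f, f) family on a `mem21` element -/
lemma Tval_ff21 (C : Ctx A B) {f g : A} (P : Pj f g) {z : A}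
    (hfz : f * z = 0) (s : A) :
    Tgen C.η C.ν (f * s * f) f z
      = C.ν • (z * (f * (s * f))) + C.ν • (cst C.η * (z * (f * (s * f)))) := by
  rw [Tgen_proj _ _ _ _ _ P.sf]
  simp only [mul_assoc, P.l_ff, P.ff, hfz, mul_zero, smul_zero, zero_add,
    add_zero]

/-- value of the (f·g, f) family on a left-f element -/
lemma Tval_fg (C : Ctx A B) {f g : A} (P : Pj f g) {z : A}
    (hz1 : f * z = z) (s : A) :
    Tgen C.η C.ν (f * s * g) f z = C.ν • (z * (f * (s * g))) := by
  have hgz : g * z = 0 := by rw [← hz1, ← mul_assoc, P.gf, zero_mul]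
  rw [Tgen_proj _ _ _ _ _ P.sf]
  simp only [mul_assoc, P.l_ff, hz1, hgz, lift0 P.gf, P.gf,
    mul_zero, zero_mul, smul_zero, add_zero, zero_add]

/-- value of the (f·g, f) family on a `mem21` element -/
lemma Tval_fg21 (C : Ctx A B) {f g : A} (P : Pj f g) {z : A}
    (hz1 : g * z = z) (hz2 : z * f = z) (s : A) :
    Tgen C.η C.ν (f * s * g) f z
      = f * (s * z) + C.ν • (z * (f * (s * g))) := by
  have hfz : f * z = 0 := by rw [← hz1, ← mul_assoc, P.fg, zero_mul]
  rw [Tgen_proj _ _ _ _ _ P.sf]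
  simp only [mul_assoc, P.l_ff, P.gf, hz1, hfz, lift0 P.gf,
    mul_zero, zero_mul, smul_zero, add_zero, zero_add]

/-- additivity on triples (ff, fg, gg) -/
lemma L3a (C : Ctx A B) {f g : A} (P : Pj f g) {x y z : A}
    (hx1 : f * x = x) (hx2 : x * f = x) (hy1 : f * y = y) (hy2 : y * g = y)
    (hz1 : g * z = z) (hz2 : z * g = z) :
    C.Φ (x + y + z) = C.Φ x + C.Φ y + C.Φ z := by
  obtain ⟨t, ht⟩ := C.surj (C.Φ x + C.Φ y + C.Φ z)
  have hyf : y * f = 0 := by rw [← hy2, mul_assoc, P.gf, mul_zero]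
  have hfz : f * z = 0 := by rw [← hz1, ← mul_assoc, P.fg, zero_mul]
  have hzf : z * f = 0 := by rw [← hz2, mul_assoc, P.gf, mul_zero]
  have hgy : g * y = 0 := by rw [← hy1, ← mul_assoc, P.gf, zero_mul]
  have rel1 : ∀ s, Tgen C.η C.ν (f * s * f) f (t - (x + y + z)) = 0 := by
    intro s
    apply C.slot3₃ ht
    rw [C.Tval_ff11 P hx1 s, C.Tval_ff12 P hy1 hyf s,
      show Tgen C.η C.ν (f * s * f) f z = 0 from by
        rw [C.Tval_ff21 P hfz s]
        simp only [lift0 hzf, mul_zero, smul_zero, add_zero],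
      add_zero, C.phi_zero, add_zero]
    apply C.LA P
    · simp only [mul_add, mul_smul_comm, cst_comm', P.l_ff, liftE hx1]
    · simp only [add_mul, smul_mul_assoc, mul_assoc, P.ff, hx2]
    · simp only [mul_add, mul_smul_comm, cst_comm', P.l_ff]
    · simp only [add_mul, smul_mul_assoc, mul_assoc, hy2]
  obtain ⟨h11, h12, h21⟩ := C.fam_diag P rel1
  have rel2 : ∀ s, Tgen C.η C.ν (g * s * g) g (t - (x + y + z)) = 0 := by
    intro s
    apply C.slot3₃ ht
    rw [C.Tzero1 P hx1 hx2 s, C.Tval_ff21 P.symm hgy s,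
      C.Tval_ff11 P.symm hz1 s, zero_add, C.phi_zero, zero_add]
    set T2 : A := C.ν • (y * (g * (s * g)))
      + C.ν • (cst C.η * (y * (g * (s * g)))) with hT2
    set T3 : A := g * (s * z) + cst C.η * (g * (s * z))
      + C.ν • (z * (g * (s * g))) + C.ν • (cst C.η * (z * (g * (s * g)))) with hT3
    have e2 := C.LB P.symm (a := T3)
      (by rw [hT3]; simp only [mul_add, mul_smul_comm, cst_comm', P.l_gg, liftE hz1])
      (by rw [hT3]; simp only [add_mul, smul_mul_assoc, mul_assoc, P.gg, hz2])
      (b := T2)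
      (by rw [hT2]; simp only [mul_add, mul_smul_comm, cst_comm', liftE hy1])
      (by rw [hT2]; simp only [add_mul, smul_mul_assoc, mul_assoc, P.gg])
    calc C.Φ (T2 + T3) = C.Φ (T3 + T2) := by rw [add_comm]
      _ = C.Φ T3 + C.Φ T2 := e2
      _ = C.Φ T2 + C.Φ T3 := by rw [add_comm]
  obtain ⟨h22, -, -⟩ := C.fam_diag P.symm rel2
  have key : t - (x + y + z) = 0 := d_decomp P.sum1 h11 h12 h21 h22
  rw [← sub_eq_zero.mp key, ht]

/-- additivity on triples (ff, fg, gf) -/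
lemma L3b (C : Ctx A B) {f g : A} (P : Pj f g) {x y z : A}
    (hx1 : f * x = x) (hx2 : x * f = x) (hy1 : f * y = y) (hy2 : y * g = y)
    (hz1 : g * z = z) (hz2 : z * f = z) :
    C.Φ (x + y + z) = C.Φ x + C.Φ y + C.Φ z := by
  obtain ⟨t, ht⟩ := C.surj (C.Φ x + C.Φ y + C.Φ z)
  have hyf : y * f = 0 := by rw [← hy2, mul_assoc, P.gf, mul_zero]
  have hgy : g * y = 0 := by rw [← hy1, ← mul_assoc, P.gf, zero_mul]
  have hzg : z * g = 0 := by rw [← hz2, mul_assoc, P.fg, mul_zero]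
  have hfz : f * z = 0 := by rw [← hz1, ← mul_assoc, P.fg, zero_mul]
  have rel1 : ∀ s, Tgen C.η C.ν (g * s * g) g (t - (x + y + z)) = 0 := by
    intro s
    apply C.slot3₃ ht
    rw [C.Tzero1 P hx1 hx2 s, C.Tval_ff21 P.symm hgy s,
      C.Tval_ff12 P.symm hz1 hzg s, zero_add, C.phi_zero, zero_add]
    apply C.L3 P
    · simp only [mul_add, mul_smul_comm, cst_comm', liftE hy1]
    · simp only [add_mul, smul_mul_assoc, mul_assoc, P.gg]
    · simp only [mul_add, mul_smul_comm, cst_comm', P.l_gg]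
    · simp only [add_mul, smul_mul_assoc, mul_assoc, hz2]
  obtain ⟨h22, h21, h12⟩ := C.fam_diag P.symm rel1
  have rel2 : ∀ s, Tgen C.η C.ν (f * s * g) f (t - (x + y + z)) = 0 := by
    intro s
    apply C.slot3₃ ht
    rw [C.Tval_fg P hx1 s,
      show Tgen C.η C.ν (f * s * g) f y = 0 from by
        rw [C.Tval_fg P hy1 s]
        simp only [lift0 hyf, mul_zero, smul_zero],
      C.Tval_fg21 P hz1 hz2 s, add_zero, C.phi_zero, add_zero]
    -- goal : Φ (T1 + (w11 + w22)) = Φ T1 + Φ (w11 + w22)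
    set T1 : A := C.ν • (x * (f * (s * g))) with hT1
    set w11 : A := f * (s * z) with hw11
    set w22 : A := C.ν • (z * (f * (s * g))) with hw22
    have m11a : f * w11 = w11 := by rw [hw11, P.l_ff]
    have m11b : w11 * f = w11 := by rw [hw11, mul_assoc, mul_assoc, hz2]
    have m12a : f * T1 = T1 := by rw [hT1, mul_smul_comm, liftE hx1]
    have m12b : T1 * g = T1 := by
      rw [hT1, smul_mul_assoc, mul_assoc, mul_assoc, mul_assoc, P.gg]
    have m22a : g * w22 = w22 := by rw [hw22, mul_smul_comm, liftE hz1]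
    have m22b : w22 * g = w22 := by
      rw [hw22, smul_mul_assoc, mul_assoc, mul_assoc, mul_assoc, P.gg]
    have e3 := C.L3a P m11a m11b m12a m12b m22a m22b
    have e4 := C.L1122 P m11a m11b m22a m22b
    calc C.Φ (T1 + (w11 + w22)) = C.Φ (w11 + T1 + w22) := by
          congr 1; abel
      _ = C.Φ w11 + C.Φ T1 + C.Φ w22 := e3
      _ = C.Φ T1 + (C.Φ w11 + C.Φ w22) := by abel
      _ = C.Φ T1 + C.Φ (w11 + w22) := by rw [e4]
  have hdf : (t - (x + y + z)) * f = 0 := C.fam_offd_b P rel2 h22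
  have h11 : f * ((t - (x + y + z)) * f) = 0 := by rw [hdf, mul_zero]
  have h21' : g * ((t - (x + y + z)) * f) = 0 := by rw [hdf, mul_zero]
  have key : t - (x + y + z) = 0 := d_decomp P.sum1 h11 h12 h21' h22
  rw [← sub_eq_zero.mp key, ht]

/-- full Peirce additivity -/
lemma L4 (C : Ctx A B) {f g : A} (P : Pj f g) {x y z w : A}
    (hx1 : f * x = x) (hx2 : x * f = x) (hy1 : f * y = y) (hy2 : y * g = y)
    (hz1 : g * z = z) (hz2 : z * f = z) (hw1 : g * w = w) (hw2 : w * g = w) :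
    C.Φ (x + y + z + w) = C.Φ x + C.Φ y + C.Φ z + C.Φ w := by
  obtain ⟨t, ht⟩ := C.surj (C.Φ x + C.Φ y + C.Φ z + C.Φ w)
  have hyf : y * f = 0 := by rw [← hy2, mul_assoc, P.gf, mul_zero]
  have hgy : g * y = 0 := by rw [← hy1, ← mul_assoc, P.gf, zero_mul]
  have hzg : z * g = 0 := by rw [← hz2, mul_assoc, P.fg, mul_zero]
  have hfz : f * z = 0 := by rw [← hz1, ← mul_assoc, P.fg, zero_mul]
  have hfw : f * w = 0 := by rw [← hw1, ← mul_assoc, P.fg, zero_mul]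
  have hwf : w * f = 0 := by rw [← hw2, mul_assoc, P.gf, mul_zero]
  have rel1 : ∀ s, Tgen C.η C.ν (f * s * f) f (t - (x + y + z + w)) = 0 := by
    intro s
    apply C.slot3₄ ht
    rw [C.Tval_ff11 P hx1 s, C.Tval_ff12 P hy1 hyf s, C.Tval_ff21 P hfz s,
      show Tgen C.η C.ν (f * s * f) f w = 0 from by
        rw [C.Tval_ff21 P hfw s]
        simp only [lift0 hwf, mul_zero, smul_zero, add_zero],
      add_zero, C.phi_zero, add_zero]
    apply C.L3b P
    · simp only [mul_add, mul_smul_comm, cst_comm', P.l_ff, liftE hx1]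
    · simp only [add_mul, smul_mul_assoc, mul_assoc, P.ff, hx2]
    · simp only [mul_add, mul_smul_comm, cst_comm', P.l_ff]
    · simp only [add_mul, smul_mul_assoc, mul_assoc, hy2]
    · simp only [mul_add, mul_smul_comm, cst_comm', liftE hz1]
    · simp only [add_mul, smul_mul_assoc, mul_assoc, P.ff]
  obtain ⟨h11, h12, h21⟩ := C.fam_diag P rel1
  have rel2 : ∀ s, Tgen C.η C.ν (g * s * g) g (t - (x + y + z + w)) = 0 := by
    intro s
    apply C.slot3₄ ht
    rw [C.Tzero1 P hx1 hx2 s, C.Tval_ff21 P.symm hgy s,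
      C.Tval_ff12 P.symm hz1 hzg s, C.Tval_ff11 P.symm hw1 s,
      zero_add, C.phi_zero, zero_add]
    set T2 : A := C.ν • (y * (g * (s * g)))
      + C.ν • (cst C.η * (y * (g * (s * g)))) with hT2
    set T3 : A := g * (s * z) + cst C.η * (g * (s * z)) with hT3
    set T4 : A := g * (s * w) + cst C.η * (g * (s * w))
      + C.ν • (w * (g * (s * g))) + C.ν • (cst C.η * (w * (g * (s * g)))) with hT4
    have e3 := C.L3b P.symm
      (x := T4)
      (by rw [hT4]; simp only [mul_add, mul_smul_comm, cst_comm', P.l_gg, liftE hw1])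
      (by rw [hT4]; simp only [add_mul, smul_mul_assoc, mul_assoc, P.gg, hw2])
      (y := T3)
      (by rw [hT3]; simp only [mul_add, mul_smul_comm, cst_comm', P.l_gg])
      (by rw [hT3]; simp only [add_mul, smul_mul_assoc, mul_assoc, hz2])
      (z := T2)
      (by rw [hT2]; simp only [mul_add, mul_smul_comm, cst_comm', liftE hy1])
      (by rw [hT2]; simp only [add_mul, smul_mul_assoc, mul_assoc, P.gg])
    calc C.Φ (T2 + T3 + T4) = C.Φ (T4 + T3 + T2) := by congr 1; abel
      _ = C.Φ T4 + C.Φ T3 + C.Φ T2 := e3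
      _ = C.Φ T2 + C.Φ T3 + C.Φ T4 := by abel
  obtain ⟨h22, -, -⟩ := C.fam_diag P.symm rel2
  have key : t - (x + y + z + w) = 0 := d_decomp P.sum1 h11 h12 h21 h22
  rw [← sub_eq_zero.mp key, ht]

end Ctx

end BigLemmas
section Final

lemma peirceDec {A : Type*} [Ring A] {f g : A} (hsum : f + g = 1) (w : A) :
    w = f * (w * f) + f * (w * g) + g * (w * f) + g * (w * g) := by
  calc w = (f + g) * (w * (f + g)) := by rw [hsum, one_mul, mul_one]
    _ = _ := by simp only [mul_add, add_mul]; abel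

namespace Ctx

variable {A B : Type*} [Ring A] [Algebra ℂ A] [StarRing A]
    [Ring B] [Algebra ℂ B] [StarRing B]

lemma main (C : Ctx A B) {f g : A} (P : Pj f g) (a b : A) :
    C.Φ (a + b) = C.Φ a + C.Φ b := by
  have m1 : ∀ w : A, f * (f * (w * f)) = f * (w * f) := fun w => P.l_ff _
  have m2 : ∀ w : A, (f * (w * f)) * f = f * (w * f) := fun w => by
    rw [mul_assoc, mul_assoc, P.ff]
  have m3 : ∀ w : A, f * (f * (w * g)) = f * (w * g) := fun w => P.l_ff _
  have m4 : ∀ w : A, (f * (w * g)) * g = f * (w * g) := fun w => by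
    rw [mul_assoc, mul_assoc, P.gg]
  have m5 : ∀ w : A, g * (g * (w * f)) = g * (w * f) := fun w => P.l_gg _
  have m6 : ∀ w : A, (g * (w * f)) * f = g * (w * f) := fun w => by
    rw [mul_assoc, mul_assoc, P.ff]
  have m7 : ∀ w : A, g * (g * (w * g)) = g * (w * g) := fun w => P.l_gg _
  have m8 : ∀ w : A, (g * (w * g)) * g = g * (w * g) := fun w => by
    rw [mul_assoc, mul_assoc, P.gg]
  have dec : ∀ w : A, C.Φ w
      = C.Φ (f * (w * f)) + C.Φ (f * (w * g)) + C.Φ (g * (w * f))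
        + C.Φ (g * (w * g)) := by
    intro w
    calc C.Φ w = C.Φ (f * (w * f) + f * (w * g) + g * (w * f) + g * (w * g)) :=
          congrArg C.Φ (peirceDec P.sum1 w)
      _ = _ := C.L4 P (m1 w) (m2 w) (m3 w) (m4 w) (m5 w) (m6 w) (m7 w) (m8 w)
  have comp : ∀ (i j : A), i * ((a + b) * j) = i * (a * j) + i * (b * j) := by
    intro i j; rw [add_mul, mul_add]
  calc C.Φ (a + b)
      = C.Φ (f * ((a+b) * f)) + C.Φ (f * ((a+b) * g)) + C.Φ (g * ((a+b) * f))
        + C.Φ (g * ((a+b) * g)) := dec _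
    _ = (C.Φ (f * (a * f)) + C.Φ (f * (b * f))) + (C.Φ (f * (a * g)) + C.Φ (f * (b * g)))
        + (C.Φ (g * (a * f)) + C.Φ (g * (b * f)))
        + (C.Φ (g * (a * g)) + C.Φ (g * (b * g))) := by
        rw [comp f f, comp f g, comp g f, comp g g,
          C.L11 P (m1 a) (m2 a) (m1 b) (m2 b),
          C.L12 P (m3 a) (m4 a) (m3 b) (m4 b),
          C.L12 P.symm (m5 a) (m6 a) (m5 b) (m6 b),
          C.L11 P.symm (m7 a) (m8 a) (m7 b) (m8 b)]
    _ = (C.Φ (f * (a * f)) + C.Φ (f * (a * g)) + C.Φ (g * (a * f)) + C.Φ (g * (a * g)))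
        + (C.Φ (f * (b * f)) + C.Φ (f * (b * g)) + C.Φ (g * (b * f))
          + C.Φ (g * (b * g))) := by abel
    _ = C.Φ a + C.Φ b := by rw [← dec a, ← dec b]

end Ctx

end Final

theorem stmt15 {A B : Type*} [Ring A] [Algebra ℂ A] [StarRing A]
    [Ring B] [Algebra ℂ B] [StarRing B]
    (hprime : ∀ x y : A, (∀ t : A, x * t * y = 0) → x = 0 ∨ y = 0)
    (e : A) (hestar : star e = e) (heidem : e * e = e) (he0 : e ≠ 0) (he1 : e ≠ 1)
    (Φ : A → B) (hbij : Function.Bijective Φ)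
    (η ν : ℂ) (hη0 : η ≠ 0) (hν0 : ν ≠ 0)
    (hη : (starRingEnd ℂ) η ≠ -1) (hν : ν ≠ -1)
    (hΦ : ∀ a b c : A,
      Φ (star (star a * b + η • (b * star a)) * c +
          ν • (c * star (star a * b + η • (b * star a)))) =
      star (star (Φ a) * Φ b + η • (Φ b * star (Φ a))) * Φ c +
          ν • (Φ c * star (star (Φ a) * Φ b + η • (Φ b * star (Φ a))))) :
    ∀ a b : A, Φ (a + b) = Φ a + Φ b := by
  have hη1 : (1:ℂ) + η ≠ 0 := by
    intro h
    apply hη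
    rw [show η = -1 from by linear_combination h, map_neg, map_one]
  have hν1 : (1:ℂ) + ν ≠ 0 := by
    intro h
    exact hν (by linear_combination h)
  let C : Ctx A B :=
    { Φ := Φ, η := η, ν := ν, prime := hprime, inj := hbij.1, surj := hbij.2,
      hη0 := hη0, hν0 := hν0, hη1 := hη1, hν1 := hν1,
      heq := fun a b c => hΦ a b c }
  have P : Pj e (1 - e) :=
    { sum1 := by abel
      ff := heidem
      gg := by
        have h : (1-e) * (1-e) = 1 - e - e + e * e := by noncomm_ring
        rw [h, heidem]; abel
      fg := by
        have h : e * (1-e) = e - e * e := by noncomm_ring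
        rw [h, heidem, sub_self]
      gf := by
        have h : (1-e) * e = e - e * e := by noncomm_ring
        rw [h, heidem, sub_self]
      f0 := he0
      g0 := fun h => he1 (sub_eq_zero.mp h).symm
      sf := hestar
      sg := by rw [star_sub, star_one, hestar] }
  exact fun a b => C.main P a b
end
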